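/- arXiv:math/9903170 — 10 statements merged into one kernel-verified Lean document; each statement's English description precedes it below -/
import Mathlib

section
/- Let A₀(n) denote the number of permutations of length n containing no 132 pattern and no 123 pattern. Then in the ring of formal power series ℚ[[z]], the generating function F₀(z) = ∑_{n≥0} A₀(n)·zⁿ satisfies (1 - 2z)·F₀(z) = 1 - z. -/
/-- The number of 132 patterns of a permutation `π` of `Fin n`:
triples of indices `i₁ < i₂ < i₃` with `π i₁ < π i₃ < π i₂`. -/
def count132 {n : ℕ} (π : Equiv.Perm (Fin n)) : ℕ :=
  (Finset.univ.filter (fun p : Fin n × Fin n × Fin n =>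
    p.1 < p.2.1 ∧ p.2.1 < p.2.2 ∧ π p.1 < π p.2.2 ∧ π p.2.2 < π p.2.1)).card

/-- The number of 123 patterns of a permutation `π` of `Fin n`:
triples of indices `i₁ < i₂ < i₃` with `π i₁ < π i₂ < π i₃`. -/
def count123 {n : ℕ} (π : Equiv.Perm (Fin n)) : ℕ :=
  (Finset.univ.filter (fun p : Fin n × Fin n × Fin n =>
    p.1 < p.2.1 ∧ p.2.1 < p.2.2 ∧ π p.1 < π p.2.1 ∧ π p.2.1 < π p.2.2)).card

/-- The number of 12 patterns of a permutation `π` of `Fin n`: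
pairs of indices `i₁ < i₂` with `π i₁ < π i₂`. -/
def count12 {n : ℕ} (π : Equiv.Perm (Fin n)) : ℕ :=
  (Finset.univ.filter (fun p : Fin n × Fin n =>
    p.1 < p.2 ∧ π p.1 < π p.2)).card

/-- The number of permutations of length n with no 132 pattern and exactly 0 123 patterns. -/
def A (n : ℕ) : ℕ :=
  (Finset.univ.filter (fun π : Equiv.Perm (Fin n) =>
    count132 π = 0 ∧ count123 π = 0)).card

/-!
A permutation avoids both 132 and 123 exactly when every entry is exceeded by at most one later
entry. Since exactly `rev (π i)` entries exceed `π i`, and at most `i` of them stand before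
position `i`, this is equivalent (by looking at a leftmost offending position) to the bound
`rev (π i) ≤ i + 1`; after complementing the values it reads `τ i ≤ i + 1`. Such a `τ` of length
`n + 2` has `τ 0 ∈ {0, 1}`, and `Equiv.Perm.decomposeFin` turns it bijectively into the pair of
`τ 0` and such a permutation of length `n + 1`. Hence `A (n + 2) = 2 * A (n + 1)` with
`A 0 = A 1 = 1`, which is the coefficientwise form of `(1 - 2z) F₀(z) = 1 - z`.
-/

open Finset Equiv

section Patterns

variable {n : ℕ} (π : Perm (Fin n))

def largerAfter (i : Fin n) : Finset (Fin n) := {j | i < j ∧ π i < π j}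

lemma count132_eq_zero_iff :
    count132 π = 0 ↔ ∀ ⦃i j k : Fin n⦄, i < j → j < k → π i < π k → ¬ π k < π j := by
  simp [count132, filter_eq_empty_iff]

lemma count123_eq_zero_iff :
    count123 π = 0 ↔ ∀ ⦃i j k : Fin n⦄, i < j → j < k → π i < π j → ¬ π j < π k := by
  simp [count123, filter_eq_empty_iff]

lemma count132_eq_zero_and_count123_eq_zero_iff :
    count132 π = 0 ∧ count123 π = 0 ↔ ∀ i, #(largerAfter π i) ≤ 1 := by
  rw [count132_eq_zero_iff, count123_eq_zero_iff]
  constructor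
  · rintro ⟨h132, h123⟩ i
    have not_lt : ∀ j ∈ largerAfter π i, ∀ k ∈ largerAfter π i, ¬ j < k := by
      intro j hj k hk hjk
      simp only [largerAfter, mem_filter, mem_univ, true_and] at hj hk
      rcases lt_or_gt_of_ne (π.injective.ne hjk.ne) with h | h
      · exact h123 hj.1 hjk hj.2 h
      · exact h132 hj.1 hjk hk.2 h
    refine card_le_one.mpr fun j hj k hk => ?_
    rcases lt_trichotomy j k with h | h | h
    · exact absurd h (not_lt j hj k hk)
    · exact h
    · exact absurd h (not_lt k hk j hj)
  · intro h
    have no_two : ∀ ⦃i j k⦄, i < j → j < k → π i < π j → ¬ π i < π k := by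
      intro i j k hij hjk hj hk
      refine hjk.ne (card_le_one.mp (h i) j ?_ k ?_) <;>
        simp [largerAfter, hij, hij.trans hjk, hj, hk]
    exact ⟨fun i j k hij hjk hk hkj => no_two hij hjk (hk.trans hkj) hk,
      fun i j k hij hjk hj hjk' => no_two hij hjk hj (hj.trans hjk')⟩

lemma card_filter_apply_lt (i : Fin n) : #{j | π i < π j} = ((π i).rev : ℕ) := by
  rw [card_equiv π (t := Ioi (π i)) (by simp), Fin.card_Ioi, Fin.val_rev]
  omega

lemma val_rev_apply_le (i : Fin n) : ((π i).rev : ℕ) ≤ i + #(largerAfter π i) := by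
  have hsub : ({j | π i < π j} : Finset (Fin n)) ⊆ Iio i ∪ largerAfter π i := by
    intro j hj
    simp only [largerAfter, mem_filter, mem_univ, true_and, mem_union, mem_Iio] at hj ⊢
    rcases lt_trichotomy j i with h | rfl | h
    · exact .inl h
    · exact absurd hj (lt_irrefl _)
    · exact .inr ⟨h, hj⟩
  calc ((π i).rev : ℕ) = #{j | π i < π j} := (card_filter_apply_lt π i).symm
    _ ≤ #(Iio i ∪ largerAfter π i) := card_le_card hsub
    _ ≤ i + #(largerAfter π i) := by grw [card_union_le, Fin.card_Iio]

lemma card_largerAfter_le_one_iff :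
    (∀ i, #(largerAfter π i) ≤ 1) ↔ ∀ i, ((π i).rev : ℕ) ≤ i + 1 := by
  refine ⟨fun h i => (val_rev_apply_le π i).trans (by grw [h i]), fun h i => ?_⟩
  induction i using WellFoundedLT.induction with | ind i ih
  by_contra! htwo
  by_cases hp : ∃ p < i, π p < π i
  · obtain ⟨p, hpi, hπp⟩ := hp
    have hsub : largerAfter π i ⊆ largerAfter π p := by
      intro j hj
      simp only [largerAfter, mem_filter, mem_univ, true_and] at hj ⊢
      exact ⟨hpi.trans hj.1, hπp.trans hj.2⟩
    exact (ih p hpi).not_gt (htwo.trans_le (card_le_card hsub))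
  · push Not at hp
    have hsub : Iio i ∪ largerAfter π i ⊆ ({j | π i < π j} : Finset (Fin n)) := by
      intro j hj
      simp only [largerAfter, mem_filter, mem_univ, true_and, mem_union, mem_Iio] at hj ⊢
      rcases hj with hj | hj
      · exact (hp j hj).lt_of_ne (π.injective.ne hj.ne')
      · exact hj.2
    have hdisj : Disjoint (Iio i) (largerAfter π i) := by
      simp +contextual [disjoint_left, largerAfter, le_of_lt]
    have := card_le_card hsub
    rw [card_union_of_disjoint hdisj, Fin.card_Iio, card_filter_apply_lt] at this
    have := h i
    omega

end Patterns

def staircasePerms (n : ℕ) : Finset (Perm (Fin n)) := {τ | ∀ i, (τ i : ℕ) ≤ i + 1}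

lemma A_eq_card_staircasePerms (n : ℕ) : A n = #(staircasePerms n) := by
  refine card_equiv (Equiv.mulLeft Fin.revPerm) fun π => ?_
  simp [staircasePerms, count132_eq_zero_and_count123_eq_zero_iff, card_largerAfter_le_one_iff]

lemma val_swap_zero_succ_le_iff {n : ℕ} {p : Fin (n + 2)} (hp : p ≤ 1) (v : Fin (n + 1)) (k : ℕ) :
    (swap 0 p v.succ : ℕ) ≤ k + 1 ↔ (v : ℕ) ≤ k := by
  by_cases hv : v.succ = p
  · subst hv
    have : (v : ℕ) = 0 := by simpa [Fin.le_iff_val_le_val] using hp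
    simp [this]
  · rw [swap_apply_of_ne_of_ne (Fin.succ_ne_zero v) hv, Fin.val_succ]
    omega

lemma decomposeFin_symm_mem_staircasePerms_iff {n : ℕ} (p : Fin (n + 2))
    (e : Perm (Fin (n + 1))) :
    Perm.decomposeFin.symm (p, e) ∈ staircasePerms (n + 2) ↔
      p ≤ 1 ∧ e ∈ staircasePerms (n + 1) := by
  simp only [staircasePerms, mem_filter, mem_univ, true_and]
  rw [Fin.forall_fin_succ]
  simp only [Perm.decomposeFin_symm_apply_zero, Perm.decomposeFin_symm_apply_succ]
  refine and_congr_right fun hp => forall_congr' fun i => ?_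
  rw [Fin.val_succ, val_swap_zero_succ_le_iff hp]

lemma card_staircasePerms_succ_succ (n : ℕ) :
    #(staircasePerms (n + 2)) = 2 * #(staircasePerms (n + 1)) := by
  have : #(staircasePerms (n + 2)) = #(Iic (1 : Fin (n + 2)) ×ˢ staircasePerms (n + 1)) :=
    card_equiv Perm.decomposeFin fun τ => by
      rw [mem_product, mem_Iic, ← decomposeFin_symm_mem_staircasePerms_iff, Prod.mk.eta,
        Equiv.symm_apply_apply]
  rw [this, card_product, Fin.card_Iic, Fin.val_one]

lemma A_zero : A 0 = 1 := by decide

lemma A_one : A 1 = 1 := by decide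

lemma A_succ_succ (n : ℕ) : A (n + 2) = 2 * A (n + 1) := by
  simp only [A_eq_card_staircasePerms, card_staircasePerms_succ_succ]

theorem genfun_no132_0 :
    (1 - 2 * PowerSeries.X) ^ 1 * PowerSeries.mk (fun n => (A n : ℚ)) = 1 - PowerSeries.X := by
  rw [pow_one]
  ext (_ | _ | n)
  · simp [A_zero]
  · simp [sub_mul, two_mul, add_mul, PowerSeries.coeff_succ_X_mul, A_zero, A_one]
  · simp [sub_mul, two_mul, add_mul, PowerSeries.coeff_succ_X_mul, PowerSeries.coeff_X,
      A_succ_succ]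
end

section
/- Let B₀(n) denote the number of permutations of length n containing exactly one 132 pattern and no 123 pattern. Then in ℚ[[z]], the generating function G₀(z) = ∑_{n≥0} B₀(n)·zⁿ satisfies (1 - 2z)²·G₀(z) = z³. -/
/-- The number of permutations of length n with exactly one 132 pattern and exactly 0 123 patterns. -/
def B (n : ℕ) : ℕ :=
  (Finset.univ.filter (fun π : Equiv.Perm (Fin n) =>
    count132 π = 1 ∧ count123 π = 0)).card

/-!
Write a permutation of length `n + 1` as its first value `p` followed by a permutation `e` of
length `n` in the same relative order (`Equiv.Perm.cons p e`). The 132 and 123 patterns through the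
first entry correspond to the pairs of positions of `e` carrying values `≥ p`, so there are
`(n - p).choose 2` of them. Hence a permutation avoiding 132 and 123 starts with one of its two
largest values, and one with a single 132 and no 123 either starts with one of its two largest
values followed by such a permutation, or starts with its third largest value followed by an
avoider beginning with its maximum. Writing `A` for `numAvoiders`, this gives
`A (n + 2) = 2 A (n + 1)` and `B (n + 3) = 2 B (n + 2) + A (n + 1)`, i.e.
`(1 - 2z) ∑ A (n + 1) zⁿ = 1` and `(1 - 2z) ∑ B (n + 3) zⁿ = ∑ A (n + 1) zⁿ`.
-/

section

open Finset

theorem Fin.card_filter_le_val {n : ℕ} (m : ℕ) : #{i : Fin n | m ≤ (i : ℕ)} = n - m := by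
  simp_rw [← not_lt]
  rw [filter_not, card_sdiff_of_subset (filter_subset _ _), card_univ, Fintype.card_fin,
    Fin.card_filter_val_lt]
  omega

theorem Fin.card_filter_triple_lt_succ {n : ℕ}
    (P : Fin (n + 1) → Fin (n + 1) → Fin (n + 1) → Prop) [∀ a b c, Decidable (P a b c)] :
    #{t : Fin (n + 1) × Fin (n + 1) × Fin (n + 1) |
        t.1 < t.2.1 ∧ t.2.1 < t.2.2 ∧ P t.1 t.2.1 t.2.2}
      = #{q : Fin n × Fin n | q.1 < q.2 ∧ P 0 q.1.succ q.2.succ}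
        + #{t : Fin n × Fin n × Fin n |
            t.1 < t.2.1 ∧ t.2.1 < t.2.2 ∧ P t.1.succ t.2.1.succ t.2.2.succ} := by
  simp only [card_filter, Fintype.sum_prod_type, Fin.sum_univ_succ, Fin.succ_pos,
    Fin.succ_lt_succ_iff, Fin.not_lt_zero, true_and, false_and, and_false, if_false,
    sum_const_zero, zero_add]

theorem Nat.choose_two_eq_one_iff {m : ℕ} : m.choose 2 = 1 ↔ m = 2 := by
  refine ⟨fun h => ?_, by rintro rfl; rfl⟩
  match m, h with
  | 2, _ => rfl
  | m + 3, h =>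
    have := Nat.choose_le_choose 2 (show 3 ≤ m + 3 by omega)
    simp_all [Nat.choose]

theorem Finset.card_filter_fst_and_snd {α β : Type*} [Fintype α] [Fintype β] (P : α → Prop)
    (Q : β → Prop) [DecidablePred P] [DecidablePred Q] :
    #{x : α × β | P x.1 ∧ Q x.2} = #{a | P a} * #{b | Q b} := by
  rw [← card_product, ← filter_product, univ_product_univ]

namespace Equiv.Perm

variable {n : ℕ}

theorem forall_apply_le_iff (π : Perm (Fin (n + 1))) (a : Fin (n + 1)) :
    (∀ i, π i ≤ a) ↔ a = Fin.last n := by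
  rw [← π.surjective.forall (p := (· ≤ a))]
  exact ⟨fun h => Fin.last_le_iff.1 (h _), by rintro rfl; exact Fin.le_last⟩

/-- The permutation with first value `p` whose remaining values are in the same relative order
as the values of `e`. -/
def cons (p : Fin (n + 1)) (e : Perm (Fin n)) : Perm (Fin (n + 1)) :=
  ((finSuccEquiv n).trans e.optionCongr).trans (finSuccEquiv' p).symm

@[simp] theorem cons_zero (p : Fin (n + 1)) (e : Perm (Fin n)) : cons p e 0 = p := by
  simp [cons]

@[simp] theorem cons_succ (p : Fin (n + 1)) (e : Perm (Fin n)) (i : Fin n) :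
    cons p e i.succ = p.succAbove (e i) := by
  simp [cons, finSuccEquiv'_symm_some]

theorem cons_injective :
    Function.Injective (fun pe : Fin (n + 1) × Perm (Fin n) => cons pe.1 pe.2) := by
  rintro ⟨p, e⟩ ⟨q, f⟩ h
  have hpq : p = q := by simpa using DFunLike.congr_fun h 0
  subst hpq
  refine Prod.ext rfl (Equiv.ext fun i => Fin.succAbove_right_injective (p := p) ?_)
  simpa using DFunLike.congr_fun h i.succ

noncomputable def consEquiv : Fin (n + 1) × Perm (Fin n) ≃ Perm (Fin (n + 1)) :=
  Equiv.ofBijective _ <| (Fintype.bijective_iff_injective_and_card _).2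
    ⟨cons_injective, by simp [Fintype.card_perm, Nat.factorial_succ]⟩

theorem card_filter_eq_card_filter_cons (P : Perm (Fin (n + 1)) → Prop) [DecidablePred P] :
    #{π | P π} = #{pe : Fin (n + 1) × Perm (Fin n) | P (cons pe.1 pe.2)} :=
  (card_equiv consEquiv fun _ => by simp [consEquiv]).symm

/-- The 132 patterns of `cons p e` through its first entry, recorded by the two positions of `e`
they use; `cross123` likewise for 123 patterns. -/
def cross132 (p : Fin (n + 1)) (e : Perm (Fin n)) : Finset (Fin n × Fin n) :=
  {q | q.1 < q.2 ∧ p ≤ (e q.2).castSucc ∧ e q.2 < e q.1}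

def cross123 (p : Fin (n + 1)) (e : Perm (Fin n)) : Finset (Fin n × Fin n) :=
  {q | q.1 < q.2 ∧ p ≤ (e q.1).castSucc ∧ e q.1 < e q.2}

theorem count132_cons (p : Fin (n + 1)) (e : Perm (Fin n)) :
    count132 (cons p e) = #(cross132 p e) + count132 e := by
  rw [count132, Fin.card_filter_triple_lt_succ
    (fun a b c => cons p e a < cons p e c ∧ cons p e c < cons p e b)]
  simp [Fin.lt_succAbove_iff_le_castSucc, Fin.succAbove_lt_succAbove_iff, count132, cross132]

theorem count123_cons (p : Fin (n + 1)) (e : Perm (Fin n)) :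
    count123 (cons p e) = #(cross123 p e) + count123 e := by
  rw [count123, Fin.card_filter_triple_lt_succ
    (fun a b c => cons p e a < cons p e b ∧ cons p e b < cons p e c)]
  simp [Fin.lt_succAbove_iff_le_castSucc, Fin.succAbove_lt_succAbove_iff, count123, cross123]

theorem card_cross132_add_card_cross123 (p : Fin (n + 1)) (e : Perm (Fin n)) :
    #(cross132 p e) + #(cross123 p e) = (n - p).choose 2 := by
  set S : Finset (Fin n) := {i | p ≤ (e i).castSucc}
  have hS : #S = n - p := by
    rw [← Fin.card_filter_le_val]
    exact card_equiv e fun i => by simp [S, Fin.le_def]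
  have hdisj : _root_.Disjoint (cross132 p e) (cross123 p e) :=
    disjoint_left.2 fun q h₁ h₂ => by
      simp only [cross132, cross123, mem_filter] at h₁ h₂
      exact lt_asymm h₁.2.2.2 h₂.2.2.2
  rw [← card_union_of_disjoint hdisj, ← hS, ← card_product_filter_lt]
  congr 1
  ext ⟨b, c⟩
  have hne : b ≠ c → e b ≠ e c := e.injective.ne
  simp only [cross132, cross123, S, mem_union, mem_filter, mem_univ, true_and, mem_product]
  grind

theorem avoids_cons_iff (p : Fin (n + 1)) (e : Perm (Fin n)) :
    count132 (cons p e) = 0 ∧ count123 (cons p e) = 0 ↔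
      n ≤ p + 1 ∧ count132 e = 0 ∧ count123 e = 0 := by
  have hcross := card_cross132_add_card_cross123 p e
  have hzero : (n - p).choose 2 = 0 ↔ n ≤ p + 1 := by rw [Nat.choose_eq_zero_iff]; omega
  rw [count132_cons, count123_cons]
  omega

theorem cross123_eq_empty_iff [NeZero n] {p : Fin (n + 1)} {e : Perm (Fin n)}
    (hp : (p : ℕ) + 2 = n) (h132 : count132 e = 0) :
    cross123 p e = ∅ ↔ ∀ i, e i ≤ e 0 := by
  simp only [cross123, filter_eq_empty_iff, mem_univ, true_implies, Prod.forall, not_and,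
    Fin.le_def, Fin.lt_def, Fin.val_castSucc]
  obtain ⟨y, hy⟩ : ∃ y, (e y : ℕ) = p + 1 := ⟨e.symm ⟨p + 1, by omega⟩, by simp⟩
  obtain ⟨z, hz⟩ : ∃ z, (e z : ℕ) = p := ⟨e.symm ⟨p, by omega⟩, by simp⟩
  constructor
  · intro hempty
    suffices hy0 : y = 0 from fun i => by rw [← hy0, hy]; have := (e i).isLt; omega
    -- If the maximum is not in front, the front entry, the maximum and the second-largest value
    -- (which cannot precede the maximum) form a 132 pattern.
    by_contra hy0
    have hyz : (y : ℕ) < z := by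
      rcases lt_trichotomy (y : ℕ) z with h | h | h
      · exact h
      · rw [Fin.ext h] at hy; omega
      · exact absurd (by omega) (hempty z y h (by omega))
    have h0y : (e 0 : ℕ) ≠ e y := Fin.val_injective.ne (e.injective.ne (Ne.symm hy0))
    have h0z : (e 0 : ℕ) ≠ e z := Fin.val_injective.ne (e.injective.ne fun h => by
      subst h; simp at hyz)
    refine filter_eq_empty_iff.1 (card_eq_zero.1 h132) (mem_univ (0, y, z)) ?_
    simp only [Fin.lt_def]
    refine ⟨Nat.pos_of_ne_zero fun h => hy0 (Fin.ext h), hyz, ?_, by omega⟩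
    have := (e 0).isLt
    omega
  · intro hmax b c hbc hb hlt
    have : c = 0 := e.injective (Fin.ext (by have := hmax c; have := (e 0).isLt; omega))
    subst this
    exact Fin.not_lt_zero _ hbc

theorem one132_cons_iff [NeZero n] (p : Fin (n + 1)) (e : Perm (Fin n)) :
    count132 (cons p e) = 1 ∧ count123 (cons p e) = 0 ↔
      (n ≤ p + 1 ∧ count132 e = 1 ∧ count123 e = 0) ∨
        ((p : ℕ) + 2 = n ∧ (count132 e = 0 ∧ count123 e = 0) ∧ ∀ i, e i ≤ e 0) := by
  have hcross := card_cross132_add_card_cross123 p e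
  have hzero : (n - p).choose 2 = 0 ↔ n ≤ p + 1 := by rw [Nat.choose_eq_zero_iff]; omega
  have hone : (n - p).choose 2 = 1 ↔ (p : ℕ) + 2 = n := by rw [Nat.choose_two_eq_one_iff]; omega
  rw [count132_cons, count123_cons]
  constructor
  · rintro ⟨h1, h0⟩
    rcases Nat.eq_zero_or_pos #(cross132 p e) with hc | hc
    · omega
    · have hp : (p : ℕ) + 2 = n := hone.1 (by omega)
      have h132 : count132 e = 0 := by omega
      exact .inr ⟨hp, ⟨h132, by omega⟩,
        (cross123_eq_empty_iff hp h132).1 (card_eq_zero.1 (by omega))⟩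
  · rintro (⟨hp, h1, h0⟩ | ⟨hp, ⟨h132, h123⟩, hmax⟩)
    · omega
    · have := card_eq_zero.2 ((cross123_eq_empty_iff hp h132).2 hmax)
      omega

end Equiv.Perm

open Equiv.Perm

def numAvoiders (n : ℕ) : ℕ :=
  #{π : Equiv.Perm (Fin n) | count132 π = 0 ∧ count123 π = 0}

theorem numAvoiders_one : numAvoiders 1 = 1 := by
  decide

theorem numAvoiders_add_two (n : ℕ) : numAvoiders (n + 2) = 2 * numAvoiders (n + 1) := by
  rw [numAvoiders, card_filter_eq_card_filter_cons]
  simp_rw [avoids_cons_iff]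
  rw [card_filter_fst_and_snd (fun p : Fin (n + 2) => n + 1 ≤ (p : ℕ) + 1)
    (fun e => count132 e = 0 ∧ count123 e = 0)]
  simp_rw [Nat.add_le_add_iff_right, Fin.card_filter_le_val, Nat.add_sub_cancel_left]
  rfl

theorem card_avoiders_max_first (n : ℕ) :
    #{π : Equiv.Perm (Fin (n + 1)) |
        (count132 π = 0 ∧ count123 π = 0) ∧ ∀ i, π i ≤ π 0} =
      numAvoiders n := by
  rw [card_filter_eq_card_filter_cons]
  simp_rw [avoids_cons_iff, forall_apply_le_iff, cons_zero]
  calc _ = #{x : Fin (n + 1) × Equiv.Perm (Fin n) |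
        x.1 = Fin.last n ∧ (count132 x.2 = 0 ∧ count123 x.2 = 0)} := by
        refine congrArg card (filter_congr fun x _ => ⟨fun h => ⟨h.2, h.1.2⟩, fun h => ?_⟩)
        exact ⟨⟨by simp [h.1], h.2⟩, h.1⟩
    _ = numAvoiders n := by
        rw [card_filter_fst_and_snd (· = Fin.last n) (fun e => count132 e = 0 ∧ count123 e = 0),
          filter_eq', if_pos (mem_univ _), card_singleton, one_mul, numAvoiders]

theorem B_add_three (n : ℕ) : B (n + 3) = 2 * B (n + 2) + numAvoiders (n + 1) := by
  rw [B, card_filter_eq_card_filter_cons]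
  simp_rw [one132_cons_iff]
  have htwo : #{p : Fin (n + 3) | n + 2 ≤ (p : ℕ) + 1} = 2 := by
    rw [filter_congr (q := fun p : Fin (n + 3) => n + 1 ≤ (p : ℕ)) fun p _ => by omega,
      Fin.card_filter_le_val]
    omega
  have hone : #{p : Fin (n + 3) | (p : ℕ) + 2 = n + 2} = 1 :=
    card_eq_one.2 ⟨⟨n, by omega⟩, by ext p; simp [Fin.ext_iff]⟩
  rw [filter_or, card_union_of_disjoint (disjoint_filter.2 fun x _ h1 h2 => by omega),
    card_filter_fst_and_snd (fun p : Fin (n + 3) => n + 2 ≤ (p : ℕ) + 1)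
      (fun e => count132 e = 1 ∧ count123 e = 0),
    card_filter_fst_and_snd (fun p : Fin (n + 3) => (p : ℕ) + 2 = n + 2)
      (fun e => (count132 e = 0 ∧ count123 e = 0) ∧ ∀ i, e i ≤ e 0),
    card_avoiders_max_first, htwo, hone, one_mul, B]

theorem B_eq_zero_of_lt_three : ∀ n < 3, B n = 0 := by
  decide

end

namespace PowerSeries

variable {R : Type*} [CommRing R]

theorem mk_eq_X_pow_mul_mk {f : ℕ → R} {k : ℕ} (h : ∀ n < k, f n = 0) :
    mk f = X ^ k * mk (fun n => f (n + k)) := by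
  ext n
  rw [coeff_X_pow_mul', coeff_mk]
  split_ifs with hk
  · simp [Nat.sub_add_cancel hk]
  · exact h n (by omega)

theorem one_sub_C_mul_X_mul_mk_eq {a : R} {f : ℕ → R} {ψ : R⟦X⟧} (h₀ : coeff 0 ψ = f 0)
    (hsucc : ∀ n, coeff (n + 1) ψ = f (n + 1) - a * f n) : (1 - C a * X) * mk f = ψ := by
  ext (_ | n)
  · simp [h₀]
  · simp [sub_mul, mul_assoc, coeff_succ_X_mul, hsucc]

end PowerSeries

open PowerSeries

theorem genfun_one132_0 :
    (1 - 2 * PowerSeries.X) ^ 2 * PowerSeries.mk (fun n => (B n : ℚ)) = PowerSeries.X ^ 3 := by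
  have hA : (1 - C 2 * X) * mk (fun n => (numAvoiders (n + 1) : ℚ)) = 1 :=
    one_sub_C_mul_X_mul_mk_eq (by simp [numAvoiders_one]) fun n => by
      simp [numAvoiders_add_two]
  have hB : (1 - C 2 * X) * mk (fun n => (B (n + 3) : ℚ)) =
      mk (fun n => (numAvoiders (n + 1) : ℚ)) :=
    one_sub_C_mul_X_mul_mk_eq (by simp [B_add_three 0, B_eq_zero_of_lt_three 2])
      fun n => by simp [B_add_three (n + 1)]
  rw [mk_eq_X_pow_mul_mk (k := 3) fun n hn => by simp [B_eq_zero_of_lt_three n hn],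
    ← map_ofNat C 2]
  calc _ = X ^ 3 * ((1 - C 2 * X) * ((1 - C 2 * X) * mk (fun n => (B (n + 3) : ℚ)))) := by ring
    _ = X ^ 3 := by rw [hB, hA, mul_one]
end

section
/- Let n ≥ 1 and let π be a permutation of {0,...,n-1} (π : Equiv.Perm (Fin n)) that contains no 132 pattern, and let k be the position of the maximum, i.e. π(k) = n-1. Then for all indices i, j with i < k < j, we have π(j) < π(i). In particular, the set of values at positions before k is exactly the set of the top k values below the maximum, and the set of values at positions after k is exactly {0,...,n-2-k}. -/
/-!
Every entry after the maximum is smaller than every entry before it: otherwise the entry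
before, the maximum and the entry after form a 132 pattern. So the `n - 1 - k` entries after
the maximum lie below the `k + 1` entries up to it, which forces them to be exactly the values
`0, …, n - 2 - k`.
-/

open Finset

def Avoids132 {α β : Type*} [LT α] [LT β] (f : α → β) : Prop :=
  ∀ i₁ i₂ i₃, i₁ < i₂ → i₂ < i₃ → ¬(f i₁ < f i₃ ∧ f i₃ < f i₂)

theorem Avoids132.apply_lt_of_le_of_lt {α β : Type*} [LinearOrder α] [LinearOrder β]
    {f : α → β} (h : Avoids132 f) (hf : Function.Injective f) {k : α} (hk : ∀ x, f x ≤ f k)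
    {i j : α} (hik : i ≤ k) (hkj : k < j) : f j < f i := by
  have hjk : f j < f k := (hk j).lt_of_ne (hf.ne hkj.ne')
  rcases hik.lt_or_eq with hik | rfl
  · exact (lt_or_gt_of_ne (hf.ne (hik.trans hkj).ne)).resolve_left
      fun hij => h i k j hik hkj ⟨hij, hjk⟩
  · exact hjk

theorem Fin.val_add_card_lt_of_forall_lt {n : ℕ} {s : Finset (Fin n)} {v : Fin n}
    (h : ∀ x ∈ s, v < x) : (v : ℕ) + #s < n := by
  have := card_le_card fun x hx => mem_Ioi.2 (h x hx)
  rw [Fin.card_Ioi] at this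
  omega

theorem Fin.card_le_of_forall_lt {n : ℕ} {s : Finset (Fin n)} {v : Fin n}
    (h : ∀ x ∈ s, x < v) : #s ≤ v := by
  simpa using card_le_card fun x hx => mem_Iio.2 (h x hx)

namespace Equiv.Perm

variable {n : ℕ} {π : Perm (Fin n)} {k : Fin n}

theorem apply_le_of_val_eq (hk : (π k : ℕ) = n - 1) (x : Fin n) : π x ≤ π k := by
  rw [Fin.le_iff_val_le_val, hk]
  have := (π x).isLt
  omega

theorem val_apply_lt_of_ne (hk : (π k : ℕ) = n - 1) {x : Fin n} (hx : x ≠ k) :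
    (π x : ℕ) < n - 1 :=
  hk ▸ (apply_le_of_val_eq hk x).lt_of_ne (π.injective.ne hx)

theorem sub_le_val_apply_of_lt (havoid : Avoids132 π) (hk : (π k : ℕ) = n - 1) {i : Fin n}
    (hi : i < k) : n - 1 - k ≤ (π i : ℕ) := by
  have hbelow : ∀ v ∈ (Ioi k).image π, v < π i := by
    simp only [mem_image, mem_Ioi]
    rintro _ ⟨j, hj, rfl⟩
    exact havoid.apply_lt_of_le_of_lt π.injective (apply_le_of_val_eq hk) hi.le hj
  simpa [card_image_of_injective _ π.injective] using Fin.card_le_of_forall_lt hbelow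

theorem val_apply_lt_sub_of_gt (havoid : Avoids132 π) (hk : (π k : ℕ) = n - 1) {j : Fin n}
    (hj : k < j) : (π j : ℕ) < n - 1 - k := by
  have habove : ∀ v ∈ (Iic k).image π, π j < v := by
    simp only [mem_image, mem_Iic]
    rintro _ ⟨i, hi, rfl⟩
    exact havoid.apply_lt_of_le_of_lt π.injective (apply_le_of_val_eq hk) hi hj
  have := Fin.val_add_card_lt_of_forall_lt habove
  rw [card_image_of_injective _ π.injective, Fin.card_Iic] at this
  omega

theorem exists_lt_apply_eq_iff (havoid : Avoids132 π) (hk : (π k : ℕ) = n - 1) (v : Fin n) :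
    (∃ i, i < k ∧ π i = v) ↔ n - 1 - (k : ℕ) ≤ v ∧ (v : ℕ) < n - 1 := by
  constructor
  · rintro ⟨i, hi, rfl⟩
    exact ⟨sub_le_val_apply_of_lt havoid hk hi, val_apply_lt_of_ne hk hi.ne⟩
  · rintro ⟨hlo, hhi⟩
    refine ⟨π.symm v, ?_, π.apply_symm_apply v⟩
    rcases lt_trichotomy (π.symm v) k with h | rfl | h
    · exact h
    · simp only [apply_symm_apply] at hk
      omega
    · have := val_apply_lt_sub_of_gt havoid hk h
      simp only [apply_symm_apply] at this
      omega

theorem exists_gt_apply_eq_iff (havoid : Avoids132 π) (hk : (π k : ℕ) = n - 1) (v : Fin n) :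
    (∃ j, k < j ∧ π j = v) ↔ (v : ℕ) < n - 1 - k := by
  constructor
  · rintro ⟨j, hj, rfl⟩
    exact val_apply_lt_sub_of_gt havoid hk hj
  · intro hv
    refine ⟨π.symm v, ?_, π.apply_symm_apply v⟩
    rcases lt_trichotomy (π.symm v) k with h | rfl | h
    · have := sub_le_val_apply_of_lt havoid hk h
      simp only [apply_symm_apply] at this
      omega
    · simp only [apply_symm_apply] at hk
      omega
    · exact h

end Equiv.Perm

theorem structure_of_132_avoiding_general (n : ℕ) (π : Equiv.Perm (Fin n))
    (havoid : ∀ i₁ i₂ i₃ : Fin n, i₁ < i₂ → i₂ < i₃ →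
      ¬(π i₁ < π i₃ ∧ π i₃ < π i₂))
    (k : Fin n) (hk : (π k : ℕ) = n - 1) :
    (∀ i j : Fin n, i < k → k < j → π j < π i) ∧
    (∀ v : Fin n, (∃ i : Fin n, i < k ∧ π i = v) ↔
      n - 1 - (k : ℕ) ≤ (v : ℕ) ∧ (v : ℕ) < n - 1) ∧
    (∀ v : Fin n, (∃ j : Fin n, k < j ∧ π j = v) ↔ (v : ℕ) < n - 1 - (k : ℕ)) :=
  ⟨fun _ _ hik hkj => Avoids132.apply_lt_of_le_of_lt havoid π.injective
      (π.apply_le_of_val_eq hk) hik.le hkj,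
    π.exists_lt_apply_eq_iff havoid hk, π.exists_gt_apply_eq_iff havoid hk⟩

theorem structure_of_132_avoiding (n : ℕ) (hn : 1 ≤ n) (π : Equiv.Perm (Fin n))
    (havoid : ∀ i₁ i₂ i₃ : Fin n, i₁ < i₂ → i₂ < i₃ →
      ¬(π i₁ < π i₃ ∧ π i₃ < π i₂))
    (k : Fin n) (hk : (π k : ℕ) = n - 1) :
    (∀ i j : Fin n, i < k → k < j → π j < π i) ∧
    (∀ v : Fin n, (∃ i : Fin n, i < k ∧ π i = v) ↔
      n - 1 - (k : ℕ) ≤ (v : ℕ) ∧ (v : ℕ) < n - 1) ∧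
    (∀ v : Fin n, (∃ j : Fin n, k < j ∧ π j = v) ↔ (v : ℕ) < n - 1 - (k : ℕ)) :=
  structure_of_132_avoiding_general n π havoid k hk
end

section
/- Let n ≥ 1 and let π be a permutation of {0,...,n-1} (π : Equiv.Perm (Fin n)) with π(k) = n-1. Then π avoids 132 if and only if all three of the following hold: (1) for all indices i < k < j, π(j) < π(i); (2) there is no triple of indices i₁ < i₂ < i₃ all less than k with π(i₁) < π(i₃) < π(i₂); and (3) there is no triple of indices i₁ < i₂ < i₃ all greater than k with π(i₁) < π(i₃) < π(i₂). -/
section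

variable {ι α : Type*} [LinearOrder ι] [LinearOrder α] {f : ι → α} {k : ι}

theorem lt_of_avoids132_of_forall_le (hf : Function.Injective f) (hk : ∀ j, f j ≤ f k)
    (H : ∀ i₁ i₂ i₃ : ι, i₁ < i₂ → i₂ < i₃ → ¬(f i₁ < f i₃ ∧ f i₃ < f i₂))
    {i j : ι} (hik : i < k) (hkj : k < j) : f j < f i := by
  have hij : f i ≠ f j := hf.ne (hik.trans hkj).ne
  have hjk : f j < f k := (hk j).lt_of_ne (hf.ne hkj.ne')
  by_contra! hle
  exact H i k j hik hkj ⟨hle.lt_of_ne hij, hjk⟩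

theorem avoids132_of_forall_le (hk : ∀ j, f j ≤ f k)
    (H₁ : ∀ i j : ι, i < k → k < j → f j < f i)
    (H₂ : ∀ i₁ i₂ i₃ : ι, i₁ < i₂ → i₂ < i₃ → i₃ < k → ¬(f i₁ < f i₃ ∧ f i₃ < f i₂))
    (H₃ : ∀ i₁ i₂ i₃ : ι, k < i₁ → i₁ < i₂ → i₂ < i₃ → ¬(f i₁ < f i₃ ∧ f i₃ < f i₂)) :
    ∀ i₁ i₂ i₃ : ι, i₁ < i₂ → i₂ < i₃ → ¬(f i₁ < f i₃ ∧ f i₃ < f i₂) := by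
  -- `f k` can only play the `3` of a pattern, so a pattern lies on one side of `k` or straddles it.
  rintro i₁ i₂ i₃ h₁₂ h₂₃ ⟨h₁₃, h₃₂⟩
  rcases lt_trichotomy i₃ k with h₃ | rfl | h₃
  · exact H₂ i₁ i₂ i₃ h₁₂ h₂₃ h₃ ⟨h₁₃, h₃₂⟩
  · exact (hk i₂).not_gt h₃₂
  rcases lt_trichotomy i₁ k with h₁ | rfl | h₁
  · exact (H₁ i₁ i₃ h₁ h₃).not_gt h₁₃
  · exact (hk i₃).not_gt h₁₃
  · exact H₃ i₁ i₂ i₃ h₁ h₁₂ h₂₃ ⟨h₁₃, h₃₂⟩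

theorem avoids132_iff_of_forall_le (hf : Function.Injective f) (hk : ∀ j, f j ≤ f k) :
    (∀ i₁ i₂ i₃ : ι, i₁ < i₂ → i₂ < i₃ → ¬(f i₁ < f i₃ ∧ f i₃ < f i₂)) ↔
    ((∀ i j : ι, i < k → k < j → f j < f i) ∧
     (∀ i₁ i₂ i₃ : ι, i₁ < i₂ → i₂ < i₃ → i₃ < k → ¬(f i₁ < f i₃ ∧ f i₃ < f i₂)) ∧
     (∀ i₁ i₂ i₃ : ι, k < i₁ → i₁ < i₂ → i₂ < i₃ → ¬(f i₁ < f i₃ ∧ f i₃ < f i₂))) := by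
  refine ⟨fun H => ⟨?_, ?_, ?_⟩, fun ⟨H₁, H₂, H₃⟩ => avoids132_of_forall_le hk H₁ H₂ H₃⟩
  · exact fun i j => lt_of_avoids132_of_forall_le hf hk H
  · exact fun i₁ i₂ i₃ h₁₂ h₂₃ _ => H i₁ i₂ i₃ h₁₂ h₂₃
  · exact fun i₁ i₂ i₃ _ h₁₂ h₂₃ => H i₁ i₂ i₃ h₁₂ h₂₃

end

theorem avoids132_iff_parts_avoid_general (n : ℕ) (π : Equiv.Perm (Fin n))
    (k : Fin n) (hk : (π k : ℕ) = n - 1) :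
    (∀ i₁ i₂ i₃ : Fin n, i₁ < i₂ → i₂ < i₃ → ¬(π i₁ < π i₃ ∧ π i₃ < π i₂)) ↔
    ((∀ i j : Fin n, i < k → k < j → π j < π i) ∧
     (∀ i₁ i₂ i₃ : Fin n, i₁ < i₂ → i₂ < i₃ → i₃ < k →
       ¬(π i₁ < π i₃ ∧ π i₃ < π i₂)) ∧
     (∀ i₁ i₂ i₃ : Fin n, k < i₁ → i₁ < i₂ → i₂ < i₃ →
       ¬(π i₁ < π i₃ ∧ π i₃ < π i₂))) :=
  avoids132_iff_of_forall_le π.injective fun j =>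
    Fin.le_def.mpr (hk ▸ Nat.le_sub_one_of_lt (π j).isLt)

theorem avoids132_iff_parts_avoid (n : ℕ) (hn : 1 ≤ n) (π : Equiv.Perm (Fin n))
    (k : Fin n) (hk : (π k : ℕ) = n - 1) :
    (∀ i₁ i₂ i₃ : Fin n, i₁ < i₂ → i₂ < i₃ → ¬(π i₁ < π i₃ ∧ π i₃ < π i₂)) ↔
    ((∀ i j : Fin n, i < k → k < j → π j < π i) ∧
     (∀ i₁ i₂ i₃ : Fin n, i₁ < i₂ → i₂ < i₃ → i₃ < k →
       ¬(π i₁ < π i₃ ∧ π i₃ < π i₂)) ∧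
     (∀ i₁ i₂ i₃ : Fin n, k < i₁ → i₁ < i₂ → i₂ < i₃ →
       ¬(π i₁ < π i₃ ∧ π i₃ < π i₂))) :=
  avoids132_iff_parts_avoid_general n π k hk
end

section
/- Let n ≥ 1 and let π be a permutation of {0,...,n-1} (π : Equiv.Perm (Fin n)) with π(k) = n-1, and suppose that for all indices i < k < j one has π(j) < π(i). Then the number of 123 patterns of π equals the number of triples i₁ < i₂ < i₃ < k with π(i₁) < π(i₂) < π(i₃), plus the number of triples k < i₁ < i₂ < i₃ with π(i₁) < π(i₂) < π(i₃), plus the number of pairs i₁ < i₂ < k with π(i₁) < π(i₂). -/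
/-!
Since `π k` is the maximum value, a 123 pattern can use `k` only as its last entry, and then
it is just a 12 pattern to the left of `k` followed by `k`. A 123 pattern ending to the right
of `k` cannot start to the left of `k`, because every value to the left of `k` exceeds every
value to its right; so it lies entirely to the right of `k`.
-/

open Finset

section

variable {α β : Type*} [LinearOrder α] [LinearOrder β] {f : α → β} {k : α}

lemma lt_first_of_increasing_of_lt_last (hmax : ∀ x, x ≠ k → f x < f k)
    (hsplit : ∀ i j, i < k → k < j → f j < f i) {i₁ i₂ i₃ : α} (h₁₂ : i₁ < i₂)
    (hf₁₂ : f i₁ < f i₂) (hf₂₃ : f i₂ < f i₃) (hk : k < i₃) : k < i₁ := by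
  rcases lt_trichotomy i₁ k with h | rfl | h
  · exact absurd (hsplit _ _ h hk) (hf₁₂.trans hf₂₃).not_gt
  · exact absurd (hmax _ h₁₂.ne') hf₁₂.not_gt
  · exact h

def appendThird (k : α) : α × α ↪ α × α × α :=
  ⟨fun p => (p.1, p.2, k), fun p q h => by simpa [Prod.ext_iff] using h⟩

lemma filter_increasing_triple_eq_union [Fintype α] (hmax : ∀ x, x ≠ k → f x < f k)
    (hsplit : ∀ i j, i < k → k < j → f j < f i) :
    univ.filter (fun p : α × α × α =>
        p.1 < p.2.1 ∧ p.2.1 < p.2.2 ∧ f p.1 < f p.2.1 ∧ f p.2.1 < f p.2.2) =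
      univ.filter (fun p : α × α × α =>
        p.1 < p.2.1 ∧ p.2.1 < p.2.2 ∧ p.2.2 < k ∧ f p.1 < f p.2.1 ∧ f p.2.1 < f p.2.2) ∪
      univ.filter (fun p : α × α × α =>
        k < p.1 ∧ p.1 < p.2.1 ∧ p.2.1 < p.2.2 ∧ f p.1 < f p.2.1 ∧ f p.2.1 < f p.2.2) ∪
      (univ.filter (fun p : α × α => p.1 < p.2 ∧ p.2 < k ∧ f p.1 < f p.2)).map
        (appendThird k) := by
  ext ⟨i₁, i₂, i₃⟩
  simp only [mem_union, mem_filter, mem_univ, true_and, mem_map, appendThird, Prod.exists]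
  constructor
  · rintro ⟨h₁₂, h₂₃, hf₁₂, hf₂₃⟩
    rcases lt_trichotomy i₃ k with h | rfl | h
    · exact .inl (.inl ⟨h₁₂, h₂₃, h, hf₁₂, hf₂₃⟩)
    · exact .inr ⟨i₁, i₂, ⟨h₁₂, h₂₃, hf₁₂⟩, rfl⟩
    · exact .inl (.inr ⟨lt_first_of_increasing_of_lt_last hmax hsplit h₁₂ hf₁₂ hf₂₃ h,
        h₁₂, h₂₃, hf₁₂, hf₂₃⟩)
  · rintro ((⟨h₁₂, h₂₃, -, hf₁₂, hf₂₃⟩ | ⟨-, h₁₂, h₂₃, hf₁₂, hf₂₃⟩) |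
      ⟨_, _, ⟨h₁₂, h₂₃, hf₁₂⟩, ⟨⟩⟩)
    · exact ⟨h₁₂, h₂₃, hf₁₂, hf₂₃⟩
    · exact ⟨h₁₂, h₂₃, hf₁₂, hf₂₃⟩
    · exact ⟨h₁₂, h₂₃, hf₁₂, hmax _ h₂₃.ne⟩

lemma card_filter_increasing_triple [Fintype α] (hmax : ∀ x, x ≠ k → f x < f k)
    (hsplit : ∀ i j, i < k → k < j → f j < f i) :
    #(univ.filter (fun p : α × α × α =>
        p.1 < p.2.1 ∧ p.2.1 < p.2.2 ∧ f p.1 < f p.2.1 ∧ f p.2.1 < f p.2.2)) =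
      #(univ.filter (fun p : α × α × α =>
        p.1 < p.2.1 ∧ p.2.1 < p.2.2 ∧ p.2.2 < k ∧ f p.1 < f p.2.1 ∧ f p.2.1 < f p.2.2)) +
      #(univ.filter (fun p : α × α × α =>
        k < p.1 ∧ p.1 < p.2.1 ∧ p.2.1 < p.2.2 ∧ f p.1 < f p.2.1 ∧ f p.2.1 < f p.2.2)) +
      #(univ.filter (fun p : α × α => p.1 < p.2 ∧ p.2 < k ∧ f p.1 < f p.2)) := by
  rw [filter_increasing_triple_eq_union hmax hsplit, card_union_of_disjoint,
    card_union_of_disjoint, card_map]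
  · exact disjoint_filter.2 fun p _ hA hB =>
      lt_asymm hA.2.2.1 (hB.1.trans (hB.2.1.trans hB.2.2.1))
  · refine disjoint_union_left.2 ⟨disjoint_left.2 ?_, disjoint_left.2 ?_⟩ <;>
      rintro _ hp hq <;> obtain ⟨q, -, rfl⟩ := mem_map.1 hq <;>
      simp only [appendThird, mem_filter] at hp
    · exact lt_irrefl k hp.2.2.2.1
    · exact lt_irrefl k (hp.2.1.trans (hp.2.2.1.trans hp.2.2.2.1))

end

theorem count123_split_general (n : ℕ) (π : Equiv.Perm (Fin n))
    (k : Fin n) (hk : (π k : ℕ) = n - 1)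
    (hsplit : ∀ i j : Fin n, i < k → k < j → π j < π i) :
    count123 π =
      (Finset.univ.filter (fun p : Fin n × Fin n × Fin n =>
        p.1 < p.2.1 ∧ p.2.1 < p.2.2 ∧ p.2.2 < k ∧
        π p.1 < π p.2.1 ∧ π p.2.1 < π p.2.2)).card +
      (Finset.univ.filter (fun p : Fin n × Fin n × Fin n =>
        k < p.1 ∧ p.1 < p.2.1 ∧ p.2.1 < p.2.2 ∧
        π p.1 < π p.2.1 ∧ π p.2.1 < π p.2.2)).card +
      (Finset.univ.filter (fun p : Fin n × Fin n =>
        p.1 < p.2 ∧ p.2 < k ∧ π p.1 < π p.2)).card := by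
  have hmax : ∀ x, x ≠ k → π x < π k := fun x hx =>
    lt_of_le_of_ne (Fin.le_def.2 (by omega)) (π.injective.ne hx)
  exact card_filter_increasing_triple hmax hsplit

theorem count123_split (n : ℕ) (hn : 1 ≤ n) (π : Equiv.Perm (Fin n))
    (k : Fin n) (hk : (π k : ℕ) = n - 1)
    (hsplit : ∀ i j : Fin n, i < k → k < j → π j < π i) :
    count123 π =
      (Finset.univ.filter (fun p : Fin n × Fin n × Fin n =>
        p.1 < p.2.1 ∧ p.2.1 < p.2.2 ∧ p.2.2 < k ∧
        π p.1 < π p.2.1 ∧ π p.2.1 < π p.2.2)).card +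
      (Finset.univ.filter (fun p : Fin n × Fin n × Fin n =>
        k < p.1 ∧ p.1 < p.2.1 ∧ p.2.1 < p.2.2 ∧
        π p.1 < π p.2.1 ∧ π p.2.1 < π p.2.2)).card +
      (Finset.univ.filter (fun p : Fin n × Fin n =>
        p.1 < p.2 ∧ p.2 < k ∧ π p.1 < π p.2)).card :=
  count123_split_general n π k hk hsplit
end

section
/- For each n ≥ 0, define the polynomial F_n(q,t) = ∑_π q^{#123(π)}·t^{#12(π)} ∈ ℤ[q,t], where the sum is over all permutations π of length n that avoid 132. Then F₀(q,t) = 1 and for all n ≥ 1: F_n(q,t) = ∑_{k=0}^{n-1} t^k · F_k(q, q·t) · F_{n-1-k}(q, t), where F_k(q, q·t) denotes the polynomial F_k with the variable t substituted by q·t. -/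
/-- The substitution `q ↦ q`, `t ↦ q·t` on `ℤ[q,t]`, where `q = X 0` and `t = X 1`. -/
noncomputable def subT : MvPolynomial (Fin 2) ℤ →ₐ[ℤ] MvPolynomial (Fin 2) ℤ :=
  MvPolynomial.aeval ![MvPolynomial.X 0, MvPolynomial.X 0 * MvPolynomial.X 1]

/-- `F n = ∑ q^{#123(π)} t^{#12(π)}` over 132-avoiding permutations `π` of length `n`. -/
noncomputable def F (n : ℕ) : MvPolynomial (Fin 2) ℤ :=
  ∑ π ∈ Finset.univ.filter (fun π : Equiv.Perm (Fin n) => count132 π = 0),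
    MvPolynomial.X 0 ^ count123 π * MvPolynomial.X 1 ^ count12 π

/-!
A 132-avoiding permutation of length `a + 1 + b` whose maximum sits at position `a` is exactly
`σ'` followed by the maximum followed by `τ`, where `σ'` is a 132-avoiding permutation of the
top values `b, …, a + b - 1` and `τ` one of the bottom values `0, …, b - 1`: any left entry
below a right entry would form a 132 with the maximum. In this decomposition
`#12 = #12 σ + a + #12 τ` (the `a` pairs end at the maximum) and
`#123 = #123 σ + #12 σ + #123 τ` (every 12 of `σ` extends by the maximum), which is the
factor `t ^ a * F_a(q, q t) * F_b(q, t)`; summing over the position of the maximum gives the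
recursion.
-/

open Finset MvPolynomial

section Patterns

variable {α β : Type*} [LinearOrder α] [LinearOrder β] {m n : ℕ}

def pattern12 (f : Fin n → α) : ℕ :=
  #{p : Fin n × Fin n | p.1 < p.2 ∧ f p.1 < f p.2}

def pattern123 (f : Fin n → α) : ℕ :=
  #{p : Fin n × Fin n × Fin n | p.1 < p.2.1 ∧ p.2.1 < p.2.2 ∧ f p.1 < f p.2.1 ∧ f p.2.1 < f p.2.2}

def pattern132 (f : Fin n → α) : ℕ :=
  #{p : Fin n × Fin n × Fin n | p.1 < p.2.1 ∧ p.2.1 < p.2.2 ∧ f p.1 < f p.2.2 ∧ f p.2.2 < f p.2.1}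

lemma pattern12_comp {g : α → β} (hg : StrictMono g) (f : Fin n → α) :
    pattern12 (g ∘ f) = pattern12 f := by
  simp only [pattern12, Function.comp_apply, hg.lt_iff_lt]

lemma pattern123_comp {g : α → β} (hg : StrictMono g) (f : Fin n → α) :
    pattern123 (g ∘ f) = pattern123 f := by
  simp only [pattern123, Function.comp_apply, hg.lt_iff_lt]

lemma pattern132_comp {g : α → β} (hg : StrictMono g) (f : Fin n → α) :
    pattern132 (g ∘ f) = pattern132 f := by
  simp only [pattern132, Function.comp_apply, hg.lt_iff_lt]

lemma pattern12_eq_sum (f : Fin n → α) :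
    pattern12 f = ∑ i, ∑ j, if i < j ∧ f i < f j then 1 else 0 := by
  rw [pattern12, card_filter, Fintype.sum_prod_type]

lemma pattern123_eq_sum (f : Fin n → α) :
    pattern123 f = ∑ i, ∑ j, ∑ k, if i < j ∧ j < k ∧ f i < f j ∧ f j < f k then 1 else 0 := by
  simp only [pattern123, card_filter, Fintype.sum_prod_type]

lemma pattern132_eq_sum (f : Fin n → α) :
    pattern132 f = ∑ i, ∑ j, ∑ k, if i < j ∧ j < k ∧ f i < f k ∧ f k < f j then 1 else 0 := by
  simp only [pattern132, card_filter, Fintype.sum_prod_type]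

lemma Fin.castAdd_lt_natAdd (i : Fin m) (j : Fin n) : Fin.castAdd n i < Fin.natAdd m j := by
  simp only [Fin.lt_def, Fin.val_castAdd, Fin.val_natAdd]
  omega

section Append

variable {f : Fin m → α} {g : Fin n → α}

lemma pattern12_append (h : ∀ i j, g j < f i) :
    pattern12 (Fin.append f g) = pattern12 f + pattern12 g := by
  have h' : ∀ i j, ¬ f i < g j := fun i j => (h i j).not_gt
  simp only [pattern12_eq_sum, Fin.sum_univ_add, Fin.append_left, Fin.append_right, h',
    (Fin.strictMono_castAdd n).lt_iff_lt, Fin.natAdd_lt_natAdd_iff, Fin.castAdd_lt_natAdd,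
    (Fin.castAdd_lt_natAdd _ _).not_gt, and_false, false_and, if_false, sum_const_zero,
    add_zero, zero_add]

lemma pattern123_append (h : ∀ i j, g j < f i) :
    pattern123 (Fin.append f g) = pattern123 f + pattern123 g := by
  have h' : ∀ i j, ¬ f i < g j := fun i j => (h i j).not_gt
  simp only [pattern123_eq_sum, Fin.sum_univ_add, Fin.append_left, Fin.append_right, h',
    (Fin.strictMono_castAdd n).lt_iff_lt, Fin.natAdd_lt_natAdd_iff, Fin.castAdd_lt_natAdd,
    (Fin.castAdd_lt_natAdd _ _).not_gt, and_false, false_and, if_false, sum_const_zero,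
    add_zero, zero_add]

lemma pattern132_append (h : ∀ i j, g j < f i) :
    pattern132 (Fin.append f g) = pattern132 f + pattern132 g := by
  have h' : ∀ i j, ¬ f i < g j := fun i j => (h i j).not_gt
  simp only [pattern132_eq_sum, Fin.sum_univ_add, Fin.append_left, Fin.append_right, h',
    (Fin.strictMono_castAdd n).lt_iff_lt, Fin.natAdd_lt_natAdd_iff, Fin.castAdd_lt_natAdd,
    (Fin.castAdd_lt_natAdd _ _).not_gt, and_false, false_and, if_false, sum_const_zero,
    add_zero, zero_add]

end Append

section Snoc

variable {f : Fin n → α} {M : α}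

lemma pattern12_snoc (h : ∀ i, f i < M) :
    pattern12 (Fin.snoc (α := fun _ => α) f M) = pattern12 f + n := by
  simp only [pattern12_eq_sum, Fin.sum_univ_castSucc, Fin.snoc_castSucc, Fin.snoc_last, h,
    Fin.castSucc_lt_castSucc_iff, Fin.castSucc_lt_last, (Fin.castSucc_lt_last _).not_gt,
    lt_irrefl, and_false, false_and, if_false, if_true, and_true, sum_const_zero, add_zero,
    sum_add_distrib, sum_const, card_univ, Fintype.card_fin, smul_eq_mul, mul_one]

lemma pattern123_snoc (h : ∀ i, f i < M) :
    pattern123 (Fin.snoc (α := fun _ => α) f M) = pattern123 f + pattern12 f := by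
  simp only [pattern123_eq_sum, pattern12_eq_sum, Fin.sum_univ_castSucc, Fin.snoc_castSucc,
    Fin.snoc_last, h, Fin.castSucc_lt_castSucc_iff, Fin.castSucc_lt_last,
    (Fin.castSucc_lt_last _).not_gt, lt_irrefl, and_false, false_and, if_false, and_true,
    true_and, sum_const_zero, add_zero, sum_add_distrib]

lemma pattern132_snoc (h : ∀ i, f i < M) :
    pattern132 (Fin.snoc (α := fun _ => α) f M) = pattern132 f := by
  simp only [pattern132_eq_sum, Fin.sum_univ_castSucc, Fin.snoc_castSucc,
    Fin.snoc_last, h, (h _).not_gt, Fin.castSucc_lt_castSucc_iff, Fin.castSucc_lt_last,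
    (Fin.castSucc_lt_last _).not_gt, lt_irrefl, and_false, false_and, if_false, and_true,
    sum_const_zero, add_zero, sum_add_distrib]

end Snoc

end Patterns

section Perm

variable {n : ℕ}

lemma count12_eq_pattern12_add (π : Equiv.Perm (Fin n)) (c : ℕ) :
    count12 π = pattern12 (fun i => c + (π i : ℕ)) :=
  (pattern12_comp (g := fun x : Fin n => c + (x : ℕ))
    (fun _ _ h => Nat.add_lt_add_left h c) π).symm

lemma count123_eq_pattern123_add (π : Equiv.Perm (Fin n)) (c : ℕ) :
    count123 π = pattern123 (fun i => c + (π i : ℕ)) :=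
  (pattern123_comp (g := fun x : Fin n => c + (x : ℕ))
    (fun _ _ h => Nat.add_lt_add_left h c) π).symm

lemma count132_eq_pattern132_add (π : Equiv.Perm (Fin n)) (c : ℕ) :
    count132 π = pattern132 (fun i => c + (π i : ℕ)) :=
  (pattern132_comp (g := fun x : Fin n => c + (x : ℕ))
    (fun _ _ h => Nat.add_lt_add_left h c) π).symm

noncomputable def permOfInjective (f : Fin n → ℕ) (hf : Function.Injective f)
    (hlt : ∀ i, f i < n) : Equiv.Perm (Fin n) :=
  Equiv.ofBijective (fun i => ⟨f i, hlt i⟩)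
    (Finite.injective_iff_bijective.mp fun _ _ h => hf (congrArg Fin.val h))

lemma exists_perm_val_eq (f : Fin n → ℕ) (hf : Function.Injective f) (hlt : ∀ i, f i < n) :
    ∃ σ : Equiv.Perm (Fin n), ∀ i, (σ i : ℕ) = f i :=
  ⟨permOfInjective f hf hlt, fun _ => rfl⟩

lemma card_le_of_forall_apply_lt (π : Equiv.Perm (Fin n)) {s : Finset (Fin n)} {x : Fin n}
    (h : ∀ i ∈ s, π i < x) : #s ≤ x :=
  calc #s = #(s.map π.toEmbedding) := (card_map _).symm
    _ ≤ #(Iio x) := card_le_card fun _ hy => by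
        obtain ⟨i, hi, rfl⟩ := mem_map.mp hy
        exact mem_Iio.mpr (h i hi)
    _ = x := Fin.card_Iio x

lemma card_le_of_forall_lt_apply (π : Equiv.Perm (Fin n)) {s : Finset (Fin n)} {x : Fin n}
    (h : ∀ i ∈ s, x < π i) : #s ≤ n - 1 - x :=
  calc #s = #(s.map π.toEmbedding) := (card_map _).symm
    _ ≤ #(Ioi x) := card_le_card fun _ hy => by
        obtain ⟨i, hi, rfl⟩ := mem_map.mp hy
        exact mem_Ioi.mpr (h i hi)
    _ = n - 1 - x := Fin.card_Ioi x

end Perm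

namespace Avoid132

section MaxPosition

variable {n : ℕ} {π : Equiv.Perm (Fin n)} {p : Fin n}

lemma apply_lt_apply_of_val_add_one_eq (hp : (π p : ℕ) + 1 = n) {j : Fin n} (hj : j ≠ p) :
    π j < π p := by
  have hne := Fin.val_ne_of_ne (π.injective.ne hj)
  have := (π j).isLt
  rw [Fin.lt_def]
  omega

lemma apply_lt_apply_of_count132_eq_zero (h132 : count132 π = 0) (hp : (π p : ℕ) + 1 = n)
    {i j : Fin n} (hi : i < p) (hj : p < j) : π j < π i := by
  by_contra! hij
  have hpattern : (i, p, j) ∈ ({q : Fin n × Fin n × Fin n | q.1 < q.2.1 ∧ q.2.1 < q.2.2 ∧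
      π q.1 < π q.2.2 ∧ π q.2.2 < π q.2.1} : Finset _) :=
    mem_filter.mpr ⟨mem_univ _, hi, hj, lt_of_le_of_ne hij (π.injective.ne (hi.trans hj).ne),
      apply_lt_apply_of_val_add_one_eq hp hj.ne'⟩
  rw [count132, card_eq_zero] at h132
  simp [h132] at hpattern

lemma sub_le_apply_of_lt (h132 : count132 π = 0) (hp : (π p : ℕ) + 1 = n) {i : Fin n}
    (hi : i < p) : n - 1 - p ≤ π i :=
  (Fin.card_Ioi p).symm.le.trans <| card_le_of_forall_apply_lt π fun _ hj =>
    apply_lt_apply_of_count132_eq_zero h132 hp hi (mem_Ioi.mp hj)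

lemma add_one_le_sub_of_gt (h132 : count132 π = 0) (hp : (π p : ℕ) + 1 = n) {j : Fin n}
    (hj : p < j) : (p : ℕ) + 1 ≤ n - 1 - π j :=
  (Fin.card_Iic p).symm.le.trans <| card_le_of_forall_lt_apply π fun _ hi =>
    (mem_Iic.mp hi).lt_or_eq.elim (fun h => apply_lt_apply_of_count132_eq_zero h132 hp h hj)
      fun h => h ▸ apply_lt_apply_of_val_add_one_eq hp hj.ne'

end MaxPosition

section Join

variable {a b : ℕ} (σ : Equiv.Perm (Fin a)) (τ : Equiv.Perm (Fin b))

def joinFun : Fin (a + 1 + b) → ℕ :=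
  Fin.append (Fin.snoc (α := fun _ => ℕ) (fun i => b + (σ i : ℕ)) (a + b)) fun j => (τ j : ℕ)

@[simp]
lemma joinFun_castSucc (i : Fin a) :
    joinFun σ τ (Fin.castAdd b (Fin.castSucc i)) = b + (σ i : ℕ) := by
  simp [joinFun]

@[simp]
lemma joinFun_last : joinFun σ τ (Fin.castAdd b (Fin.last a)) = a + b := by
  simp [joinFun]

@[simp]
lemma joinFun_natAdd (j : Fin b) : joinFun σ τ (Fin.natAdd (a + 1) j) = τ j := by
  simp [joinFun]

lemma right_lt_left (i : Fin (a + 1)) (j : Fin b) :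
    (τ j : ℕ) < Fin.snoc (α := fun _ => ℕ) (fun i => b + (σ i : ℕ)) (a + b) i := by
  have := (τ j).isLt
  induction i using Fin.lastCases <;> simp <;> omega

lemma joinFun_lt (k : Fin (a + 1 + b)) : joinFun σ τ k < a + 1 + b := by
  induction k using Fin.addCases with
  | left k =>
    induction k using Fin.lastCases with
    | last => simp
    | cast i => have := (σ i).isLt; simp; omega
  | right j => have := (τ j).isLt; simp; omega

lemma joinFun_injective : Function.Injective (joinFun σ τ) := by
  rw [joinFun, Fin.append_injective_iff, Fin.snoc_injective_iff]
  refine ⟨⟨fun i i' h => σ.injective (Fin.ext (by simpa using h)), ?_⟩,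
    fun j j' h => τ.injective (Fin.ext h), fun i j => (right_lt_left σ τ i j).ne'⟩
  rintro ⟨i, hi⟩
  have := (σ i).isLt
  simp only at hi
  omega

noncomputable def joinAtMax : Equiv.Perm (Fin (a + 1 + b)) :=
  permOfInjective (joinFun σ τ) (joinFun_injective σ τ) (joinFun_lt σ τ)

lemma add_apply_lt_add (i : Fin a) : b + (σ i : ℕ) < a + b := by
  have := (σ i).isLt
  omega

/- `count12 π` is `pattern12 (fun i => (π i : ℕ))` by definition, as `<` on `Fin n` compares
values; the same holds for the other pattern counts. -/
lemma count12_joinAtMax : count12 (joinAtMax σ τ) = count12 σ + a + count12 τ := by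
  rw [count12_eq_pattern12_add σ b]
  exact (pattern12_append (right_lt_left σ τ)).trans
    (congrArg (· + count12 τ) (pattern12_snoc (add_apply_lt_add σ)))

lemma count123_joinAtMax :
    count123 (joinAtMax σ τ) = count123 σ + count12 σ + count123 τ := by
  rw [count123_eq_pattern123_add σ b, count12_eq_pattern12_add σ b]
  exact (pattern123_append (right_lt_left σ τ)).trans
    (congrArg (· + count123 τ) (pattern123_snoc (add_apply_lt_add σ)))

lemma count132_joinAtMax : count132 (joinAtMax σ τ) = count132 σ + count132 τ := by
  rw [count132_eq_pattern132_add σ b]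
  exact (pattern132_append (right_lt_left σ τ)).trans
    (congrArg (· + count132 τ) (pattern132_snoc (add_apply_lt_add σ)))

lemma joinAtMax_injective2 : Function.Injective2 (joinAtMax (a := a) (b := b)) := by
  intro σ σ' τ τ' h
  have h' (k) : joinFun σ τ k = joinFun σ' τ' k := congrArg Fin.val (Equiv.ext_iff.mp h k)
  exact ⟨Equiv.ext fun i => Fin.ext (by simpa using h' (Fin.castAdd b (Fin.castSucc i))),
    Equiv.ext fun j => Fin.ext (by simpa using h' (Fin.natAdd (a + 1) j))⟩

end Join

lemma exists_joinAtMax_eq {a b : ℕ} {π : Equiv.Perm (Fin (a + 1 + b))} (h132 : count132 π = 0)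
    (hmax : (π (Fin.castAdd b (Fin.last a)) : ℕ) + 1 = a + 1 + b) :
    ∃ σ τ, joinAtMax σ τ = π := by
  have hleft (i : Fin a) :
      b ≤ π (Fin.castAdd b i.castSucc) ∧ π (Fin.castAdd b i.castSucc) < a + b := by
    have hi : Fin.castAdd b i.castSucc < Fin.castAdd b (Fin.last a) :=
      Fin.strictMono_castAdd b (Fin.castSucc_lt_last i)
    have h₁ := sub_le_apply_of_lt h132 hmax hi
    have h₂ := apply_lt_apply_of_val_add_one_eq hmax hi.ne
    simp only [Fin.lt_def, Fin.val_castAdd, Fin.val_last] at h₁ h₂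
    omega
  have hright (j : Fin b) : π (Fin.natAdd (a + 1) j) < b := by
    have h := add_one_le_sub_of_gt h132 hmax (Fin.castAdd_lt_natAdd (Fin.last a) j)
    simp only [Fin.val_castAdd, Fin.val_last] at h
    omega
  obtain ⟨σ, hσ⟩ := exists_perm_val_eq (fun i => π (Fin.castAdd b i.castSucc) - b)
    (fun i i' h => by
      have := hleft i
      have := hleft i'
      have hval : (π (Fin.castAdd b i.castSucc) : ℕ) = π (Fin.castAdd b i'.castSucc) := by
        simp only at h
        omega
      simpa using π.injective (Fin.ext hval))
    (fun i => by have := hleft i; omega)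
  obtain ⟨τ, hτ⟩ := exists_perm_val_eq (fun j => π (Fin.natAdd (a + 1) j))
    (fun j j' h => by simpa using π.injective (Fin.ext h)) hright
  refine ⟨σ, τ, Equiv.ext fun k => Fin.ext ?_⟩
  show joinFun σ τ k = π k
  induction k using Fin.addCases with
  | left k =>
    induction k using Fin.lastCases with
    | last => rw [joinFun_last]; omega
    | cast i => have := hleft i; rw [joinFun_castSucc, hσ]; omega
  | right j => rw [joinFun_natAdd, hτ]

end Avoid132

open Avoid132

/-- The position `k` is a plain natural number, so that `FmaxAt n k` makes sense for every `k`
and `FmaxAt (a + 1 + b) a` needs no cast between `Fin n` and `Fin (a + 1 + b)`. -/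
noncomputable def FmaxAt (n k : ℕ) : MvPolynomial (Fin 2) ℤ :=
  ∑ π ∈ {π : Equiv.Perm (Fin n) |
      count132 π = 0 ∧ ∃ i : Fin n, (i : ℕ) = k ∧ (π i : ℕ) + 1 = n},
    X 0 ^ count123 π * X 1 ^ count12 π

lemma F_zero : F 0 = 1 := by
  simp [F, count132, count123, count12]

lemma F_eq_sum_FmaxAt {n : ℕ} (hn : 1 ≤ n) : F n = ∑ k ∈ range n, FmaxAt n k := by
  obtain ⟨m, rfl⟩ := Nat.exists_eq_add_of_le' hn
  rw [F, ← sum_fiberwise_of_maps_to (t := range (m + 1))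
    (g := fun π : Equiv.Perm (Fin (m + 1)) => (π.symm (Fin.last m) : ℕ))
    (fun π _ => mem_range.mpr (π.symm (Fin.last m)).isLt)]
  refine sum_congr rfl fun k _ => ?_
  rw [FmaxAt, filter_filter]
  refine sum_congr (filter_congr fun π _ => and_congr_right fun _ => ?_) fun _ _ => rfl
  constructor
  · intro h
    exact ⟨_, h, by simp⟩
  · rintro ⟨i, rfl, hi⟩
    rw [show Fin.last m = π i from Fin.ext (by simp only [Fin.val_last]; omega),
      π.symm_apply_apply]

lemma subT_monomial (c d : ℕ) :
    subT (X 0 ^ c * X 1 ^ d) = X 0 ^ c * (X 0 * X 1) ^ d := by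
  simp [subT]

lemma weight_joinAtMax {a b : ℕ} (σ : Equiv.Perm (Fin a)) (τ : Equiv.Perm (Fin b)) :
    (X 0 ^ count123 (joinAtMax σ τ) * X 1 ^ count12 (joinAtMax σ τ) : MvPolynomial (Fin 2) ℤ) =
      X 1 ^ a * (subT (X 0 ^ count123 σ * X 1 ^ count12 σ) *
        (X 0 ^ count123 τ * X 1 ^ count12 τ)) := by
  rw [count123_joinAtMax, count12_joinAtMax, subT_monomial]
  ring

lemma FmaxAt_eq {a b n : ℕ} (h : a + 1 + b = n) : FmaxAt n a = X 1 ^ a * subT (F a) * F b := by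
  subst h
  rw [F, F, map_sum, mul_assoc, sum_mul_sum, ← sum_product', mul_sum]
  symm
  refine sum_bij (fun p _ => joinAtMax p.1 p.2) ?_ ?_ ?_ fun p _ =>
    (weight_joinAtMax p.1 p.2).symm
  · rintro ⟨σ, τ⟩ hp
    simp only [mem_product, mem_filter, mem_univ, true_and] at hp ⊢
    refine ⟨by rw [count132_joinAtMax, hp.1, hp.2], Fin.castAdd b (Fin.last a), by simp, ?_⟩
    show joinFun σ τ _ + 1 = _
    rw [joinFun_last]
    omega
  · rintro ⟨σ, τ⟩ - ⟨σ', τ'⟩ - h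
    obtain ⟨rfl, rfl⟩ := joinAtMax_injective2 h
    rfl
  · intro π hπ
    simp only [mem_filter, mem_univ, true_and] at hπ
    obtain ⟨h132, i, hi, hmax⟩ := hπ
    obtain rfl : i = Fin.castAdd b (Fin.last a) := Fin.ext hi
    obtain ⟨σ, τ, rfl⟩ := exists_joinAtMax_eq h132 hmax
    rw [count132_joinAtMax] at h132
    exact ⟨(σ, τ), by simp only [mem_product, mem_filter, mem_univ, true_and]; omega, rfl⟩

theorem functional_equation_F :
    F 0 = 1 ∧
    ∀ n : ℕ, 1 ≤ n →
      F n = ∑ k ∈ Finset.range n,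
        (MvPolynomial.X 1 : MvPolynomial (Fin 2) ℤ) ^ k * subT (F k) * F (n - 1 - k) := by
  refine ⟨F_zero, fun n hn => ?_⟩
  rw [F_eq_sum_FmaxAt hn]
  exact sum_congr rfl fun k hk => FmaxAt_eq (by have := mem_range.mp hk; omega)
end

section
/- For each n ≥ 0, define F_n(q,t) = ∑_π q^{#123(π)}·t^{#12(π)} ∈ ℤ[q,t], summed over permutations π of length n avoiding 132, and H_n(q,t) = ∑_σ q^{#123(σ)}·t^{#12(σ)} ∈ ℤ[q,t], summed over permutations σ of length n with exactly one 132 pattern. Then for all n ≥ 1: H_n(q,t) = ∑_{k=0}^{n-1} t^k·F_k(q,q·t)·H_{n-1-k}(q,t) + ∑_{k=0}^{n-1} t^k·H_k(q,q·t)·F_{n-1-k}(q,t) + ∑_{k+m=n-2, m≥1} t^{2+k}·F_k(q,q·t)·F_m(q,t), where F_k(q,q·t) and H_k(q,q·t) denote substitution of q·t for the variable t. -/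
/-- `H n = ∑ q^{#123(σ)} t^{#12(σ)}` over permutations `σ` of length `n` with
exactly one 132 pattern. -/
noncomputable def H (n : ℕ) : MvPolynomial (Fin 2) ℤ :=
  ∑ σ ∈ Finset.univ.filter (fun σ : Equiv.Perm (Fin n) => count132 σ = 1),
    MvPolynomial.X 0 ^ count123 σ * MvPolynomial.X 1 ^ count12 σ

namespace FEH
open Finset Equiv
variable {k m : ℕ}

def il (k m : ℕ) (i : Fin k) : Fin (k+1+m) := ⟨i, by omega⟩
def imid (k m : ℕ) : Fin (k+1+m) := ⟨k, by omega⟩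
def ir (k m : ℕ) (j : Fin m) : Fin (k+1+m) := ⟨k+1+j, by omega⟩

lemma sum_split {M : Type*} [AddCommMonoid M] (f : Fin (k+1+m) → M) :
    ∑ i, f i = ((∑ i : Fin k, f (il k m i)) + f (imid k m)) + ∑ j : Fin m, f (ir k m j) := by
  rw [Fin.sum_univ_add (f := f), Fin.sum_univ_castSucc]
  congr 1

def joinF (α : Perm (Fin k)) (β : Perm (Fin m)) : Fin (k+1+m) → Fin (k+1+m) :=
  fun x => if h : (x : ℕ) < k then ⟨m + (α ⟨x, h⟩ : ℕ), by have := (α ⟨x, h⟩).isLt; omega⟩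
    else if h2 : (x : ℕ) = k then ⟨k + m, by omega⟩
    else ⟨(β ⟨(x : ℕ) - (k+1), by omega⟩ : ℕ), by have := (β ⟨(x:ℕ)-(k+1), by omega⟩).isLt; omega⟩

lemma joinF_lt (α : Perm (Fin k)) (β : Perm (Fin m)) {x : Fin (k+1+m)} (h : (x:ℕ) < k) :
    (joinF α β x : ℕ) = m + α ⟨x, h⟩ := by simp [joinF, h]

lemma joinF_eq (α : Perm (Fin k)) (β : Perm (Fin m)) {x : Fin (k+1+m)} (h : (x:ℕ) = k) :
    (joinF α β x : ℕ) = k + m := by simp [joinF, h]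

lemma joinF_gt (α : Perm (Fin k)) (β : Perm (Fin m)) {x : Fin (k+1+m)} (h : k < (x:ℕ)) :
    (joinF α β x : ℕ) = β ⟨(x:ℕ) - (k+1), by omega⟩ := by
  have h1 : ¬ ((x:ℕ) < k) := by omega
  have h2 : ¬ ((x:ℕ) = k) := by omega
  simp [joinF, h1, h2]

lemma joinF_inj (α : Perm (Fin k)) (β : Perm (Fin m)) : Function.Injective (joinF α β) := by
  intro x y hxy
  have hxy' : (joinF α β x : ℕ) = (joinF α β y : ℕ) := by rw [hxy]
  have hx := x.isLt
  have hy := y.isLt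
  rcases lt_trichotomy (x:ℕ) k with hxk | hxk | hxk <;>
    rcases lt_trichotomy (y:ℕ) k with hyk | hyk | hyk
  · rw [joinF_lt α β hxk, joinF_lt α β hyk] at hxy'
    have : α ⟨x, hxk⟩ = α ⟨y, hyk⟩ := Fin.ext (by omega)
    have := α.injective this
    exact Fin.ext (by simpa [Fin.ext_iff] using this)
  · rw [joinF_lt α β hxk, joinF_eq α β hyk] at hxy'
    have := (α ⟨x, hxk⟩).isLt; omega
  · rw [joinF_lt α β hxk, joinF_gt α β hyk] at hxy'
    have := (β ⟨(y:ℕ)-(k+1), by omega⟩).isLt; omega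
  · rw [joinF_eq α β hxk, joinF_lt α β hyk] at hxy'
    have := (α ⟨y, hyk⟩).isLt; omega
  · exact Fin.ext (by omega)
  · rw [joinF_eq α β hxk, joinF_gt α β hyk] at hxy'
    have := (β ⟨(y:ℕ)-(k+1), by omega⟩).isLt; omega
  · rw [joinF_gt α β hxk, joinF_lt α β hyk] at hxy'
    have := (β ⟨(x:ℕ)-(k+1), by omega⟩).isLt; omega
  · rw [joinF_gt α β hxk, joinF_eq α β hyk] at hxy'
    have := (β ⟨(x:ℕ)-(k+1), by omega⟩).isLt; omega
  · rw [joinF_gt α β hxk, joinF_gt α β hyk] at hxy'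
    have : β ⟨(x:ℕ)-(k+1), by omega⟩ = β ⟨(y:ℕ)-(k+1), by omega⟩ := Fin.ext (by omega)
    have := β.injective this
    exact Fin.ext (by simp [Fin.ext_iff] at this; omega)

noncomputable def join (α : Perm (Fin k)) (β : Perm (Fin m)) : Perm (Fin (k+1+m)) :=
  Equiv.ofBijective _ (Finite.injective_iff_bijective.mp (joinF_inj α β))

lemma join_lt (α : Perm (Fin k)) (β : Perm (Fin m)) {x : Fin (k+1+m)} (h : (x:ℕ) < k) :
    ((join α β) x : ℕ) = m + α ⟨x, h⟩ := joinF_lt α β h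

lemma join_eq (α : Perm (Fin k)) (β : Perm (Fin m)) {x : Fin (k+1+m)} (h : (x:ℕ) = k) :
    ((join α β) x : ℕ) = k + m := joinF_eq α β h

lemma join_gt (α : Perm (Fin k)) (β : Perm (Fin m)) {x : Fin (k+1+m)} (h : k < (x:ℕ)) :
    ((join α β) x : ℕ) = β ⟨(x:ℕ) - (k+1), by omega⟩ := joinF_gt α β h

lemma join_il (α : Perm (Fin k)) (β : Perm (Fin m)) (i : Fin k) :
    ((join α β) (il k m i) : ℕ) = m + α i := by
  rw [join_lt α β (show ((il k m i : Fin (k+1+m)) : ℕ) < k from i.isLt)]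
  congr 1

lemma join_imid (α : Perm (Fin k)) (β : Perm (Fin m)) :
    ((join α β) (imid k m) : ℕ) = k + m := join_eq α β rfl

lemma join_ir (α : Perm (Fin k)) (β : Perm (Fin m)) (j : Fin m) :
    ((join α β) (ir k m j) : ℕ) = β j := by
  rw [join_gt α β (show k < ((ir k m j : Fin (k+1+m)) : ℕ) by simp [ir]; omega)]
  congr 1
  simp [ir, Fin.ext_iff]

lemma join_injective : Function.Injective
    (fun p : Perm (Fin k) × Perm (Fin m) => join p.1 p.2) := by
  intro ⟨α, β⟩ ⟨α', β'⟩ h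
  simp only [Prod.mk.injEq]
  constructor
  · ext i
    have h1 := join_il α β i
    have h2 := join_il α' β' i
    rw [show join α β = join α' β' from h] at h1
    omega
  · ext j
    have h1 := join_ir α β j
    have h2 := join_ir α' β' j
    rw [show join α β = join α' β' from h] at h1
    omega

/-! position comparison lemmas -/
@[simp] lemma il_val {i : Fin k} : ((il k m i : Fin (k+1+m)) : ℕ) = i := rfl
@[simp] lemma imid_val : ((imid k m : Fin (k+1+m)) : ℕ) = k := rfl
@[simp] lemma ir_val {j : Fin m} : ((ir k m j : Fin (k+1+m)) : ℕ) = k+1+j := rfl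

@[simp] lemma il_lt_il {i i' : Fin k} : il k m i < il k m i' ↔ i < i' := by
  simp only [Fin.lt_def, il_val]
@[simp] lemma il_lt_imid {i : Fin k} : il k m i < imid k m := by
  simp only [Fin.lt_def, il_val, imid_val]; exact i.isLt
@[simp] lemma not_imid_lt_il {i : Fin k} : ¬ (imid k m < il k m i) := by
  simp only [Fin.lt_def, il_val, imid_val]; have := i.isLt; omega
@[simp] lemma il_lt_ir {i : Fin k} {j : Fin m} : il k m i < ir k m j := by
  simp only [Fin.lt_def, il_val, ir_val]; have := i.isLt; omega
@[simp] lemma not_ir_lt_il {i : Fin k} {j : Fin m} : ¬ (ir k m j < il k m i) := by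
  simp only [Fin.lt_def, il_val, ir_val]; have := i.isLt; omega
@[simp] lemma imid_lt_ir {j : Fin m} : imid k m < ir k m j := by
  simp only [Fin.lt_def, imid_val, ir_val]; omega
@[simp] lemma not_ir_lt_imid {j : Fin m} : ¬ (ir k m j < imid k m) := by
  simp only [Fin.lt_def, imid_val, ir_val]; omega
@[simp] lemma ir_lt_ir {j j' : Fin m} : ir k m j < ir k m j' ↔ j < j' := by
  simp only [Fin.lt_def, ir_val]; omega
@[simp] lemma not_imid_lt_imid : ¬ (imid k m < imid k m) := lt_irrefl _
@[simp] lemma not_il_lt_il_self {i : Fin k} : ¬ (il k m i < il k m i) := lt_irrefl _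

/-! value comparison lemmas for join -/
variable {α : Perm (Fin k)} {β : Perm (Fin m)}

@[simp] lemma jll {i i' : Fin k} : join α β (il k m i) < join α β (il k m i') ↔ α i < α i' := by
  simp only [Fin.lt_def, join_il]; omega
@[simp] lemma jlm {i : Fin k} : join α β (il k m i) < join α β (imid k m) := by
  simp only [Fin.lt_def, join_il, join_imid]; have := (α i).isLt; omega
@[simp] lemma not_jml {i : Fin k} : ¬ (join α β (imid k m) < join α β (il k m i)) := by
  simp only [Fin.lt_def, join_il, join_imid]; have := (α i).isLt; omega
@[simp] lemma not_jlr {i : Fin k} {j : Fin m} :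
    ¬ (join α β (il k m i) < join α β (ir k m j)) := by
  simp only [Fin.lt_def, join_il, join_ir]; have := (β j).isLt; omega
@[simp] lemma jrl {i : Fin k} {j : Fin m} : join α β (ir k m j) < join α β (il k m i) := by
  simp only [Fin.lt_def, join_il, join_ir]; have := (β j).isLt; omega
@[simp] lemma not_jmr {j : Fin m} : ¬ (join α β (imid k m) < join α β (ir k m j)) := by
  simp only [Fin.lt_def, join_imid, join_ir]; have := (β j).isLt; omega
@[simp] lemma jrm {j : Fin m} : join α β (ir k m j) < join α β (imid k m) := by
  simp only [Fin.lt_def, join_imid, join_ir]; have := (β j).isLt; omega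
@[simp] lemma jrr {j j' : Fin m} : join α β (ir k m j) < join α β (ir k m j') ↔ β j < β j' := by
  simp only [Fin.lt_def, join_ir]
@[simp] lemma not_j_self {x : Fin (k+1+m)} : ¬ (join α β x < join α β x) := lt_irrefl _

lemma count12_join (α : Perm (Fin k)) (β : Perm (Fin m)) :
    count12 (join α β) = count12 α + count12 β + k := by
  simp only [count12, Finset.card_filter, Fintype.sum_prod_type]
  simp only [sum_split]
  simp
  rw [Finset.sum_add_distrib, Finset.sum_const, smul_eq_mul, mul_one, Finset.card_univ,
    Fintype.card_fin]
  ring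

lemma count123_join (α : Perm (Fin k)) (β : Perm (Fin m)) :
    count123 (join α β) = count123 α + count123 β + count12 α := by
  simp only [count123, count12, Finset.card_filter, Fintype.sum_prod_type]
  simp only [sum_split]
  simp
  simp only [Finset.sum_add_distrib, ← Finset.card_filter]
  ring

lemma count132_join (α : Perm (Fin k)) (β : Perm (Fin m)) :
    count132 (join α β) = count132 α + count132 β := by
  simp only [count132, Finset.card_filter, Fintype.sum_prod_type]
  simp only [sum_split]
  simp


def cl (k m : ℕ) (i : Fin k) : Fin (k+2+m) := ⟨i, by omega⟩
def ca (k m : ℕ) : Fin (k+2+m) := ⟨k, by omega⟩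
def cM (k m : ℕ) : Fin (k+2+m) := ⟨k+1, by omega⟩
def cr (k m : ℕ) (j : Fin m) : Fin (k+2+m) := ⟨k+2+j, by omega⟩

lemma sum_split4 {M : Type*} [AddCommMonoid M] (f : Fin (k+2+m) → M) :
    ∑ i, f i = (((∑ i : Fin k, f (cl k m i)) + f (ca k m)) + f (cM k m)) + ∑ j : Fin m, f (cr k m j) := by
  rw [Fin.sum_univ_add (f := f), Fin.sum_univ_castSucc, Fin.sum_univ_castSucc]
  congr 1

/-- value of the `R` part: `b` if `b < m-1`, `m` if `b = m-1` -/
def rv (m : ℕ) (b : Fin m) : ℕ := if (b : ℕ) = m - 1 then m else b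

lemma rv_lt_iff {b b' : Fin m} : rv m b < rv m b' ↔ b < b' := by
  have hb := b.isLt; have hb' := b'.isLt
  simp only [rv, Fin.lt_def]
  split <;> split <;> omega

lemma rv_le (b : Fin m) : rv m b ≤ m := by have := b.isLt; simp only [rv]; split <;> omega

lemma rv_ne (b : Fin m) : rv m b ≠ m - 1 := by have := b.isLt; simp only [rv]; split <;> omega

lemma rv_eq_m_iff (b : Fin m) : rv m b = m ↔ (b : ℕ) = m - 1 := by
  have := b.isLt; simp only [rv]; split <;> omega

def joinCF (α : Perm (Fin k)) (β : Perm (Fin m)) : Fin (k+2+m) → Fin (k+2+m) :=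
  fun x => if h : (x : ℕ) < k then ⟨m + 1 + (α ⟨x, h⟩ : ℕ), by have := (α ⟨x, h⟩).isLt; omega⟩
    else if h2 : (x : ℕ) = k then ⟨m - 1, by omega⟩
    else if h3 : (x : ℕ) = k + 1 then ⟨k + m + 1, by omega⟩
    else ⟨rv m (β ⟨(x : ℕ) - (k+2), by omega⟩), by have := rv_le (β ⟨(x:ℕ)-(k+2), by omega⟩); omega⟩

lemma joinCF_lt (α : Perm (Fin k)) (β : Perm (Fin m)) {x : Fin (k+2+m)} (h : (x:ℕ) < k) :
    (joinCF α β x : ℕ) = m + 1 + α ⟨x, h⟩ := by simp [joinCF, h]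

lemma joinCF_eqk (α : Perm (Fin k)) (β : Perm (Fin m)) {x : Fin (k+2+m)} (h : (x:ℕ) = k) :
    (joinCF α β x : ℕ) = m - 1 := by
  have h1 : ¬ ((x:ℕ) < k) := by omega
  simp [joinCF, h1, h]

lemma joinCF_eqk1 (α : Perm (Fin k)) (β : Perm (Fin m)) {x : Fin (k+2+m)} (h : (x:ℕ) = k+1) :
    (joinCF α β x : ℕ) = k + m + 1 := by
  have h1 : ¬ ((x:ℕ) < k) := by omega
  have h2 : ¬ ((x:ℕ) = k) := by omega
  simp [joinCF, h1, h2, h]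

lemma joinCF_gt (α : Perm (Fin k)) (β : Perm (Fin m)) {x : Fin (k+2+m)} (h : k+1 < (x:ℕ)) :
    (joinCF α β x : ℕ) = rv m (β ⟨(x:ℕ) - (k+2), by omega⟩) := by
  have h1 : ¬ ((x:ℕ) < k) := by omega
  have h2 : ¬ ((x:ℕ) = k) := by omega
  have h3 : ¬ ((x:ℕ) = k+1) := by omega
  simp [joinCF, h1, h2, h3]

lemma rv_inj {b b' : Fin m} (h : rv m b = rv m b') : b = b' := by
  have hb := b.isLt; have hb' := b'.isLt
  simp only [rv] at h
  refine Fin.ext ?_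
  split at h <;> split at h <;> omega

lemma joinCF_inj (α : Perm (Fin k)) (β : Perm (Fin m)) : Function.Injective (joinCF α β) := by
  intro x y hxy
  have hxy' : (joinCF α β x : ℕ) = (joinCF α β y : ℕ) := by rw [hxy]
  have hx := x.isLt
  have hy := y.isLt
  have rcx : (x:ℕ) < k ∨ (x:ℕ) = k ∨ (x:ℕ) = k+1 ∨ k+1 < (x:ℕ) := by omega
  have rcy : (y:ℕ) < k ∨ (y:ℕ) = k ∨ (y:ℕ) = k+1 ∨ k+1 < (y:ℕ) := by omega
  refine Fin.ext ?_
  rcases rcx with hxk | hxk | hxk | hxk <;> rcases rcy with hyk | hyk | hyk | hyk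
  · rw [joinCF_lt α β hxk, joinCF_lt α β hyk] at hxy'
    have : α ⟨x, hxk⟩ = α ⟨y, hyk⟩ := Fin.ext (by omega)
    have := α.injective this
    simpa [Fin.ext_iff] using this
  · rw [joinCF_lt α β hxk, joinCF_eqk α β hyk] at hxy'; omega
  · rw [joinCF_lt α β hxk, joinCF_eqk1 α β hyk] at hxy'
    have := (α ⟨x, hxk⟩).isLt; omega
  · rw [joinCF_lt α β hxk, joinCF_gt α β hyk] at hxy'
    have := rv_le (β ⟨(y:ℕ)-(k+2), by omega⟩); omega
  · rw [joinCF_eqk α β hxk, joinCF_lt α β hyk] at hxy'; omega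
  · omega
  · rw [joinCF_eqk α β hxk, joinCF_eqk1 α β hyk] at hxy'; omega
  · rw [joinCF_eqk α β hxk, joinCF_gt α β hyk] at hxy'
    have := rv_ne (β ⟨(y:ℕ)-(k+2), by omega⟩); omega
  · rw [joinCF_eqk1 α β hxk, joinCF_lt α β hyk] at hxy'
    have := (α ⟨y, hyk⟩).isLt; omega
  · rw [joinCF_eqk1 α β hxk, joinCF_eqk α β hyk] at hxy'; omega
  · omega
  · rw [joinCF_eqk1 α β hxk, joinCF_gt α β hyk] at hxy'
    have := rv_le (β ⟨(y:ℕ)-(k+2), by omega⟩); omega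
  · rw [joinCF_gt α β hxk, joinCF_lt α β hyk] at hxy'
    have := rv_le (β ⟨(x:ℕ)-(k+2), by omega⟩); omega
  · rw [joinCF_gt α β hxk, joinCF_eqk α β hyk] at hxy'
    have := rv_ne (β ⟨(x:ℕ)-(k+2), by omega⟩); omega
  · rw [joinCF_gt α β hxk, joinCF_eqk1 α β hyk] at hxy'
    have := rv_le (β ⟨(x:ℕ)-(k+2), by omega⟩); omega
  · rw [joinCF_gt α β hxk, joinCF_gt α β hyk] at hxy'
    have : β ⟨(x:ℕ)-(k+2), by omega⟩ = β ⟨(y:ℕ)-(k+2), by omega⟩ := rv_inj hxy'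
    have := β.injective this
    simp [Fin.ext_iff] at this; omega

noncomputable def joinC (α : Perm (Fin k)) (β : Perm (Fin m)) : Perm (Fin (k+2+m)) :=
  Equiv.ofBijective _ (Finite.injective_iff_bijective.mp (joinCF_inj α β))

lemma joinC_lt (α : Perm (Fin k)) (β : Perm (Fin m)) {x : Fin (k+2+m)} (h : (x:ℕ) < k) :
    ((joinC α β) x : ℕ) = m + 1 + α ⟨x, h⟩ := joinCF_lt α β h
lemma joinC_eqk (α : Perm (Fin k)) (β : Perm (Fin m)) {x : Fin (k+2+m)} (h : (x:ℕ) = k) :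
    ((joinC α β) x : ℕ) = m - 1 := joinCF_eqk α β h
lemma joinC_eqk1 (α : Perm (Fin k)) (β : Perm (Fin m)) {x : Fin (k+2+m)} (h : (x:ℕ) = k+1) :
    ((joinC α β) x : ℕ) = k + m + 1 := joinCF_eqk1 α β h
lemma joinC_gt (α : Perm (Fin k)) (β : Perm (Fin m)) {x : Fin (k+2+m)} (h : k+1 < (x:ℕ)) :
    ((joinC α β) x : ℕ) = rv m (β ⟨(x:ℕ) - (k+2), by omega⟩) := joinCF_gt α β h

lemma joinC_cl (α : Perm (Fin k)) (β : Perm (Fin m)) (i : Fin k) :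
    ((joinC α β) (cl k m i) : ℕ) = m + 1 + α i := by
  rw [joinC_lt α β (show ((cl k m i : Fin (k+2+m)) : ℕ) < k from i.isLt)]; congr 1

lemma joinC_ca (α : Perm (Fin k)) (β : Perm (Fin m)) :
    ((joinC α β) (ca k m) : ℕ) = m - 1 := joinC_eqk α β rfl

lemma joinC_cM (α : Perm (Fin k)) (β : Perm (Fin m)) :
    ((joinC α β) (cM k m) : ℕ) = k + m + 1 := joinC_eqk1 α β rfl

lemma joinC_cr (α : Perm (Fin k)) (β : Perm (Fin m)) (j : Fin m) :
    ((joinC α β) (cr k m j) : ℕ) = rv m (β j) := by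
  rw [joinC_gt α β (show k+1 < ((cr k m j : Fin (k+2+m)) : ℕ) by simp [cr]; omega)]
  congr 2
  simp [cr, Fin.ext_iff]

lemma joinC_injective : Function.Injective
    (fun p : Perm (Fin k) × Perm (Fin m) => joinC p.1 p.2) := by
  intro ⟨α, β⟩ ⟨α', β'⟩ h
  simp only [Prod.mk.injEq]
  constructor
  · ext i
    have h1 := joinC_cl α β i
    have h2 := joinC_cl α' β' i
    rw [show joinC α β = joinC α' β' from h] at h1
    omega
  · ext j
    have h1 := joinC_cr α β j
    have h2 := joinC_cr α' β' j
    rw [show joinC α β = joinC α' β' from h] at h1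
    have : β j = β' j := rv_inj (by omega)
    rw [this]

/-! position comparison lemmas for the 4-block split -/
@[simp] lemma cl_val {i : Fin k} : ((cl k m i : Fin (k+2+m)) : ℕ) = i := rfl
@[simp] lemma ca_val : ((ca k m : Fin (k+2+m)) : ℕ) = k := rfl
@[simp] lemma cM_val : ((cM k m : Fin (k+2+m)) : ℕ) = k+1 := rfl
@[simp] lemma cr_val {j : Fin m} : ((cr k m j : Fin (k+2+m)) : ℕ) = k+2+j := rfl

@[simp] lemma cl_lt_cl {i i' : Fin k} : cl k m i < cl k m i' ↔ i < i' := by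
  simp only [Fin.lt_def, cl_val]
@[simp] lemma cl_lt_ca {i : Fin k} : cl k m i < ca k m := by
  simp only [Fin.lt_def, cl_val, ca_val]; exact i.isLt
@[simp] lemma not_ca_lt_cl {i : Fin k} : ¬ (ca k m < cl k m i) := by
  simp only [Fin.lt_def, cl_val, ca_val]; have := i.isLt; omega
@[simp] lemma cl_lt_cM {i : Fin k} : cl k m i < cM k m := by
  simp only [Fin.lt_def, cl_val, cM_val]; have := i.isLt; omega
@[simp] lemma not_cM_lt_cl {i : Fin k} : ¬ (cM k m < cl k m i) := by
  simp only [Fin.lt_def, cl_val, cM_val]; have := i.isLt; omega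
@[simp] lemma cl_lt_cr {i : Fin k} {j : Fin m} : cl k m i < cr k m j := by
  simp only [Fin.lt_def, cl_val, cr_val]; have := i.isLt; omega
@[simp] lemma not_cr_lt_cl {i : Fin k} {j : Fin m} : ¬ (cr k m j < cl k m i) := by
  simp only [Fin.lt_def, cl_val, cr_val]; have := i.isLt; omega
@[simp] lemma ca_lt_cM : ca k m < cM k m := by
  simp only [Fin.lt_def, ca_val, cM_val]; omega
@[simp] lemma not_cM_lt_ca : ¬ (cM k m < ca k m) := by
  simp only [Fin.lt_def, ca_val, cM_val]; omega
@[simp] lemma ca_lt_cr {j : Fin m} : ca k m < cr k m j := by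
  simp only [Fin.lt_def, ca_val, cr_val]; omega
@[simp] lemma not_cr_lt_ca {j : Fin m} : ¬ (cr k m j < ca k m) := by
  simp only [Fin.lt_def, ca_val, cr_val]; omega
@[simp] lemma cM_lt_cr {j : Fin m} : cM k m < cr k m j := by
  simp only [Fin.lt_def, cM_val, cr_val]; omega
@[simp] lemma not_cr_lt_cM {j : Fin m} : ¬ (cr k m j < cM k m) := by
  simp only [Fin.lt_def, cM_val, cr_val]; omega
@[simp] lemma cr_lt_cr {j j' : Fin m} : cr k m j < cr k m j' ↔ j < j' := by
  simp only [Fin.lt_def, cr_val]; omega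
@[simp] lemma not_ca_lt_ca : ¬ (ca k m < ca k m) := lt_irrefl _
@[simp] lemma not_cM_lt_cM : ¬ (cM k m < cM k m) := lt_irrefl _
@[simp] lemma not_cl_lt_cl_self {i : Fin k} : ¬ (cl k m i < cl k m i) := lt_irrefl _

/-! value comparison lemmas for joinC -/
variable {α : Perm (Fin k)} {β : Perm (Fin m)}

@[simp] lemma cll {i i' : Fin k} : joinC α β (cl k m i) < joinC α β (cl k m i') ↔ α i < α i' := by
  simp only [Fin.lt_def, joinC_cl]; omega
@[simp] lemma not_cla {i : Fin k} : ¬ (joinC α β (cl k m i) < joinC α β (ca k m)) := by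
  simp only [Fin.lt_def, joinC_cl, joinC_ca]; omega
@[simp] lemma cal {i : Fin k} : joinC α β (ca k m) < joinC α β (cl k m i) := by
  simp only [Fin.lt_def, joinC_cl, joinC_ca]; omega
@[simp] lemma clM {i : Fin k} : joinC α β (cl k m i) < joinC α β (cM k m) := by
  simp only [Fin.lt_def, joinC_cl, joinC_cM]; have := (α i).isLt; omega
@[simp] lemma not_cMl {i : Fin k} : ¬ (joinC α β (cM k m) < joinC α β (cl k m i)) := by
  simp only [Fin.lt_def, joinC_cl, joinC_cM]; have := (α i).isLt; omega
@[simp] lemma not_clr {i : Fin k} {j : Fin m} :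
    ¬ (joinC α β (cl k m i) < joinC α β (cr k m j)) := by
  simp only [Fin.lt_def, joinC_cl, joinC_cr]; have := rv_le (β j); omega
@[simp] lemma crl {i : Fin k} {j : Fin m} :
    joinC α β (cr k m j) < joinC α β (cl k m i) := by
  simp only [Fin.lt_def, joinC_cl, joinC_cr]; have := rv_le (β j); omega
@[simp] lemma caM : joinC α β (ca k m) < joinC α β (cM k m) := by
  simp only [Fin.lt_def, joinC_ca, joinC_cM]; omega
@[simp] lemma not_cMa : ¬ (joinC α β (cM k m) < joinC α β (ca k m)) := by
  simp only [Fin.lt_def, joinC_ca, joinC_cM]; omega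
@[simp] lemma car {j : Fin m} :
    joinC α β (ca k m) < joinC α β (cr k m j) ↔ (β j : ℕ) = m - 1 := by
  simp only [Fin.lt_def, joinC_ca, joinC_cr]
  have h1 := rv_le (β j); have h2 := rv_ne (β j)
  have h3 := rv_eq_m_iff (β j); have h4 := (β j).isLt
  constructor
  · intro h; have : rv m (β j) = m := by omega
    exact h3.mp this
  · intro h; have : rv m (β j) = m := h3.mpr h; omega
@[simp] lemma cra {j : Fin m} :
    joinC α β (cr k m j) < joinC α β (ca k m) ↔ ¬ ((β j : ℕ) = m - 1) := by
  simp only [Fin.lt_def, joinC_ca, joinC_cr]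
  have h1 := rv_le (β j); have h2 := rv_ne (β j)
  have h3 := rv_eq_m_iff (β j); have h4 := (β j).isLt
  constructor
  · intro h hc; have : rv m (β j) = m := h3.mpr hc; omega
  · intro h
    have : rv m (β j) ≠ m := fun hc => h (h3.mp hc)
    simp only [rv] at *
    split at this <;> omega
@[simp] lemma not_cMr {j : Fin m} : ¬ (joinC α β (cM k m) < joinC α β (cr k m j)) := by
  simp only [Fin.lt_def, joinC_cM, joinC_cr]; have := rv_le (β j); omega
@[simp] lemma crM {j : Fin m} : joinC α β (cr k m j) < joinC α β (cM k m) := by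
  simp only [Fin.lt_def, joinC_cM, joinC_cr]; have := rv_le (β j); omega
@[simp] lemma crr {j j' : Fin m} :
    joinC α β (cr k m j) < joinC α β (cr k m j') ↔ β j < β j' := by
  simp only [Fin.lt_def, joinC_cr]; exact rv_lt_iff
@[simp] lemma not_cj_self {x : Fin (k+2+m)} : ¬ (joinC α β x < joinC α β x) := lt_irrefl _

lemma sum_ite_topval (hm : 1 ≤ m) (β : Perm (Fin m)) :
    (∑ j : Fin m, if (β j : ℕ) = m - 1 then 1 else 0) = 1 := by
  have : ∀ j : Fin m, ((β j : ℕ) = m - 1) ↔ j = β.symm ⟨m-1, by omega⟩ := by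
    intro j
    constructor
    · intro h
      have h2 : β j = ⟨m-1, by omega⟩ := Fin.ext h
      simpa using congrArg β.symm h2
    · intro h; rw [h]; simp
  simp only [this]
  rw [Finset.sum_ite_eq' Finset.univ (β.symm ⟨m-1, by omega⟩) (fun _ => 1)]
  simp

lemma card_top (hm : 1 ≤ m) (β : Perm (Fin m)) :
    (Finset.univ.filter (fun x : Fin m => (β x : ℕ) = m - 1)).card = 1 := by
  rw [Finset.card_filter]; exact sum_ite_topval hm β

lemma bad1 (β : Perm (Fin m)) (x : Fin m) :
    (Finset.univ.filter (fun y : Fin m => x < y ∧ (β x : ℕ) = m - 1 ∧ β x < β y)).card = 0 := by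
  rw [Finset.card_eq_zero, Finset.filter_eq_empty_iff]
  rintro y - ⟨h1, h2, h3⟩
  have := (β y).isLt
  rw [Fin.lt_def] at h3
  omega

lemma bad2 (β : Perm (Fin m)) (x : Fin m) :
    (Finset.univ.filter (fun y : Fin m => x < y ∧ (β y : ℕ) = m - 1 ∧ β y < β x)).card = 0 := by
  rw [Finset.card_eq_zero, Finset.filter_eq_empty_iff]
  rintro y - ⟨h1, h2, h3⟩
  have := (β x).isLt
  rw [Fin.lt_def] at h3
  omega

lemma count12_joinC (hm : 1 ≤ m) (α : Perm (Fin k)) (β : Perm (Fin m)) :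
    count12 (joinC α β) = count12 α + count12 β + k + 2 := by
  simp only [count12, Finset.card_filter, Fintype.sum_prod_type]
  simp only [sum_split4]
  simp
  rw [card_top hm β, Finset.sum_add_distrib, Finset.sum_const, smul_eq_mul, mul_one,
    Finset.card_univ, Fintype.card_fin]
  ring

lemma count123_joinC (hm : 1 ≤ m) (α : Perm (Fin k)) (β : Perm (Fin m)) :
    count123 (joinC α β) = count123 α + count123 β + count12 α := by
  simp only [count123, count12, Finset.card_filter, Fintype.sum_prod_type]
  simp only [sum_split4]
  simp
  simp only [bad1 β, Finset.sum_const_zero, add_zero]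
  simp only [Finset.sum_add_distrib, ← Finset.card_filter]
  ring

lemma count132_joinC (hm : 1 ≤ m) (α : Perm (Fin k)) (β : Perm (Fin m)) :
    count132 (joinC α β) = count132 α + count132 β + 1 := by
  simp only [count132, Finset.card_filter, Fintype.sum_prod_type]
  simp only [sum_split4]
  simp
  simp only [bad2 β, Finset.sum_const_zero, add_zero]
  rw [card_top hm β]
  ring


/-- position of the maximum -/
noncomputable def pm {n : ℕ} (σ : Perm (Fin n)) : ℕ :=
  if h : 0 < n then ((σ.symm ⟨n-1, by omega⟩ : Fin n) : ℕ) else 0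

def PC {n : ℕ} (σ : Perm (Fin n)) : Prop :=
  ∃ i j : Fin n, (i : ℕ) < pm σ ∧ pm σ < (j : ℕ) ∧ σ i < σ j

def PA {n : ℕ} (σ : Perm (Fin n)) : Prop :=
  ∃ x y z : Fin n, x < y ∧ y < z ∧ (z : ℕ) < pm σ ∧ σ x < σ z ∧ σ z < σ y

@[simp] lemma val_mk' {n a : ℕ} (h : a < n) : ((⟨a, h⟩ : Fin n) : ℕ) = a := rfl

lemma pm_lt {n : ℕ} (h : 0 < n) (σ : Perm (Fin n)) : pm σ < n := by
  unfold pm; rw [dif_pos h]; exact (σ.symm _).isLt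

lemma apply_pm {n : ℕ} (h : 0 < n) (σ : Perm (Fin n)) :
    σ ⟨pm σ, pm_lt h σ⟩ = ⟨n-1, by omega⟩ := by
  have h2 : (⟨pm σ, pm_lt h σ⟩ : Fin n) = σ.symm ⟨n-1, by omega⟩ := by
    apply Fin.ext
    show pm σ = ((σ.symm ⟨n-1, by omega⟩ : Fin n) : ℕ)
    unfold pm; rw [dif_pos h]
  rw [h2, Equiv.apply_symm_apply]

lemma pm_eq_of {n : ℕ} (σ : Perm (Fin n)) (p : Fin n) (hp : (σ p : ℕ) = n - 1) :
    pm σ = p := by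
  have h : 0 < n := p.pos
  have : σ p = ⟨n-1, by omega⟩ := Fin.ext hp
  rw [pm, dif_pos h, ← this, Equiv.symm_apply_apply]


section JoinStruct
variable {k m : ℕ}

lemma pm_join (α : Perm (Fin k)) (β : Perm (Fin m)) : pm (join α β) = k := by
  apply pm_eq_of (join α β) (imid k m)
  rw [join_imid]; omega

lemma not_PC_join (α : Perm (Fin k)) (β : Perm (Fin m)) : ¬ PC (join α β) := by
  rintro ⟨i, j, hi, hj, hlt⟩
  rw [pm_join] at hi hj
  rw [Fin.lt_def, join_lt α β hi, join_gt α β hj] at hlt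
  have := (β ⟨(j:ℕ)-(k+1), by omega⟩).isLt
  omega

lemma mem_c132_filter {n : ℕ} {σ : Perm (Fin n)} {x y z : Fin n}
    (h1 : x < y) (h2 : y < z) (h3 : σ x < σ z) (h4 : σ z < σ y) :
    (x, y, z) ∈ Finset.univ.filter (fun p : Fin n × Fin n × Fin n =>
      p.1 < p.2.1 ∧ p.2.1 < p.2.2 ∧ σ p.1 < σ p.2.2 ∧ σ p.2.2 < σ p.2.1) := by
  simp only [Finset.mem_filter, Finset.mem_univ, true_and]
  exact ⟨h1, h2, h3, h4⟩

lemma PA_join_iff (α : Perm (Fin k)) (β : Perm (Fin m)) :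
    PA (join α β) ↔ count132 α ≠ 0 := by
  constructor
  · rintro ⟨x, y, z, h1, h2, h3, h4, h5⟩
    rw [pm_join] at h3
    have hy : (y : ℕ) < k := lt_trans (by exact_mod_cast h2) h3
    have hx : (x : ℕ) < k := lt_trans (by exact_mod_cast h1) hy
    have ex : x = il k m ⟨x, hx⟩ := Fin.ext rfl
    have ey : y = il k m ⟨y, hy⟩ := Fin.ext rfl
    have ez : z = il k m ⟨z, h3⟩ := Fin.ext rfl
    rw [ex, ey] at h1
    rw [ey, ez] at h2
    rw [ex, ez] at h4
    rw [ez, ey] at h5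
    rw [il_lt_il] at h1 h2
    rw [jll] at h4 h5
    intro hc
    have hmem := mem_c132_filter (σ := α) h1 h2 h4 h5
    rw [count132] at hc
    rw [Finset.card_eq_zero] at hc
    rw [hc] at hmem
    exact absurd hmem (Finset.notMem_empty _)
  · intro hc
    rw [count132, ← Nat.pos_iff_ne_zero, Finset.card_pos] at hc
    obtain ⟨⟨x, y, z⟩, hmem⟩ := hc
    simp only [Finset.mem_filter, Finset.mem_univ, true_and] at hmem
    obtain ⟨h1, h2, h3, h4⟩ := hmem
    exact ⟨il k m x, il k m y, il k m z, il_lt_il.mpr h1, il_lt_il.mpr h2,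
      by rw [pm_join]; exact z.isLt, jll.mpr h3, jll.mpr h4⟩

lemma exists_join (σ : Perm (Fin (k+1+m))) (hpm : pm σ = k) (hnc : ¬ PC σ) :
    ∃ (α : Perm (Fin k)) (β : Perm (Fin m)), σ = join α β := by
  have hn : 0 < k+1+m := by omega
  simp only [PC, not_exists, not_and, not_lt] at hnc
  rw [hpm] at hnc
  have hdesc : ∀ i j : Fin (k+1+m), (i:ℕ) < k → k < (j:ℕ) → σ j < σ i := by
    intro i j hi hj
    have hle := hnc i j hi hj
    refine lt_of_le_of_ne hle (fun hc => ?_)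
    have := σ.injective hc
    rw [Fin.ext_iff] at this
    omega
  have hmid : σ ⟨k, by omega⟩ = ⟨k+m, by omega⟩ := by
    have := apply_pm hn σ
    have e : (⟨pm σ, pm_lt hn σ⟩ : Fin (k+1+m)) = ⟨k, by omega⟩ := Fin.ext hpm
    rw [e] at this
    rw [this]
    exact Fin.ext (by show k+1+m-1 = k+m; omega)
  have hR : ∀ x : Fin (k+1+m), k < (x:ℕ) → (σ x : ℕ) < m := by
    intro x hx
    have hcard := Finset.card_le_card_of_injOn (f := σ)
      (s := Finset.Iic (⟨k, by omega⟩ : Fin (k+1+m))) (t := Finset.Ioi (σ x)) ?_ ?_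
    · rw [Fin.card_Iic, Fin.card_Ioi] at hcard
      simp only [val_mk'] at hcard
      have := x.isLt
      omega
    · intro y hy
      rw [Finset.mem_coe, Finset.mem_Iic, Fin.le_def] at hy
      simp only [val_mk'] at hy
      rw [Finset.mem_coe, Finset.mem_Ioi]
      rcases lt_or_eq_of_le hy with hy' | hy'
      · exact hdesc y x hy' hx
      · have : y = (⟨k, by omega⟩ : Fin (k+1+m)) := Fin.ext hy'
        rw [this, hmid]
        have hne : σ x ≠ ⟨k+m, by omega⟩ := by
          intro hc
          have : x = (⟨k, by omega⟩ : Fin (k+1+m)) := σ.injective (by rw [hc, hmid])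
          rw [Fin.ext_iff] at this
          omega
        rw [Fin.lt_def]
        show (σ x : ℕ) < k+m
        have := x.isLt
        have h2 : (σ x : ℕ) ≠ k+m := fun hc => hne (Fin.ext hc)
        have := (σ x).isLt
        omega
    · intro a _ b _ hab
      exact σ.injective hab
  have hL : ∀ x : Fin (k+1+m), (x:ℕ) < k → m ≤ (σ x : ℕ) := by
    intro x hx
    have hcard := Finset.card_le_card_of_injOn (f := σ)
      (s := Finset.Ioi (⟨k, by omega⟩ : Fin (k+1+m))) (t := Finset.Iio (σ x)) ?_ ?_
    · rw [Fin.card_Ioi, Fin.card_Iio] at hcard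
      simp only [val_mk'] at hcard
      omega
    · intro y hy
      rw [Finset.mem_coe, Finset.mem_Ioi, Fin.lt_def] at hy
      simp only [val_mk'] at hy
      rw [Finset.mem_coe, Finset.mem_Iio]
      exact hdesc x y hx hy
    · intro a _ b _ hab
      exact σ.injective hab
  have hvL : ∀ i : Fin k, m ≤ (σ (il k m i) : ℕ) ∧ (σ (il k m i) : ℕ) < k + m := by
    intro i
    refine ⟨hL _ i.isLt, ?_⟩
    have h1 := (σ (il k m i)).isLt
    have hne : (σ (il k m i) : ℕ) ≠ k + m := by
      intro hc
      have : σ (il k m i) = σ ⟨k, by omega⟩ := by rw [hmid]; exact Fin.ext hc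
      have := σ.injective this
      rw [Fin.ext_iff] at this
      simp only [il_val] at this
      have := i.isLt
      omega
    omega
  set f : Fin k → Fin k := fun i => ⟨(σ (il k m i) : ℕ) - m, by have := hvL i; omega⟩ with hf
  have hfinj : Function.Injective f := by
    intro i i' h
    rw [Fin.ext_iff] at h
    simp only [hf] at h
    have h1 := hvL i; have h2 := hvL i'
    have : σ (il k m i) = σ (il k m i') := Fin.ext (by omega)
    have := σ.injective this
    rw [Fin.ext_iff] at this
    exact Fin.ext (by simpa using this)
  set α : Perm (Fin k) := Equiv.ofBijective f (Finite.injective_iff_bijective.mp hfinj) with hα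
  set g : Fin m → Fin m := fun j =>
    ⟨(σ (ir k m j) : ℕ), hR _ (by simp only [ir_val]; omega)⟩ with hg
  have hginj : Function.Injective g := by
    intro j j' h
    rw [Fin.ext_iff] at h
    simp only [hg] at h
    have : σ (ir k m j) = σ (ir k m j') := Fin.ext h
    have := σ.injective this
    rw [Fin.ext_iff] at this
    simp only [ir_val] at this
    exact Fin.ext (by omega)
  set β : Perm (Fin m) := Equiv.ofBijective g (Finite.injective_iff_bijective.mp hginj) with hβ
  refine ⟨α, β, ?_⟩
  apply Equiv.ext
  intro x
  apply Fin.ext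
  rcases lt_trichotomy (x:ℕ) k with hx | hx | hx
  · have ex : x = il k m ⟨x, hx⟩ := Fin.ext rfl
    rw [ex, join_il]
    have : (α ⟨x, hx⟩ : ℕ) = (σ (il k m ⟨x, hx⟩) : ℕ) - m := rfl
    rw [this]
    have := hvL ⟨x, hx⟩
    omega
  · have ex : x = (⟨k, by omega⟩ : Fin (k+1+m)) := Fin.ext hx
    rw [ex, hmid, join_eq _ _ (by simp)]
  · rw [join_gt _ _ hx]
    have : (β ⟨(x:ℕ)-(k+1), by omega⟩ : ℕ) = (σ (ir k m ⟨(x:ℕ)-(k+1), by omega⟩) : ℕ) := rfl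
    rw [this]
    congr 2
    apply Fin.ext
    simp only [ir_val]
    omega

end JoinStruct

section JoinCStruct
variable {k m : ℕ}

lemma pm_joinC (α : Perm (Fin k)) (β : Perm (Fin m)) : pm (joinC α β) = k+1 := by
  apply pm_eq_of (joinC α β) (cM k m)
  rw [joinC_cM]; omega

lemma PC_joinC (hm : 1 ≤ m) (α : Perm (Fin k)) (β : Perm (Fin m)) : PC (joinC α β) := by
  refine ⟨ca k m, cr k m (β.symm ⟨m-1, by omega⟩), ?_, ?_, ?_⟩
  · rw [pm_joinC]; simp only [ca_val]; omega
  · rw [pm_joinC]; simp only [cr_val]; omega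
  · rw [Fin.lt_def, joinC_ca, joinC_cr, Equiv.apply_symm_apply]
    rw [show rv m ⟨m-1, by omega⟩ = m from by simp [rv]]
    omega

set_option maxHeartbeats 1000000 in
lemma exists_joinC (σ : Perm (Fin (k+2+m))) (hm : 1 ≤ m) (h1 : count132 σ = 1)
    (hpc : PC σ) (hpm : pm σ = k+1) :
    ∃ (α : Perm (Fin k)) (β : Perm (Fin m)), σ = joinC α β := by
  have hn : 0 < k+2+m := by omega
  have hmid : σ (cM k m) = ⟨k+m+1, by omega⟩ := by
    have := apply_pm hn σ
    have e : (⟨pm σ, pm_lt hn σ⟩ : Fin (k+2+m)) = cM k m := Fin.ext hpm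
    rw [e] at this
    rw [this]
    exact Fin.ext (by show k+2+m-1 = k+m+1; omega)
  obtain ⟨a, b, ha, hb, hab⟩ := hpc
  rw [hpm] at ha hb
  -- any crossing ascent yields a 132 pattern through the max
  have hcross : ∀ a' b' : Fin (k+2+m), (a':ℕ) < k+1 → k+1 < (b':ℕ) → σ a' < σ b' →
      (a', cM k m, b') ∈ Finset.univ.filter (fun p : Fin (k+2+m) × Fin (k+2+m) × Fin (k+2+m) =>
        p.1 < p.2.1 ∧ p.2.1 < p.2.2 ∧ σ p.1 < σ p.2.2 ∧ σ p.2.2 < σ p.2.1) := by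
    intro a' b' ha' hb' hlt
    apply mem_c132_filter
    · rw [Fin.lt_def]; simpa using ha'
    · rw [Fin.lt_def]; simpa using hb'
    · exact hlt
    · rw [hmid, Fin.lt_def]
      show (σ b' : ℕ) < k+m+1
      have h2 := (σ b').isLt
      have hne : (σ b' : ℕ) ≠ k+m+1 := by
        intro hc
        have : σ b' = σ (cM k m) := by rw [hmid]; exact Fin.ext hc
        have := σ.injective this
        rw [Fin.ext_iff] at this
        simp only [cM_val] at this
        omega
      omega
  have huniq : ∀ a' b' : Fin (k+2+m), (a':ℕ) < k+1 → k+1 < (b':ℕ) → σ a' < σ b' →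
      a' = a ∧ b' = b := by
    intro a' b' ha' hb' hlt
    by_contra hc
    have hne : (a', ((cM k m : Fin (k+2+m)), b')) ≠ (a, ((cM k m : Fin (k+2+m)), b)) := by
      intro he
      rw [Prod.ext_iff, Prod.ext_iff] at he
      exact hc ⟨he.1, he.2.2⟩
    have h2 : 1 < (Finset.univ.filter (fun p : Fin (k+2+m) × Fin (k+2+m) × Fin (k+2+m) =>
        p.1 < p.2.1 ∧ p.2.1 < p.2.2 ∧ σ p.1 < σ p.2.2 ∧ σ p.2.2 < σ p.2.1)).card :=
      Finset.one_lt_card.mpr ⟨_, hcross a' b' ha' hb' hlt, _, hcross a b ha hb hab, hne⟩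
    rw [count132] at h1
    omega
  have vlo : ∀ y : Fin (k+2+m), k+1 < (y:ℕ) → y ≠ b → σ y < σ a := by
    intro y hy hyb
    have hne : σ y ≠ σ a := fun hc => by
      have := σ.injective hc
      rw [this] at hy; omega
    rcases lt_or_gt_of_ne hne with h | h
    · exact h
    · exact absurd ((huniq a y ha hy h).2.symm) (Ne.symm hyb)
  have vhi : ∀ x : Fin (k+2+m), (x:ℕ) < k+1 → x ≠ a → σ b < σ x := by
    intro x hx hxa
    have hne : σ x ≠ σ b := fun hc => by
      have := σ.injective hc
      rw [this] at hx; omega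
    rcases lt_or_gt_of_ne hne with h | h
    · exact absurd ((huniq x b hx hb h).1 ) hxa
    · exact h
  have hbM : b ≠ cM k m := by intro hc; rw [Fin.ext_iff] at hc; simp only [cM_val] at hc; omega
  have haM : a ≠ cM k m := by intro hc; rw [Fin.ext_iff] at hc; simp only [cM_val] at hc; omega
  have hmemb : b ∈ Finset.Ioi (cM k m) := by
    rw [Finset.mem_Ioi, Fin.lt_def]; simpa using hb
  -- value of a is m-1
  have va : (σ a : ℕ) = m - 1 := by
    have hge : m - 1 ≤ (σ a : ℕ) := by
      have hcard := Finset.card_le_card_of_injOn (f := σ)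
        (s := (Finset.Ioi (cM k m)).erase b) (t := Finset.Iio (σ a)) ?_ ?_
      · rw [Finset.card_erase_of_mem hmemb, Fin.card_Ioi, Fin.card_Iio] at hcard
        simp only [cM_val] at hcard
        omega
      · intro y hy
        rw [Finset.mem_coe, Finset.mem_erase, Finset.mem_Ioi, Fin.lt_def] at hy
        simp only [cM_val] at hy
        rw [Finset.mem_coe, Finset.mem_Iio]
        exact vlo y hy.2 hy.1
      · intro p _ q _ hpq; exact σ.injective hpq
    have hle : (σ a : ℕ) ≤ m - 1 := by
      have hcard := Finset.card_le_card_of_injOn (f := σ)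
        (s := insert b ((Finset.Iic (cM k m)).erase a)) (t := Finset.Ioi (σ a)) ?_ ?_
      · rw [Finset.card_insert_of_notMem, Finset.card_erase_of_mem, Fin.card_Iic,
          Fin.card_Ioi] at hcard
        · simp only [cM_val] at hcard
          omega
        · rw [Finset.mem_Iic, Fin.le_def]; simp only [cM_val]; omega
        · rw [Finset.mem_erase, Finset.mem_Iic, Fin.le_def]
          simp only [cM_val]
          rintro ⟨-, hc⟩; omega
      · intro y hy
        rw [Finset.mem_coe, Finset.mem_insert, Finset.mem_erase, Finset.mem_Iic, Fin.le_def] at hy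
        simp only [cM_val] at hy
        rw [Finset.mem_coe, Finset.mem_Ioi]
        rcases hy with rfl | ⟨hya, hy⟩
        · exact hab
        · rcases lt_or_eq_of_le hy with h | h
          · exact lt_trans hab (vhi y h hya)
          · have : y = cM k m := Fin.ext (by simpa using h)
            rw [this, hmid, Fin.lt_def]
            show (σ a : ℕ) < k+m+1
            have hne2 : (σ a : ℕ) ≠ k+m+1 := by
              intro hc
              have : σ a = σ (cM k m) := by rw [hmid]; exact Fin.ext hc
              exact haM (σ.injective this)
            have := (σ a).isLt
            omega
      · intro p _ q _ hpq; exact σ.injective hpq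
    omega
  -- value of b is m
  have vb : (σ b : ℕ) = m := by
    have hge : m ≤ (σ b : ℕ) := by
      have hcard := Finset.card_le_card_of_injOn (f := σ)
        (s := insert a ((Finset.Ioi (cM k m)).erase b)) (t := Finset.Iio (σ b)) ?_ ?_
      · rw [Finset.card_insert_of_notMem, Finset.card_erase_of_mem hmemb, Fin.card_Ioi] at hcard
        · rw [Fin.card_Iio] at hcard
          simp only [cM_val] at hcard
          omega
        · rw [Finset.mem_erase, Finset.mem_Ioi, Fin.lt_def]
          simp only [cM_val]
          rintro ⟨-, hc⟩; omega
      · intro y hy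
        rw [Finset.mem_coe, Finset.mem_insert, Finset.mem_erase, Finset.mem_Ioi, Fin.lt_def] at hy
        simp only [cM_val] at hy
        rw [Finset.mem_coe, Finset.mem_Iio]
        rcases hy with rfl | ⟨hyb, hy⟩
        · exact hab
        · exact lt_trans (vlo y hy hyb) hab
      · intro p _ q _ hpq; exact σ.injective hpq
    have hle : (σ b : ℕ) ≤ m := by
      have hcard := Finset.card_le_card_of_injOn (f := σ)
        (s := (Finset.Iic (cM k m)).erase a) (t := Finset.Ioi (σ b)) ?_ ?_
      · rw [Finset.card_erase_of_mem, Fin.card_Iic, Fin.card_Ioi] at hcard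
        · simp only [cM_val] at hcard
          omega
        · rw [Finset.mem_Iic, Fin.le_def]; simp only [cM_val]; omega
      · intro y hy
        rw [Finset.mem_coe, Finset.mem_erase, Finset.mem_Iic, Fin.le_def] at hy
        simp only [cM_val] at hy
        rw [Finset.mem_coe, Finset.mem_Ioi]
        rcases lt_or_eq_of_le hy.2 with h | h
        · exact vhi y h hy.1
        · have : y = cM k m := Fin.ext (by simpa using h)
          rw [this, hmid, Fin.lt_def]
          show (σ b : ℕ) < k+m+1
          have hne2 : (σ b : ℕ) ≠ k+m+1 := by
            intro hc
            have : σ b = σ (cM k m) := by rw [hmid]; exact Fin.ext hc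
            exact hbM (σ.injective this)
          have := (σ b).isLt
          omega
      · intro p _ q _ hpq; exact σ.injective hpq
    omega
  -- the position of a is exactly k
  have pa : (a : ℕ) = k := by
    by_contra hc
    have ha' : (a : ℕ) < k := by omega
    obtain ⟨i2, hi2v⟩ : ∃ i2 : Fin (k+2+m), (i2:ℕ) = (a:ℕ)+1 := ⟨⟨(a:ℕ)+1, by omega⟩, rfl⟩
    have hi2 : (i2 : ℕ) < k+1 := by omega
    have hi2a : i2 ≠ a := by
      intro he; rw [he] at hi2v; omega
    have hmem2 : (a, i2, b) ∈
        Finset.univ.filter (fun p : Fin (k+2+m) × Fin (k+2+m) × Fin (k+2+m) =>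
        p.1 < p.2.1 ∧ p.2.1 < p.2.2 ∧ σ p.1 < σ p.2.2 ∧ σ p.2.2 < σ p.2.1) := by
      apply mem_c132_filter
      · rw [Fin.lt_def]; omega
      · rw [Fin.lt_def]; omega
      · exact hab
      · exact vhi _ hi2 hi2a
    have hmem1 := hcross a b ha hb hab
    have hne : (a, i2, b) ≠ (a, cM k m, b) := by
      intro he
      have h3 := congrArg (fun p : Fin (k+2+m) × Fin (k+2+m) × Fin (k+2+m) => (p.2.1 : ℕ)) he
      simp only [cM_val] at h3
      omega
    have h2 : 1 < (Finset.univ.filter (fun p : Fin (k+2+m) × Fin (k+2+m) × Fin (k+2+m) =>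
        p.1 < p.2.1 ∧ p.2.1 < p.2.2 ∧ σ p.1 < σ p.2.2 ∧ σ p.2.2 < σ p.2.1)).card :=
      Finset.one_lt_card.mpr ⟨_, hmem2, _, hmem1, hne⟩
    rw [count132] at h1
    omega
  -- values on the left block
  have hvL : ∀ i : Fin k, m+1 ≤ (σ (cl k m i) : ℕ) ∧ (σ (cl k m i) : ℕ) ≤ k+m := by
    intro i
    have hne : cl k m i ≠ a := by
      intro he; rw [Fin.ext_iff] at he; simp only [cl_val] at he; have := i.isLt; omega
    have h2 := vhi (cl k m i) (by simp only [cl_val]; have := i.isLt; omega) hne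
    rw [Fin.lt_def, vb] at h2
    have h3 : (σ (cl k m i) : ℕ) ≠ k+m+1 := by
      intro hc
      have : σ (cl k m i) = σ (cM k m) := by rw [hmid]; exact Fin.ext hc
      have := σ.injective this
      rw [Fin.ext_iff] at this
      simp only [cl_val, cM_val] at this
      have := i.isLt; omega
    have := (σ (cl k m i)).isLt
    omega
  set f : Fin k → Fin k := fun i => ⟨(σ (cl k m i) : ℕ) - (m+1), by have := hvL i; omega⟩ with hf
  have hfinj : Function.Injective f := by
    intro i i' h
    rw [Fin.ext_iff] at h
    simp only [hf] at h
    have h1' := hvL i; have h2 := hvL i'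
    have : σ (cl k m i) = σ (cl k m i') := Fin.ext (by omega)
    have := σ.injective this
    rw [Fin.ext_iff] at this
    simp only [cl_val] at this
    exact Fin.ext this
  set α : Perm (Fin k) := Equiv.ofBijective f (Finite.injective_iff_bijective.mp hfinj) with hα
  -- values on the right block
  have hvR : ∀ j : Fin m, ((σ (cr k m j) : ℕ) = m ∧ cr k m j = b) ∨
      ((σ (cr k m j) : ℕ) < m - 1) := by
    intro j
    by_cases hjb : cr k m j = b
    · left; rw [hjb, vb]; exact ⟨rfl, rfl⟩
    · right
      have h2 := vlo (cr k m j) (by simp only [cr_val]; omega) hjb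
      rw [Fin.lt_def, va] at h2
      exact h2
  set g : Fin m → Fin m := fun j =>
    ⟨if (σ (cr k m j) : ℕ) = m then m-1 else (σ (cr k m j) : ℕ),
     by rcases hvR j with ⟨h2, -⟩ | h2
        · rw [if_pos h2]; omega
        · rw [if_neg (by omega)]; omega⟩ with hg
  have hginj : Function.Injective g := by
    intro j j' h
    rw [Fin.ext_iff] at h
    simp only [hg] at h
    by_cases e1 : (σ (cr k m j) : ℕ) = m <;> by_cases e2 : (σ (cr k m j') : ℕ) = m
    · have : σ (cr k m j) = σ (cr k m j') := Fin.ext (by omega)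
      have := σ.injective this
      rw [Fin.ext_iff] at this
      simp only [cr_val] at this
      exact Fin.ext (by omega)
    · rw [if_pos e1, if_neg e2] at h
      rcases hvR j' with ⟨h3, -⟩ | h3
      · exact absurd h3 e2
      · omega
    · rw [if_neg e1, if_pos e2] at h
      rcases hvR j with ⟨h3, -⟩ | h3
      · exact absurd h3 e1
      · omega
    · rw [if_neg e1, if_neg e2] at h
      have : σ (cr k m j) = σ (cr k m j') := Fin.ext h
      have := σ.injective this
      rw [Fin.ext_iff] at this
      simp only [cr_val] at this
      exact Fin.ext (by omega)
  set β : Perm (Fin m) := Equiv.ofBijective g (Finite.injective_iff_bijective.mp hginj) with hβ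
  have hβv : ∀ j : Fin m, (β j : ℕ) =
      if (σ (cr k m j) : ℕ) = m then m-1 else (σ (cr k m j) : ℕ) := fun j => rfl
  refine ⟨α, β, ?_⟩
  apply Equiv.ext
  intro x
  apply Fin.ext
  have hx4 : (x:ℕ) < k ∨ (x:ℕ) = k ∨ (x:ℕ) = k+1 ∨ k+1 < (x:ℕ) := by omega
  rcases hx4 with hx | hx | hx | hx
  · have ex : x = cl k m ⟨x, hx⟩ := Fin.ext rfl
    rw [ex, joinC_cl]
    have h5 : (α ⟨x, hx⟩ : ℕ) = (σ (cl k m ⟨x, hx⟩) : ℕ) - (m+1) := rfl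
    rw [h5]
    have := hvL ⟨x, hx⟩
    omega
  · have ex : x = a := Fin.ext (by rw [hx, pa])
    rw [ex, joinC_eqk _ _ pa]
    omega
  · have ex : x = cM k m := Fin.ext hx
    rw [ex, hmid, joinC_eqk1 _ _ (by simp only [cM_val])]
  · have hj : (x:ℕ) - (k+2) < m := by omega
    rw [joinC_gt _ _ hx]
    show (σ x : ℕ) = rv m (β ⟨(x:ℕ)-(k+2), hj⟩)
    have exr : cr k m ⟨(x:ℕ)-(k+2), hj⟩ = x := Fin.ext (by simp only [cr_val]; omega)
    have hbv := hβv ⟨(x:ℕ)-(k+2), hj⟩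
    rw [exr] at hbv
    have hrv : rv m (β ⟨(x:ℕ)-(k+2), hj⟩) =
        if ((β ⟨(x:ℕ)-(k+2), hj⟩ : Fin m) : ℕ) = m - 1 then m
        else ((β ⟨(x:ℕ)-(k+2), hj⟩ : Fin m) : ℕ) := rfl
    rw [hrv]
    by_cases hsx : (σ x : ℕ) = m
    · have hb0 : (β ⟨(x:ℕ)-(k+2), hj⟩ : ℕ) = m - 1 := by rw [hbv, if_pos hsx]
      rw [if_pos hb0, hsx]
    · have hb0 : (β ⟨(x:ℕ)-(k+2), hj⟩ : ℕ) = (σ x : ℕ) := by rw [hbv, if_neg hsx]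
      have hlt2 : (σ x : ℕ) < m - 1 := by
        rcases hvR ⟨(x:ℕ)-(k+2), hj⟩ with ⟨h2, -⟩ | h2
        · rw [exr] at h2; exact absurd h2 hsx
        · rw [exr] at h2; exact h2
      rw [if_neg (by omega), hb0]

end JoinCStruct

section Glue
open MvPolynomial

noncomputable instance instDecPC {n : ℕ} : DecidablePred (PC (n := n)) :=
  fun _ => Classical.propDecidable _
noncomputable instance instDecPA {n : ℕ} : DecidablePred (PA (n := n)) :=
  fun _ => Classical.propDecidable _

lemma subT_monomial (a b : ℕ) :
    subT (X 0 ^ a * X 1 ^ b : MvPolynomial (Fin 2) ℤ) = X 0 ^ (a+b) * X 1 ^ b := by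
  rw [map_mul, map_pow, map_pow]
  rw [show subT (X 0 : MvPolynomial (Fin 2) ℤ) = X 0 from by simp [subT]]
  rw [show subT (X 1 : MvPolynomial (Fin 2) ℤ) = X 0 * X 1 from by simp [subT]]
  rw [mul_pow, pow_add]
  ring

lemma subT_F (k : ℕ) : subT (F k) =
    ∑ π ∈ Finset.univ.filter (fun π : Perm (Fin k) => count132 π = 0),
      (X 0 : MvPolynomial (Fin 2) ℤ) ^ (count123 π + count12 π) * X 1 ^ count12 π := by
  rw [F, map_sum]
  exact Finset.sum_congr rfl fun π _ => subT_monomial _ _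

lemma subT_H (k : ℕ) : subT (H k) =
    ∑ π ∈ Finset.univ.filter (fun π : Perm (Fin k) => count132 π = 1),
      (X 0 : MvPolynomial (Fin 2) ℤ) ^ (count123 π + count12 π) * X 1 ^ count12 π := by
  rw [H, map_sum]
  exact Finset.sum_congr rfl fun π _ => subT_monomial _ _

lemma sumA' (n k m : ℕ) (h : n = k + 1 + m) :
    ∑ σ ∈ Finset.filter (fun σ => pm σ = k)
        (Finset.filter (fun σ => ¬ PA σ)
          (Finset.filter (fun σ => ¬ PC σ)
            (Finset.filter (fun σ : Perm (Fin n) => count132 σ = 1) Finset.univ))),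
      (X 0 : MvPolynomial (Fin 2) ℤ) ^ count123 σ * X 1 ^ count12 σ
    = X 1 ^ k * subT (F k) * H m := by
  subst h
  rw [subT_F, H]
  have := Finset.sum_nbij'
    (s := (Finset.univ.filter (fun α : Perm (Fin k) => count132 α = 0)) ×ˢ
          (Finset.univ.filter (fun β : Perm (Fin m) => count132 β = 1)))
    (t := Finset.filter (fun σ => pm σ = k)
        (Finset.filter (fun σ => ¬ PA σ)
          (Finset.filter (fun σ => ¬ PC σ)
            (Finset.filter (fun σ : Perm (Fin (k+1+m)) => count132 σ = 1) Finset.univ))))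
    (f := fun p => (X 1 : MvPolynomial (Fin 2) ℤ) ^ k *
        ((X 0 : MvPolynomial (Fin 2) ℤ) ^ (count123 p.1 + count12 p.1) * X 1 ^ count12 p.1) *
        ((X 0 : MvPolynomial (Fin 2) ℤ) ^ count123 p.2 * X 1 ^ count12 p.2))
    (g := fun σ => (X 0 : MvPolynomial (Fin 2) ℤ) ^ count123 σ * X 1 ^ count12 σ)
    (fun p => join p.1 p.2)
    (Function.invFun (fun p : Perm (Fin k) × Perm (Fin m) => join p.1 p.2))
    ?_ ?_ ?_ ?_ ?_
  · rw [← this]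
    rw [Finset.sum_product]
    simp only [← Finset.mul_sum, ← Finset.sum_mul]
  · -- forward membership
    rintro ⟨α, β⟩ hp
    simp only [Finset.mem_product, Finset.mem_filter, Finset.mem_univ, true_and] at hp
    obtain ⟨hα, hβ⟩ := hp
    simp only [Finset.mem_filter, Finset.mem_univ, true_and]
    refine ⟨⟨⟨?_, ?_⟩, ?_⟩, ?_⟩
    · rw [count132_join, hα, hβ]
    · exact not_PC_join α β
    · rw [PA_join_iff]; simp [hα]
    · exact pm_join α β
  · -- backward membership
    intro σ hσ
    simp only [Finset.mem_filter, Finset.mem_univ, true_and] at hσ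
    obtain ⟨⟨⟨h1, h2⟩, h3⟩, h4⟩ := hσ
    obtain ⟨α, β, rfl⟩ := exists_join σ h4 h2
    rw [Function.leftInverse_invFun join_injective (α, β)]
    simp only [Finset.mem_product, Finset.mem_filter, Finset.mem_univ, true_and]
    rw [count132_join] at h1
    rw [PA_join_iff] at h3
    push_neg at h3
    exact ⟨h3, by omega⟩
  · -- left inverse
    intro p _
    exact Function.leftInverse_invFun join_injective p
  · -- right inverse
    intro σ hσ
    simp only [Finset.mem_filter, Finset.mem_univ, true_and] at hσ
    obtain ⟨⟨⟨h1, h2⟩, h3⟩, h4⟩ := hσ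
    obtain ⟨α, β, rfl⟩ := exists_join σ h4 h2
    rw [Function.leftInverse_invFun join_injective (α, β)]
  · -- weights
    rintro ⟨α, β⟩ hp
    simp only []
    rw [count123_join, count12_join, pow_add, pow_add, pow_add, pow_add]
    ring

lemma sumB' (n k m : ℕ) (h : n = k + 1 + m) :
    ∑ σ ∈ Finset.filter (fun σ => pm σ = k)
        (Finset.filter (fun σ => PA σ)
          (Finset.filter (fun σ => ¬ PC σ)
            (Finset.filter (fun σ : Perm (Fin n) => count132 σ = 1) Finset.univ))),
      (X 0 : MvPolynomial (Fin 2) ℤ) ^ count123 σ * X 1 ^ count12 σ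
    = X 1 ^ k * subT (H k) * F m := by
  subst h
  rw [subT_H, F]
  have := Finset.sum_nbij'
    (s := (Finset.univ.filter (fun α : Perm (Fin k) => count132 α = 1)) ×ˢ
          (Finset.univ.filter (fun β : Perm (Fin m) => count132 β = 0)))
    (t := Finset.filter (fun σ => pm σ = k)
        (Finset.filter (fun σ => PA σ)
          (Finset.filter (fun σ => ¬ PC σ)
            (Finset.filter (fun σ : Perm (Fin (k+1+m)) => count132 σ = 1) Finset.univ))))
    (f := fun p => (X 1 : MvPolynomial (Fin 2) ℤ) ^ k *
        ((X 0 : MvPolynomial (Fin 2) ℤ) ^ (count123 p.1 + count12 p.1) * X 1 ^ count12 p.1) *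
        ((X 0 : MvPolynomial (Fin 2) ℤ) ^ count123 p.2 * X 1 ^ count12 p.2))
    (g := fun σ => (X 0 : MvPolynomial (Fin 2) ℤ) ^ count123 σ * X 1 ^ count12 σ)
    (fun p => join p.1 p.2)
    (Function.invFun (fun p : Perm (Fin k) × Perm (Fin m) => join p.1 p.2))
    ?_ ?_ ?_ ?_ ?_
  · rw [← this]
    rw [Finset.sum_product]
    simp only [← Finset.mul_sum, ← Finset.sum_mul]
  · rintro ⟨α, β⟩ hp
    simp only [Finset.mem_product, Finset.mem_filter, Finset.mem_univ, true_and] at hp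
    obtain ⟨hα, hβ⟩ := hp
    simp only [Finset.mem_filter, Finset.mem_univ, true_and]
    refine ⟨⟨⟨?_, ?_⟩, ?_⟩, ?_⟩
    · rw [count132_join, hα, hβ]
    · exact not_PC_join α β
    · rw [PA_join_iff]; omega
    · exact pm_join α β
  · intro σ hσ
    simp only [Finset.mem_filter, Finset.mem_univ, true_and] at hσ
    obtain ⟨⟨⟨h1, h2⟩, h3⟩, h4⟩ := hσ
    obtain ⟨α, β, rfl⟩ := exists_join σ h4 h2
    rw [Function.leftInverse_invFun join_injective (α, β)]
    simp only [Finset.mem_product, Finset.mem_filter, Finset.mem_univ, true_and]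
    rw [count132_join] at h1
    rw [PA_join_iff] at h3
    exact ⟨by omega, by omega⟩
  · intro p _
    exact Function.leftInverse_invFun join_injective p
  · intro σ hσ
    simp only [Finset.mem_filter, Finset.mem_univ, true_and] at hσ
    obtain ⟨⟨⟨h1, h2⟩, h3⟩, h4⟩ := hσ
    obtain ⟨α, β, rfl⟩ := exists_join σ h4 h2
    rw [Function.leftInverse_invFun join_injective (α, β)]
  · rintro ⟨α, β⟩ hp
    simp only []
    rw [count123_join, count12_join, pow_add, pow_add, pow_add, pow_add]
    ring

lemma sumC' (n k m : ℕ) (h : n = k + 2 + m) (hm : 1 ≤ m) :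
    ∑ σ ∈ Finset.filter (fun σ => pm σ - 1 = k)
        (Finset.filter (fun σ => PC σ)
          (Finset.filter (fun σ : Perm (Fin n) => count132 σ = 1) Finset.univ)),
      (X 0 : MvPolynomial (Fin 2) ℤ) ^ count123 σ * X 1 ^ count12 σ
    = X 1 ^ (2+k) * subT (F k) * F m := by
  subst h
  rw [subT_F, F]
  have := Finset.sum_nbij'
    (s := (Finset.univ.filter (fun α : Perm (Fin k) => count132 α = 0)) ×ˢ
          (Finset.univ.filter (fun β : Perm (Fin m) => count132 β = 0)))
    (t := Finset.filter (fun σ => pm σ - 1 = k)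
        (Finset.filter (fun σ => PC σ)
          (Finset.filter (fun σ : Perm (Fin (k+2+m)) => count132 σ = 1) Finset.univ)))
    (f := fun p => (X 1 : MvPolynomial (Fin 2) ℤ) ^ (2+k) *
        ((X 0 : MvPolynomial (Fin 2) ℤ) ^ (count123 p.1 + count12 p.1) * X 1 ^ count12 p.1) *
        ((X 0 : MvPolynomial (Fin 2) ℤ) ^ count123 p.2 * X 1 ^ count12 p.2))
    (g := fun σ => (X 0 : MvPolynomial (Fin 2) ℤ) ^ count123 σ * X 1 ^ count12 σ)
    (fun p => joinC p.1 p.2)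
    (Function.invFun (fun p : Perm (Fin k) × Perm (Fin m) => joinC p.1 p.2))
    ?_ ?_ ?_ ?_ ?_
  · rw [← this]
    rw [Finset.sum_product]
    simp only [← Finset.mul_sum, ← Finset.sum_mul]
  · rintro ⟨α, β⟩ hp
    simp only [Finset.mem_product, Finset.mem_filter, Finset.mem_univ, true_and] at hp
    obtain ⟨hα, hβ⟩ := hp
    simp only [Finset.mem_filter, Finset.mem_univ, true_and]
    refine ⟨⟨?_, ?_⟩, ?_⟩
    · rw [count132_joinC hm, hα, hβ]
    · exact PC_joinC hm α β
    · rw [pm_joinC]; omega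
  · intro σ hσ
    simp only [Finset.mem_filter, Finset.mem_univ, true_and] at hσ
    obtain ⟨⟨h1, h2⟩, h3⟩ := hσ
    have hpm : pm σ = k + 1 := by
      obtain ⟨i, j, hi, hj, -⟩ := h2
      omega
    obtain ⟨α, β, rfl⟩ := exists_joinC σ hm h1 h2 hpm
    rw [Function.leftInverse_invFun joinC_injective (α, β)]
    simp only [Finset.mem_product, Finset.mem_filter, Finset.mem_univ, true_and]
    rw [count132_joinC hm] at h1
    exact ⟨by omega, by omega⟩
  · intro p _
    exact Function.leftInverse_invFun joinC_injective p
  · intro σ hσ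
    simp only [Finset.mem_filter, Finset.mem_univ, true_and] at hσ
    obtain ⟨⟨h1, h2⟩, h3⟩ := hσ
    have hpm : pm σ = k + 1 := by
      obtain ⟨i, j, hi, hj, -⟩ := h2
      omega
    obtain ⟨α, β, rfl⟩ := exists_joinC σ hm h1 h2 hpm
    rw [Function.leftInverse_invFun joinC_injective (α, β)]
  · rintro ⟨α, β⟩ hp
    simp only []
    rw [count123_joinC hm, count12_joinC hm, pow_add, pow_add, pow_add, pow_add]
    ring

theorem functional_equation_H' :
    ∀ n : ℕ, 1 ≤ n →
      H n =
        (∑ k ∈ Finset.range n,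
          (MvPolynomial.X 1 : MvPolynomial (Fin 2) ℤ) ^ k * subT (F k) * H (n - 1 - k)) +
        (∑ k ∈ Finset.range n,
          (MvPolynomial.X 1 : MvPolynomial (Fin 2) ℤ) ^ k * subT (H k) * F (n - 1 - k)) +
        (∑ k ∈ Finset.range (n - 2),
          (MvPolynomial.X 1 : MvPolynomial (Fin 2) ℤ) ^ (2 + k) * subT (F k) * F (n - 2 - k)) := by
  intro n hn
  conv_lhs => rw [H]
  rw [← Finset.sum_filter_add_sum_filter_not
    (Finset.filter (fun σ : Perm (Fin n) => count132 σ = 1) Finset.univ) PC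
    (fun σ => (X 0 : MvPolynomial (Fin 2) ℤ) ^ count123 σ * X 1 ^ count12 σ)]
  rw [← Finset.sum_filter_add_sum_filter_not
    (Finset.filter (fun σ => ¬ PC σ)
      (Finset.filter (fun σ : Perm (Fin n) => count132 σ = 1) Finset.univ)) PA
    (fun σ => (X 0 : MvPolynomial (Fin 2) ℤ) ^ count123 σ * X 1 ^ count12 σ)]
  have hC : ∑ σ ∈ Finset.filter (fun σ => PC σ)
      (Finset.filter (fun σ : Perm (Fin n) => count132 σ = 1) Finset.univ),
      (X 0 : MvPolynomial (Fin 2) ℤ) ^ count123 σ * X 1 ^ count12 σ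
      = ∑ k ∈ Finset.range (n-2),
        (MvPolynomial.X 1 : MvPolynomial (Fin 2) ℤ) ^ (2 + k) * subT (F k) * F (n - 2 - k) := by
    rw [← Finset.sum_fiberwise_of_maps_to (g := fun σ => pm σ - 1) (t := Finset.range (n-2))
      (fun σ hσ => ?_)
      (fun σ => (X 0 : MvPolynomial (Fin 2) ℤ) ^ count123 σ * X 1 ^ count12 σ)]
    · apply Finset.sum_congr rfl
      intro k hk
      rw [Finset.mem_range] at hk
      exact sumC' n k (n-2-k) (by omega) (by omega)
    · simp only [Finset.mem_filter, Finset.mem_univ, true_and] at hσ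
      obtain ⟨-, i, j, hi, hj, -⟩ := hσ
      have := j.isLt
      rw [Finset.mem_range]
      show pm σ - 1 < n - 2
      omega
  have hB : ∑ σ ∈ Finset.filter (fun σ => PA σ)
      (Finset.filter (fun σ => ¬ PC σ)
        (Finset.filter (fun σ : Perm (Fin n) => count132 σ = 1) Finset.univ)),
      (X 0 : MvPolynomial (Fin 2) ℤ) ^ count123 σ * X 1 ^ count12 σ
      = ∑ k ∈ Finset.range n,
        (MvPolynomial.X 1 : MvPolynomial (Fin 2) ℤ) ^ k * subT (H k) * F (n - 1 - k) := by
    rw [← Finset.sum_fiberwise_of_maps_to (g := fun σ => pm σ) (t := Finset.range n)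
      (fun σ hσ => by rw [Finset.mem_range]; exact pm_lt (by omega) σ)
      (fun σ => (X 0 : MvPolynomial (Fin 2) ℤ) ^ count123 σ * X 1 ^ count12 σ)]
    apply Finset.sum_congr rfl
    intro k hk
    rw [Finset.mem_range] at hk
    exact sumB' n k (n-1-k) (by omega)
  have hA : ∑ σ ∈ Finset.filter (fun σ => ¬ PA σ)
      (Finset.filter (fun σ => ¬ PC σ)
        (Finset.filter (fun σ : Perm (Fin n) => count132 σ = 1) Finset.univ)),
      (X 0 : MvPolynomial (Fin 2) ℤ) ^ count123 σ * X 1 ^ count12 σ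
      = ∑ k ∈ Finset.range n,
        (MvPolynomial.X 1 : MvPolynomial (Fin 2) ℤ) ^ k * subT (F k) * H (n - 1 - k) := by
    rw [← Finset.sum_fiberwise_of_maps_to (g := fun σ => pm σ) (t := Finset.range n)
      (fun σ hσ => by rw [Finset.mem_range]; exact pm_lt (by omega) σ)
      (fun σ => (X 0 : MvPolynomial (Fin 2) ℤ) ^ count123 σ * X 1 ^ count12 σ)]
    apply Finset.sum_congr rfl
    intro k hk
    rw [Finset.mem_range] at hk
    exact sumA' n k (n-1-k) (by omega)
  rw [hC, hB, hA]
  ring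

end Glue

end FEH

theorem functional_equation_H :
    ∀ n : ℕ, 1 ≤ n →
      H n =
        (∑ k ∈ Finset.range n,
          (MvPolynomial.X 1 : MvPolynomial (Fin 2) ℤ) ^ k * subT (F k) * H (n - 1 - k)) +
        (∑ k ∈ Finset.range n,
          (MvPolynomial.X 1 : MvPolynomial (Fin 2) ℤ) ^ k * subT (H k) * F (n - 1 - k)) +
        (∑ k ∈ Finset.range (n - 2),
          (MvPolynomial.X 1 : MvPolynomial (Fin 2) ℤ) ^ (2 + k) * subT (F k) * F (n - 2 - k)) :=
  FEH.functional_equation_H'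
end

section
/- For every n ≥ 1, the number of permutations of length n that contain no 132 pattern and no 123 pattern equals 2^{n-1}. -/
open Finset Equiv

def Avoids123And132 {α : Type*} [LT α] {n : ℕ} (f : Fin n → α) : Prop :=
  ∀ i j k, i < j → j < k → f i < f j → ¬ f i < f k

instance {α : Type*} [LT α] [DecidableLT α] {n : ℕ} :
    DecidablePred (Avoids123And132 : (Fin n → α) → Prop) :=
  fun f => by unfold Avoids123And132; infer_instance

lemma count132_eq_zero_and_count123_eq_zero_iff_s17 {n : ℕ} (π : Perm (Fin n)) :
    count132 π = 0 ∧ count123 π = 0 ↔ Avoids123And132 π := by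
  simp only [count132, count123, card_eq_zero, filter_eq_empty_iff, mem_univ, true_implies,
    Prod.forall, not_and]
  constructor
  · rintro ⟨h132, h123⟩ i j k hij hjk hj hk
    rcases lt_or_gt_of_ne (π.injective.ne hjk.ne) with hjk' | hkj
    · exact h123 i j k hij hjk hj hjk'
    · exact h132 i j k hij hjk hk hkj
  · intro h
    exact ⟨fun i j k hij hjk hk hkj => h i j k hij hjk (hk.trans hkj) hk,
      fun i j k hij hjk hj hjk' => h i j k hij hjk hj (hj.trans hjk')⟩

lemma avoids123And132_of_le_two {α : Type*} [LT α] {n : ℕ} (f : Fin n → α) (hn : n ≤ 2) :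
    Avoids123And132 f := by
  intro i j k hij hjk
  have := k.is_lt
  omega

lemma StrictMono.avoids123And132_comp_iff {α β : Type*} [LinearOrder α] [Preorder β]
    {g : α → β} (hg : StrictMono g) {n : ℕ} (f : Fin n → α) :
    Avoids123And132 (g ∘ f) ↔ Avoids123And132 f := by
  simp only [Avoids123And132, Function.comp_apply, hg.lt_iff_lt]

lemma avoids123And132_cons_iff {α : Type*} [LT α] {n : ℕ} (a : α) (f : Fin n → α) :
    Avoids123And132 (Fin.cons a f : Fin (n + 1) → α) ↔
      (∀ j k, j < k → a < f j → ¬ a < f k) ∧ Avoids123And132 f := by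
  constructor
  · intro h
    refine ⟨fun j k hjk => h 0 j.succ k.succ (Fin.succ_pos j) (Fin.succ_lt_succ_iff.2 hjk),
      fun i j k hij hjk => h i.succ j.succ k.succ (Fin.succ_lt_succ_iff.2 hij)
        (Fin.succ_lt_succ_iff.2 hjk)⟩
  · rintro ⟨h0, h⟩ i j k hij hjk
    obtain ⟨j, rfl⟩ := Fin.exists_succ_eq.2 (Fin.ne_zero_of_lt hij)
    obtain ⟨k, rfl⟩ := Fin.exists_succ_eq.2 (Fin.ne_zero_of_lt hjk)
    rw [Fin.succ_lt_succ_iff] at hjk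
    induction i using Fin.cases with
    | zero => simpa using h0 j k hjk
    | succ i => simpa using h i j k (Fin.succ_lt_succ_iff.1 hij) hjk

def permConsEquiv (n : ℕ) : Fin (n + 1) × Perm (Fin n) ≃ Perm (Fin (n + 1)) where
  toFun x := (finSuccEquiv n).trans (x.2.optionCongr.trans (finSuccEquiv' x.1).symm)
  invFun π := (π 0, removeNone ((finSuccEquiv n).symm.trans (π.trans (finSuccEquiv' (π 0)))))
  left_inv := by
    rintro ⟨p, σ⟩
    ext1
    · simp
    · convert removeNone_optionCongr σ using 2
      ext1 x
      simp
  right_inv π := by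
    ext1 i
    induction i using Fin.cases <;> simp

lemma coe_permConsEquiv {n : ℕ} (p : Fin (n + 1)) (σ : Perm (Fin n)) :
    ⇑(permConsEquiv n (p, σ)) = Fin.cons p (p.succAbove ∘ σ) := by
  ext1 i
  induction i using Fin.cases <;> simp [permConsEquiv]

lemma forall_lt_succAbove_perm_iff {n : ℕ} (p : Fin (n + 2)) (σ : Perm (Fin (n + 1))) :
    (∀ j k, j < k → p < p.succAbove (σ j) → ¬ p < p.succAbove (σ k)) ↔
      (Fin.last n).castSucc ≤ p := by
  simp only [Fin.lt_succAbove_iff_le_castSucc, Fin.le_def, Fin.val_castSucc, Fin.val_last]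
  constructor
  · intro h
    by_contra! hp
    have hne : σ.symm (Fin.last n) ≠ σ.symm ⟨p, by omega⟩ :=
      σ.symm.injective.ne (by simp [Fin.ext_iff]; omega)
    rcases lt_or_gt_of_ne hne with hlt | hlt
    · exact h _ _ hlt (by simp; omega) (by simp)
    · exact h _ _ hlt (by simp) (by simp; omega)
  · intro hp j k hjk hj hk
    have hne := Fin.val_ne_iff.2 (σ.injective.ne hjk.ne)
    omega

lemma avoids123And132_permConsEquiv_iff {n : ℕ} (p : Fin (n + 2)) (σ : Perm (Fin (n + 1))) :
    Avoids123And132 (permConsEquiv (n + 1) (p, σ)) ↔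
      (Fin.last n).castSucc ≤ p ∧ Avoids123And132 σ := by
  rw [coe_permConsEquiv, avoids123And132_cons_iff,
    (Fin.strictMono_succAbove p).avoids123And132_comp_iff]
  simp only [Function.comp_apply, forall_lt_succAbove_perm_iff]

lemma card_avoids123And132_succ_succ (n : ℕ) :
    #{π : Perm (Fin (n + 2)) | Avoids123And132 π} =
      2 * #{σ : Perm (Fin (n + 1)) | Avoids123And132 σ} := calc
  _ = #(Ici (Fin.last n).castSucc ×ˢ ({σ | Avoids123And132 σ} : Finset (Perm (Fin (n + 1))))) :=
    (card_equiv (permConsEquiv (n + 1)) fun ⟨p, σ⟩ => by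
      rw [mem_product, mem_Ici, mem_filter_univ, mem_filter_univ,
        avoids123And132_permConsEquiv_iff]).symm
  _ = 2 * _ := by rw [card_product, Fin.card_Ici, Fin.val_castSucc, Fin.val_last,
    show n + 1 + 1 - n = 2 by omega]

lemma card_avoids123And132_succ (n : ℕ) :
    #{π : Perm (Fin (n + 1)) | Avoids123And132 π} = 2 ^ n := by
  induction n with
  | zero => simp [avoids123And132_of_le_two]
  | succ n ih => rw [card_avoids123And132_succ_succ, ih, pow_succ']

theorem card_no132_no123_general (n : ℕ) :
    (Finset.univ.filter (fun π : Equiv.Perm (Fin n) =>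
      count132 π = 0 ∧ count123 π = 0)).card = 2 ^ (n - 1) := by
  simp only [count132_eq_zero_and_count123_eq_zero_iff_s17]
  cases n with
  | zero => simp [avoids123And132_of_le_two]
  | succ n => exact card_avoids123And132_succ n

theorem card_no132_no123 (n : ℕ) (hn : 1 ≤ n) :
    (Finset.univ.filter (fun π : Equiv.Perm (Fin n) =>
      count132 π = 0 ∧ count123 π = 0)).card = 2 ^ (n - 1) :=
  card_no132_no123_general n
end

section
/- For every n ≥ 3, the number of permutations of length n that contain no 132 pattern and exactly one 123 pattern equals (n-2)·2^{n-3}. -/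
/-!
Encode `π` by its code `c i = #{j > i | π i < π j}`, which is a bijection from permutations onto
sequences with `c i < n - i`. Two positions `j < k` counted by `c i` form, together with `i`,
either a 123 or a 132 pattern, so `count123 π + count132 π = ∑ i, (c i).choose 2`. Hence no 132
and exactly one 123 force a single position `i` with `c i = 2` and `c ≤ 1` elsewhere; given
that, `π` avoids 132 exactly when `c (i + 1) = 1`. Such codes are counted by the `n - 2`
choices of `i` and a free bit at each of the `n - 3` positions other than `i`, `i + 1`, `n - 1`.
-/

open Finset

theorem Fintype.sum_nat_eq_one_iff {ι : Type*} [Fintype ι] (g : ι → ℕ) :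
    ∑ a, g a = 1 ↔ ∃ i, g i = 1 ∧ ∀ a ≠ i, g a = 0 := by
  classical
  constructor
  · intro h
    obtain ⟨i, -, hi⟩ := exists_ne_zero_of_sum_ne_zero (h ▸ one_ne_zero)
    have hsplit := add_sum_erase univ g (mem_univ i)
    have hrest : ∑ a ∈ univ.erase i, g a = 0 := by omega
    rw [sum_eq_zero_iff] at hrest
    exact ⟨i, by omega, fun a ha ↦ hrest a (mem_erase.2 ⟨ha, mem_univ a⟩)⟩
  · rintro ⟨i, hi, h0⟩
    rw [Fintype.sum_eq_single i h0, hi]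

theorem Fintype.sum_choose_two_eq_one_iff {ι : Type*} [Fintype ι] (f : ι → ℕ) :
    ∑ a, (f a).choose 2 = 1 ↔ ∃ i, f i = 2 ∧ ∀ a ≠ i, f a ≤ 1 := by
  simp [Fintype.sum_nat_eq_one_iff, Nat.choose_eq_one_iff, Nat.choose_eq_zero_iff]

theorem Finset.card_Ioi_sdiff_lt_card_Ioi_sdiff {α : Type*} [LinearOrder α]
    [LocallyFiniteOrderTop α] (s : Finset α) {a b : α} (hab : a < b) (hb : b ∉ s) :
    #(Ioi b \ s) < #(Ioi a \ s) := by
  refine card_lt_card ((ssubset_iff_of_subset ?_).2 ⟨b, ?_, ?_⟩)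
  · exact sdiff_subset_sdiff (Ioi_subset_Ioi hab.le) subset_rfl
  · simp [hab, hb]
  · simp

namespace PermPattern

variable {n : ℕ}

def largerAfter (π : Equiv.Perm (Fin n)) (i : Fin n) : Finset (Fin n) :=
  {j | i < j ∧ π i < π j}

/-- The Lehmer code of `π`, except that it counts the larger, not the smaller, entries to the
right. -/
def code (π : Equiv.Perm (Fin n)) (i : Fin n) : ℕ := #(largerAfter π i)

@[simp]
lemma mem_largerAfter {π : Equiv.Perm (Fin n)} {i j : Fin n} :
    j ∈ largerAfter π i ↔ i < j ∧ π i < π j := by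
  simp [largerAfter]

lemma code_lt (π : Equiv.Perm (Fin n)) (i : Fin n) : code π i < n - i := by
  have : code π i ≤ #(Ioi i) := card_le_card fun j hj ↦ mem_Ioi.2 (mem_largerAfter.1 hj).1
  rw [Fin.card_Ioi] at this
  have := i.isLt
  omega

lemma image_largerAfter (π : Equiv.Perm (Fin n)) (i : Fin n) :
    (largerAfter π i).image π = Ioi (π i) \ (Iio i).image π := by
  ext v
  obtain ⟨j, rfl⟩ := π.surjective v
  simp only [mem_image, mem_largerAfter, π.injective.eq_iff, exists_eq_right, mem_sdiff, mem_Ioi,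
    mem_Iio, not_lt]
  constructor
  · rintro ⟨hij, hπ⟩
    exact ⟨hπ, hij.le⟩
  · rintro ⟨hπ, hij⟩
    exact ⟨lt_of_le_of_ne hij (by rintro rfl; exact hπ.false), hπ⟩

lemma code_eq_card_Ioi_sdiff (π : Equiv.Perm (Fin n)) (i : Fin n) :
    code π i = #(Ioi (π i) \ (Iio i).image π) := by
  rw [← image_largerAfter, card_image_of_injective _ π.injective, code]

lemma apply_eq_of_code_eq {π σ : Equiv.Perm (Fin n)} {i : Fin n} (hcode : code π i = code σ i)
    (hprefix : ∀ j < i, π j = σ j) : π i = σ i := by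
  have hP : (Iio i).image π = (Iio i).image σ := image_congr fun j hj ↦ hprefix j (mem_Iio.1 hj)
  have hπ : π i ∉ (Iio i).image σ := by simp [← hP, π.injective.eq_iff]
  have hσ : σ i ∉ (Iio i).image σ := by simp [σ.injective.eq_iff]
  rw [code_eq_card_Ioi_sdiff, code_eq_card_Ioi_sdiff, hP] at hcode
  rcases lt_trichotomy (π i) (σ i) with h | h | h
  · exact absurd hcode (Finset.card_Ioi_sdiff_lt_card_Ioi_sdiff _ h hσ).ne'
  · exact h
  · exact absurd hcode (Finset.card_Ioi_sdiff_lt_card_Ioi_sdiff _ h hπ).ne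

lemma code_injective : Function.Injective (code : Equiv.Perm (Fin n) → Fin n → ℕ) := by
  intro π σ h
  ext i : 1
  induction i using WellFoundedLT.induction with
  | ind i ih => exact apply_eq_of_code_eq (congr_fun h i) ih

lemma card_piFinset_range_sub (n : ℕ) :
    #(Fintype.piFinset fun i : Fin n ↦ range (n - i)) = n.factorial := by
  rw [Fintype.card_piFinset]
  simp only [card_range]
  rw [Fin.prod_univ_eq_prod_range (n - ·), ← Nat.descFactorial_eq_prod_range,
    Nat.descFactorial_self]

lemma image_code (n : ℕ) :
    univ.image (code (n := n)) = Fintype.piFinset fun i : Fin n ↦ range (n - i) := by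
  refine eq_of_subset_of_card_le ?_ ?_
  · intro f hf
    obtain ⟨π, -, rfl⟩ := mem_image.1 hf
    simpa using code_lt π
  · rw [card_piFinset_range_sub, card_image_of_injective _ code_injective, card_univ,
      Fintype.card_perm, Fintype.card_fin]

lemma count123_add_count132 (π : Equiv.Perm (Fin n)) :
    count123 π + count132 π = ∑ a, (code π a).choose 2 := by
  set T : Finset (Fin n × Fin n × Fin n) :=
    {p | p.2.1 ∈ largerAfter π p.1 ∧ p.2.2 ∈ largerAfter π p.1 ∧ p.2.1 < p.2.2}
  have h123 : count123 π = #(T.filter fun p ↦ π p.2.1 < π p.2.2) := by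
    unfold count123
    congr 1
    ext ⟨a, b, c⟩
    simp only [T, mem_filter, mem_univ, true_and, mem_largerAfter]
    grind
  have h132 : count132 π = #(T.filter fun p ↦ ¬π p.2.1 < π p.2.2) := by
    unfold count132
    congr 1
    ext ⟨a, b, c⟩
    simp only [T, mem_filter, mem_univ, true_and, mem_largerAfter]
    have := π.injective.ne_iff (x := b) (y := c)
    grind
  calc count123 π + count132 π = #T := by rw [h123, h132, card_filter_add_card_filter_not]
    _ = ∑ a, #{q : Fin n × Fin n | q.1 ∈ largerAfter π a ∧ q.2 ∈ largerAfter π a ∧ q.1 < q.2} := by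
      simp only [T, card_filter, Fintype.sum_prod_type]
    _ = ∑ a, (code π a).choose 2 := by
      refine sum_congr rfl fun a _ ↦ ?_
      rw [code, ← card_product_filter_lt]
      congr 1
      ext q
      simp [and_assoc]

lemma count132_eq_zero_iff (π : Equiv.Perm (Fin n)) :
    count132 π = 0 ↔
      ∀ a, ∀ b ∈ largerAfter π a, ∀ c ∈ largerAfter π a, b < c → π b < π c := by
  simp only [count132, card_eq_zero, filter_eq_empty_iff, mem_univ, true_implies,
    mem_largerAfter, Prod.forall]
  refine ⟨fun h a b hb c hc hbc ↦ ?_, fun h a b c ⟨hab, hbc, hac, hcb⟩ ↦ ?_⟩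
  · exact lt_of_le_of_ne (not_lt.1 fun hcb ↦ h a b c ⟨hb.1, hbc, hc.2, hcb⟩) (π.injective.ne hbc.ne)
  · exact lt_asymm (h a b ⟨hab, hac.trans hcb⟩ c ⟨hab.trans hbc, hac⟩ hbc) hcb


lemma largerAfter_subset_of_apply_lt {π : Equiv.Perm (Fin n)} {i j : Fin n}
    (hj : (j : ℕ) = i + 1) (h : π j < π i) : largerAfter π i ⊆ largerAfter π j := by
  intro m hm
  rw [mem_largerAfter] at hm ⊢
  have hmj : m ≠ j := by
    rintro rfl
    exact lt_asymm hm.2 h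
  exact ⟨by omega, h.trans hm.2⟩

lemma largerAfter_subset_erase {π : Equiv.Perm (Fin n)} {i j : Fin n}
    (hj : j ∈ largerAfter π i) : largerAfter π j ⊆ (largerAfter π i).erase j := by
  intro m hm
  rw [mem_largerAfter] at hj hm
  rw [mem_erase, mem_largerAfter]
  exact ⟨hm.1.ne', hj.1.trans hm.1, hj.2.trans hm.2⟩

lemma count132_eq_zero_iff_code_eq_one {π : Equiv.Perm (Fin n)} {i j : Fin n}
    (hi : code π i = 2) (hle : ∀ a ≠ i, code π a ≤ 1) (hj : (j : ℕ) = i + 1) :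
    count132 π = 0 ↔ code π j = 1 := by
  have hji : j ≠ i := by
    rintro rfl
    omega
  have hπ : π i < π j := by
    refine lt_of_not_ge fun h ↦ ?_
    have := card_le_card (largerAfter_subset_of_apply_lt hj (h.lt_of_ne (π.injective.ne hji)))
    have := hle j hji
    rw [code] at *
    omega
  have hjL : j ∈ largerAfter π i := mem_largerAfter.2 ⟨by omega, hπ⟩
  obtain ⟨k, hk⟩ : ∃ k, (largerAfter π i).erase j = {k} := by
    rw [← card_eq_one, card_erase_of_mem hjL, ← code, hi]
  have hLi : largerAfter π i = {j, k} := by rw [← insert_erase hjL, hk]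
  obtain ⟨hkj, hkL⟩ := mem_erase.1 (hk ▸ mem_singleton_self k)
  have hjk : j < k := by
    have := (mem_largerAfter.1 hkL).1
    omega
  have hLj : largerAfter π j ⊆ {k} := hk ▸ largerAfter_subset_erase hjL
  rw [count132_eq_zero_iff]
  constructor
  · intro h
    have : largerAfter π j = {k} :=
      subset_antisymm hLj (singleton_subset_iff.2 (mem_largerAfter.2 ⟨hjk, h i j hjL k hkL hjk⟩))
    rw [code, this, card_singleton]
  · intro hcj a b hb c hc hbc
    have hai : a = i := by
      by_contra hai
      have := hle a hai
      have := one_lt_card.2 ⟨b, hb, c, hc, hbc.ne⟩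
      rw [code] at *
      omega
    subst hai
    rw [hLi, mem_insert, mem_singleton] at hb hc
    obtain ⟨rfl, rfl⟩ : b = j ∧ c = k := by omega
    have : largerAfter π b = {c} :=
      eq_of_subset_of_card_le hLj (by rw [← code, hcj, card_singleton])
    exact (mem_largerAfter.1 (this ▸ mem_singleton_self c)).2

def IsCodeOfNo132One123 (f : Fin n → ℕ) : Prop :=
  ∃ i j : Fin n, (j : ℕ) = i + 1 ∧ f i = 2 ∧ f j = 1 ∧ ∀ k ≠ i, f k ≤ 1

instance : DecidablePred (IsCodeOfNo132One123 (n := n)) := fun f ↦ by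
  unfold IsCodeOfNo132One123
  infer_instance

lemma no132_one123_iff (π : Equiv.Perm (Fin n)) :
    count132 π = 0 ∧ count123 π = 1 ↔ IsCodeOfNo132One123 (code π) := by
  have hsum := count123_add_count132 π
  constructor
  · rintro ⟨h132, h123⟩
    obtain ⟨i, hi, hle⟩ := (Fintype.sum_choose_two_eq_one_iff (code π)).1 (by omega)
    have hin : (i : ℕ) + 1 < n := by
      have := code_lt π i
      omega
    exact ⟨i, ⟨i + 1, hin⟩, rfl, hi, (count132_eq_zero_iff_code_eq_one hi hle rfl).1 h132, hle⟩
  · rintro ⟨i, j, hj, hi, hcj, hle⟩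
    have h132 := (count132_eq_zero_iff_code_eq_one hi hle hj).2 hcj
    have := (Fintype.sum_choose_two_eq_one_iff _).2 ⟨i, hi, hle⟩
    omega

variable (n) in
/-- The codes in `IsCodeOfNo132One123` with their `2` at position `i`: away from `i` and `i + 1`
the entries are `0` or `1`, and `min 2 (n - j)` also forces the last entry of a code to be `0`. -/
def codePattern (i j : Fin n) : Finset ℕ :=
  if j = i then {2} else if (j : ℕ) = i + 1 then {1} else range (min 2 (n - j))

lemma filter_isCodeOfNo132One123_eq_biUnion :
    (Fintype.piFinset fun i : Fin n ↦ range (n - i)).filter IsCodeOfNo132One123 =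
      ({i : Fin n | (i : ℕ) < n - 2} : Finset (Fin n)).biUnion
        fun i ↦ Fintype.piFinset (codePattern n i) := by
  ext f
  simp only [mem_filter, Fintype.mem_piFinset, mem_range, mem_biUnion, mem_univ, true_and,
    IsCodeOfNo132One123, codePattern]
  constructor
  · rintro ⟨hf, i, j, hj, hi, hfj, hle⟩
    refine ⟨i, by have := hf i; omega, fun k ↦ ?_⟩
    have := hf k
    have := hle k
    split_ifs with hki hkj
    · simp [hki, hi]
    · obtain rfl : k = j := by omega
      simp [hfj]
    · simp only [mem_range]
      omega
  · rintro ⟨i, hi, hf⟩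
    refine ⟨fun k ↦ ?_, i, ⟨i + 1, by omega⟩, rfl, by simpa using hf i,
      by simpa [Fin.ext_iff] using hf ⟨i + 1, by omega⟩, fun k hk ↦ ?_⟩
    all_goals
      have := hf k
      split_ifs at this <;> simp at this <;> omega

lemma card_piFinset_codePattern {i : Fin n} (hi : (i : ℕ) < n - 2) :
    #(Fintype.piFinset (codePattern n i)) = 2 ^ (n - 3) := by
  set S : Finset (Fin n) := {i, ⟨i + 1, by omega⟩, ⟨n - 1, by omega⟩}
  have hS : #S = 3 := by
    rw [card_insert_of_notMem, card_pair] <;> simp [Fin.ext_iff] <;> omega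
  have hcard : ∀ k, #(codePattern n i k) = if k ∈ Sᶜ then 2 else 1 := by
    intro k
    simp only [codePattern, S, mem_compl, mem_insert, mem_singleton, Fin.ext_iff]
    split_ifs <;> simp <;> omega
  rw [Fintype.card_piFinset, Fintype.prod_congr _ _ hcard, Fintype.prod_ite_mem, prod_const,
    card_compl, hS, Fintype.card_fin]

lemma card_filter_isCodeOfNo132One123 (n : ℕ) :
    #((Fintype.piFinset fun i : Fin n ↦ range (n - i)).filter IsCodeOfNo132One123) =
      (n - 2) * 2 ^ (n - 3) := by
  rw [filter_isCodeOfNo132One123_eq_biUnion, card_biUnion]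
  · rw [sum_congr rfl fun i hi ↦ card_piFinset_codePattern (mem_filter.1 hi).2, sum_const,
      Fin.card_filter_val_lt, smul_eq_mul]
    congr
    omega
  · intro i _ i' _ hii'
    refine disjoint_left.2 fun f hf hf' ↦ ?_
    have h2 := Fintype.mem_piFinset.1 hf i
    have hle := Fintype.mem_piFinset.1 hf' i
    simp only [codePattern, if_true, mem_singleton] at h2
    simp only [codePattern, if_neg hii'] at hle
    split_ifs at hle <;> simp at hle <;> omega

end PermPattern

theorem card_no132_one123_general (n : ℕ) :
    (Finset.univ.filter (fun π : Equiv.Perm (Fin n) =>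
      count132 π = 0 ∧ count123 π = 1)).card = (n - 2) * 2 ^ (n - 3) := by
  rw [← PermPattern.card_filter_isCodeOfNo132One123, ← PermPattern.image_code,
    Finset.filter_image, Finset.card_image_of_injective _ PermPattern.code_injective]
  exact congrArg Finset.card (Finset.filter_congr fun π _ ↦ PermPattern.no132_one123_iff π)

theorem card_no132_one123 (n : ℕ) (hn : 3 ≤ n) :
    (Finset.univ.filter (fun π : Equiv.Perm (Fin n) =>
      count132 π = 0 ∧ count123 π = 1)).card = (n - 2) * 2 ^ (n - 3) :=
  card_no132_one123_general n
end

section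
/- For every n ≥ 3, the number of permutations of length n that contain exactly one 132 pattern and no 123 pattern equals (n-2)·2^{n-3}. -/
open Finset Equiv

namespace Aux

variable {n : ℕ}

def consFun (p : Fin (n+1)) (e : Perm (Fin n)) : Fin (n+1) → Fin (n+1) :=
  fun j => Fin.cases p (fun i => p.succAbove (e i)) j

lemma consFun_injective (p : Fin (n+1)) (e : Perm (Fin n)) :
    Function.Injective (consFun p e) := by
  intro a b h
  induction a using Fin.cases with
  | zero =>
    induction b using Fin.cases with
    | zero => rfl
    | succ j =>
      simp only [consFun, Fin.cases_zero, Fin.cases_succ] at h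
      exact absurd h.symm (Fin.succAbove_ne p (e j))
  | succ i =>
    induction b using Fin.cases with
    | zero =>
      simp only [consFun, Fin.cases_zero, Fin.cases_succ] at h
      exact absurd h (Fin.succAbove_ne p (e i))
    | succ j =>
      simp only [consFun, Fin.cases_succ] at h
      have := e.injective (Fin.succAbove_right_injective h)
      rw [this]

noncomputable def cons (p : Fin (n+1)) (e : Perm (Fin n)) : Perm (Fin (n+1)) :=
  Equiv.ofBijective _ (Finite.injective_iff_bijective.1 (consFun_injective p e))

@[simp] lemma cons_zero (p : Fin (n+1)) (e : Perm (Fin n)) : cons p e 0 = p := by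
  simp [cons, consFun, Equiv.ofBijective]

@[simp] lemma cons_succ (p : Fin (n+1)) (e : Perm (Fin n)) (i : Fin n) :
    cons p e i.succ = p.succAbove (e i) := by
  simp [cons, consFun, Equiv.ofBijective]

lemma cons_bijective :
    Function.Bijective (fun x : Fin (n+1) × Perm (Fin n) => cons x.1 x.2) := by
  rw [Fintype.bijective_iff_injective_and_card]
  constructor
  · rintro ⟨p, e⟩ ⟨q, f⟩ h
    simp only at h
    have h0 : p = q := by
      have := DFunLike.congr_fun h 0
      simpa using this
    subst h0
    have he : e = f := by
      apply Equiv.ext; intro i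
      have := DFunLike.congr_fun h i.succ
      simp only [cons_succ] at this
      exact Fin.succAbove_right_injective this
    rw [he]
  · simp [Fintype.card_perm, Nat.factorial_succ]

lemma card_filter_perm (P : Perm (Fin (n+1)) → Prop) [DecidablePred P] :
    (univ.filter P).card
      = ∑ p : Fin (n+1), (univ.filter fun e : Perm (Fin n) => P (cons p e)).card := by
  classical
  have h1 : (univ.filter P).card
      = ((univ : Finset (Fin (n+1) × Perm (Fin n))).filter fun x => P (cons x.1 x.2)).card := by
    refine (Finset.card_bij (fun x _ => cons x.1 x.2) ?_ ?_ ?_).symm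
    · intro x hx; simp only [mem_filter, mem_univ, true_and] at hx ⊢; exact hx
    · intro x hx y hy h
      have := cons_bijective.1 (a₁ := x) (a₂ := y) h
      exact this
    · intro π hπ
      obtain ⟨x, hx⟩ := cons_bijective.2 π
      refine ⟨x, ?_, hx⟩
      simp only [mem_filter, mem_univ, true_and] at hπ ⊢
      rw [show cons x.1 x.2 = π from hx]; exact hπ
  rw [h1]
  rw [Finset.card_eq_sum_card_fiberwise (f := Prod.fst) (t := univ) (fun x _ => mem_univ _)]
  refine Finset.sum_congr rfl (fun p _ => ?_)
  refine Finset.card_bij' (fun x _ => x.2) (fun e _ => (p, e)) ?_ ?_ ?_ ?_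
  · intro x hx
    simp only [mem_filter, mem_univ, true_and] at hx ⊢
    obtain ⟨h1, h2⟩ := hx
    rw [← h2]; exact h1
  · intro e he
    simp only [mem_filter, mem_univ, true_and] at he ⊢
    exact ⟨he, trivial⟩
  · intro x hx
    simp only [mem_filter, mem_univ, true_and] at hx
    show (p, x.2) = x
    rw [← hx.2]
  · intro e he; rfl


def T132 (m : ℕ) (e : Perm (Fin n)) : ℕ :=
  (univ.filter fun q : Fin n × Fin n => q.1 < q.2 ∧ m ≤ (e q.2 : ℕ) ∧ e q.2 < e q.1).card

def T123 (m : ℕ) (e : Perm (Fin n)) : ℕ :=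
  (univ.filter fun q : Fin n × Fin n => q.1 < q.2 ∧ m ≤ (e q.1 : ℕ) ∧ e q.1 < e q.2).card

lemma succ_cond_iff (p : Fin (n+1)) (x : Fin n) : p < p.succAbove x ↔ (p : ℕ) ≤ (x : ℕ) := by
  rw [Fin.lt_succAbove_iff_le_castSucc, Fin.le_def, Fin.coe_castSucc]

lemma count132_cons (p : Fin (n+1)) (e : Perm (Fin n)) :
    count132 (cons p e) = T132 p.val e + count132 e := by
  classical
  unfold count132
  set π := cons p e with hπ
  set F := (univ.filter (fun x : Fin (n+1) × Fin (n+1) × Fin (n+1) =>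
    x.1 < x.2.1 ∧ x.2.1 < x.2.2 ∧ π x.1 < π x.2.2 ∧ π x.2.2 < π x.2.1)) with hF
  have key := Finset.card_filter_add_card_filter_not
    (s := F) (p := fun x => x.1 = (0 : Fin (n+1)))
  have hA : (F.filter fun x => x.1 = (0 : Fin (n+1))).card = T132 p.val e := by
    refine (Finset.card_bij (fun q _ => ((0 : Fin (n+1)), q.1.succ, q.2.succ)) ?_ ?_ ?_).symm
    · intro q hq
      simp only [T132, mem_filter, mem_univ, true_and] at hq
      simp only [hF, mem_filter, mem_univ, true_and]
      refine ⟨⟨Fin.succ_pos _, Fin.succ_lt_succ_iff.2 hq.1, ?_, ?_⟩, trivial⟩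
      · rw [hπ, cons_zero, cons_succ]
        exact (succ_cond_iff p (e q.2)).2 hq.2.1
      · rw [hπ, cons_succ, cons_succ]
        exact Fin.succAbove_lt_succAbove_iff.2 hq.2.2
    · intro q hq r hr h
      simp only [Prod.mk.injEq] at h
      exact Prod.ext (Fin.succ_injective _ h.2.1) (Fin.succ_injective _ h.2.2)
    · intro x hx
      simp only [hF, mem_filter, mem_univ, true_and] at hx
      obtain ⟨⟨h1, h2, h3, h4⟩, h0⟩ := hx
      obtain ⟨j, hj⟩ : ∃ j, Fin.succ j = x.2.1 := by
        refine Fin.exists_succ_eq.2 ?_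
        rw [h0] at h1; exact Fin.pos_iff_ne_zero.1 h1
      obtain ⟨k, hk⟩ : ∃ k, Fin.succ k = x.2.2 := by
        refine Fin.exists_succ_eq.2 ?_
        exact Fin.pos_iff_ne_zero.1 (lt_trans (h0 ▸ h1) h2)
      refine ⟨(j, k), ?_, ?_⟩
      · simp only [T132, mem_filter, mem_univ, true_and]
        rw [← hj, ← hk] at h2
        rw [hπ, h0, ← hk, cons_zero, cons_succ] at h3
        rw [hπ, ← hk, ← hj, cons_succ, cons_succ] at h4
        exact ⟨Fin.succ_lt_succ_iff.1 h2, (succ_cond_iff p (e k)).1 h3,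
          Fin.succAbove_lt_succAbove_iff.1 h4⟩
      · rw [Prod.ext_iff, Prod.ext_iff]
        exact ⟨h0.symm, hj, hk⟩
  have hB : (F.filter fun x => ¬ x.1 = (0 : Fin (n+1))).card = count132 e := by
    unfold count132
    refine (Finset.card_bij (fun q _ => (q.1.succ, q.2.1.succ, q.2.2.succ)) ?_ ?_ ?_).symm
    · intro q hq
      simp only [mem_filter, mem_univ, true_and] at hq
      simp only [hF, mem_filter, mem_univ, true_and]
      refine ⟨⟨Fin.succ_lt_succ_iff.2 hq.1, Fin.succ_lt_succ_iff.2 hq.2.1, ?_, ?_⟩,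
        Fin.succ_ne_zero _⟩
      · rw [hπ, cons_succ, cons_succ]
        exact Fin.succAbove_lt_succAbove_iff.2 hq.2.2.1
      · rw [hπ, cons_succ, cons_succ]
        exact Fin.succAbove_lt_succAbove_iff.2 hq.2.2.2
    · intro q hq r hr h
      simp only [Prod.mk.injEq] at h
      exact Prod.ext (Fin.succ_injective _ h.1)
        (Prod.ext (Fin.succ_injective _ h.2.1) (Fin.succ_injective _ h.2.2))
    · intro x hx
      simp only [hF, mem_filter, mem_univ, true_and] at hx
      obtain ⟨⟨h1, h2, h3, h4⟩, h0⟩ := hx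
      obtain ⟨i, hi⟩ : ∃ i, Fin.succ i = x.1 := Fin.exists_succ_eq.2 h0
      obtain ⟨j, hj⟩ : ∃ j, Fin.succ j = x.2.1 :=
        Fin.exists_succ_eq.2 (Fin.pos_iff_ne_zero.1 (lt_trans (Fin.pos_iff_ne_zero.2 h0) h1))
      obtain ⟨k, hk⟩ : ∃ k, Fin.succ k = x.2.2 :=
        Fin.exists_succ_eq.2 (Fin.pos_iff_ne_zero.1
          (lt_trans (lt_trans (Fin.pos_iff_ne_zero.2 h0) h1) h2))
      refine ⟨(i, j, k), ?_, ?_⟩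
      · simp only [mem_filter, mem_univ, true_and]
        rw [← hi, ← hj] at h1
        rw [← hj, ← hk] at h2
        rw [hπ, ← hi, ← hk, cons_succ, cons_succ] at h3
        rw [hπ, ← hk, ← hj, cons_succ, cons_succ] at h4
        exact ⟨Fin.succ_lt_succ_iff.1 h1, Fin.succ_lt_succ_iff.1 h2,
          Fin.succAbove_lt_succAbove_iff.1 h3, Fin.succAbove_lt_succAbove_iff.1 h4⟩
      · rw [Prod.ext_iff, Prod.ext_iff]
        exact ⟨hi, hj, hk⟩
  rw [← key, hA, hB]
  rfl


lemma count123_cons (p : Fin (n+1)) (e : Perm (Fin n)) :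
    count123 (cons p e) = T123 p.val e + count123 e := by
  classical
  unfold count123
  set π := cons p e with hπ
  set F := (univ.filter (fun x : Fin (n+1) × Fin (n+1) × Fin (n+1) =>
    x.1 < x.2.1 ∧ x.2.1 < x.2.2 ∧ π x.1 < π x.2.1 ∧ π x.2.1 < π x.2.2)) with hF
  have key := Finset.card_filter_add_card_filter_not
    (s := F) (p := fun x => x.1 = (0 : Fin (n+1)))
  have hA : (F.filter fun x => x.1 = (0 : Fin (n+1))).card = T123 p.val e := by
    refine (Finset.card_bij (fun q _ => ((0 : Fin (n+1)), q.1.succ, q.2.succ)) ?_ ?_ ?_).symm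
    · intro q hq
      simp only [T123, mem_filter, mem_univ, true_and] at hq
      simp only [hF, mem_filter, mem_univ, true_and]
      refine ⟨⟨Fin.succ_pos _, Fin.succ_lt_succ_iff.2 hq.1, ?_, ?_⟩, trivial⟩
      · rw [hπ, cons_zero, cons_succ]
        exact (succ_cond_iff p (e q.1)).2 hq.2.1
      · rw [hπ, cons_succ, cons_succ]
        exact Fin.succAbove_lt_succAbove_iff.2 hq.2.2
    · intro q hq r hr h
      simp only [Prod.mk.injEq] at h
      exact Prod.ext (Fin.succ_injective _ h.2.1) (Fin.succ_injective _ h.2.2)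
    · intro x hx
      simp only [hF, mem_filter, mem_univ, true_and] at hx
      obtain ⟨⟨h1, h2, h3, h4⟩, h0⟩ := hx
      obtain ⟨j, hj⟩ : ∃ j, Fin.succ j = x.2.1 := by
        refine Fin.exists_succ_eq.2 ?_
        rw [h0] at h1; exact Fin.pos_iff_ne_zero.1 h1
      obtain ⟨k, hk⟩ : ∃ k, Fin.succ k = x.2.2 := by
        refine Fin.exists_succ_eq.2 ?_
        exact Fin.pos_iff_ne_zero.1 (lt_trans (h0 ▸ h1) h2)
      refine ⟨(j, k), ?_, ?_⟩
      · simp only [T123, mem_filter, mem_univ, true_and]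
        rw [← hj, ← hk] at h2
        rw [hπ, h0, ← hj, cons_zero, cons_succ] at h3
        rw [hπ, ← hk, ← hj, cons_succ, cons_succ] at h4
        exact ⟨Fin.succ_lt_succ_iff.1 h2, (succ_cond_iff p (e j)).1 h3,
          Fin.succAbove_lt_succAbove_iff.1 h4⟩
      · rw [Prod.ext_iff, Prod.ext_iff]
        exact ⟨h0.symm, hj, hk⟩
  have hB : (F.filter fun x => ¬ x.1 = (0 : Fin (n+1))).card = count123 e := by
    unfold count123
    refine (Finset.card_bij (fun q _ => (q.1.succ, q.2.1.succ, q.2.2.succ)) ?_ ?_ ?_).symm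
    · intro q hq
      simp only [mem_filter, mem_univ, true_and] at hq
      simp only [hF, mem_filter, mem_univ, true_and]
      refine ⟨⟨Fin.succ_lt_succ_iff.2 hq.1, Fin.succ_lt_succ_iff.2 hq.2.1, ?_, ?_⟩,
        Fin.succ_ne_zero _⟩
      · rw [hπ, cons_succ, cons_succ]
        exact Fin.succAbove_lt_succAbove_iff.2 hq.2.2.1
      · rw [hπ, cons_succ, cons_succ]
        exact Fin.succAbove_lt_succAbove_iff.2 hq.2.2.2
    · intro q hq r hr h
      simp only [Prod.mk.injEq] at h
      exact Prod.ext (Fin.succ_injective _ h.1)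
        (Prod.ext (Fin.succ_injective _ h.2.1) (Fin.succ_injective _ h.2.2))
    · intro x hx
      simp only [hF, mem_filter, mem_univ, true_and] at hx
      obtain ⟨⟨h1, h2, h3, h4⟩, h0⟩ := hx
      obtain ⟨i, hi⟩ : ∃ i, Fin.succ i = x.1 := Fin.exists_succ_eq.2 h0
      obtain ⟨j, hj⟩ : ∃ j, Fin.succ j = x.2.1 :=
        Fin.exists_succ_eq.2 (Fin.pos_iff_ne_zero.1 (lt_trans (Fin.pos_iff_ne_zero.2 h0) h1))
      obtain ⟨k, hk⟩ : ∃ k, Fin.succ k = x.2.2 :=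
        Fin.exists_succ_eq.2 (Fin.pos_iff_ne_zero.1
          (lt_trans (lt_trans (Fin.pos_iff_ne_zero.2 h0) h1) h2))
      refine ⟨(i, j, k), ?_, ?_⟩
      · simp only [mem_filter, mem_univ, true_and]
        rw [← hi, ← hj] at h1
        rw [← hj, ← hk] at h2
        rw [hπ, ← hi, ← hj, cons_succ, cons_succ] at h3
        rw [hπ, ← hj, ← hk, cons_succ, cons_succ] at h4
        exact ⟨Fin.succ_lt_succ_iff.1 h1, Fin.succ_lt_succ_iff.1 h2,
          Fin.succAbove_lt_succAbove_iff.1 h3, Fin.succAbove_lt_succAbove_iff.1 h4⟩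
      · rw [Prod.ext_iff, Prod.ext_iff]
        exact ⟨hi, hj, hk⟩
  rw [← key, hA, hB]
  rfl


lemma T132_eq_zero {m : ℕ} (h : n ≤ m + 1) (e : Perm (Fin n)) : T132 m e = 0 := by
  rw [T132, Finset.card_eq_zero, Finset.filter_eq_empty_iff]
  rintro q - ⟨-, hm, hlt⟩
  have h1 : (e q.2 : ℕ) < (e q.1 : ℕ) := hlt
  have h2 : (e q.1 : ℕ) < n := (e q.1).isLt
  omega

lemma T123_eq_zero {m : ℕ} (h : n ≤ m + 1) (e : Perm (Fin n)) : T123 m e = 0 := by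
  rw [T123, Finset.card_eq_zero, Finset.filter_eq_empty_iff]
  rintro q - ⟨-, hm, hlt⟩
  have h1 : (e q.1 : ℕ) < (e q.2 : ℕ) := hlt
  have h2 : (e q.2 : ℕ) < n := (e q.2).isLt
  omega

def top1 (k : ℕ) : Fin (k+2) := ⟨k+1, by omega⟩
def top2 (k : ℕ) : Fin (k+2) := ⟨k, by omega⟩

lemma top_val_cases {k : ℕ} (v : Fin (k+2)) (h : k ≤ (v : ℕ)) : v = top2 k ∨ v = top1 k := by
  have := v.isLt
  rcases Nat.lt_or_ge (v : ℕ) (k+1) with h' | h'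
  · left; exact Fin.ext (by simp only [top2]; omega)
  · right; exact Fin.ext (by simp only [top1]; omega)

lemma T123_top {k : ℕ} (e : Perm (Fin (k+2))) :
    T123 k e = if e.symm (top2 k) < e.symm (top1 k) then 1 else 0 := by
  classical
  have hset : (univ.filter fun q : Fin (k+2) × Fin (k+2) =>
      q.1 < q.2 ∧ k ≤ (e q.1 : ℕ) ∧ e q.1 < e q.2)
      = if e.symm (top2 k) < e.symm (top1 k)
        then {(e.symm (top2 k), e.symm (top1 k))} else ∅ := by
    ext q
    simp only [mem_filter, mem_univ, true_and]
    constructor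
    · rintro ⟨hlt, hm, hasc⟩
      have h1 : e q.1 = top2 k := by
        rcases top_val_cases (e q.1) hm with h | h
        · exact h
        · exfalso
          have hv : (e q.1 : ℕ) < (e q.2 : ℕ) := hasc
          rw [h] at hv
          simp only [top1] at hv
          have := (e q.2).isLt
          omega
      have h2 : e q.2 = top1 k := by
        have hv : (e q.1 : ℕ) < (e q.2 : ℕ) := hasc
        rw [h1] at hv
        simp only [top2] at hv
        have := (e q.2).isLt
        exact Fin.ext (by simp [top1]; omega)
      have hq1 : q.1 = e.symm (top2 k) := by rw [Equiv.eq_symm_apply]; exact h1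
      have hq2 : q.2 = e.symm (top1 k) := by rw [Equiv.eq_symm_apply]; exact h2
      rw [if_pos (by rw [← hq1, ← hq2]; exact hlt)]
      simp [← hq1, ← hq2]
    · intro hq
      split_ifs at hq with h
      · simp only [Finset.mem_singleton] at hq
        subst hq
        refine ⟨h, ?_, ?_⟩
        · rw [Equiv.apply_symm_apply]; simp [top2]
        · rw [Equiv.apply_symm_apply, Equiv.apply_symm_apply]
          simp [top1, top2, Fin.lt_def]
      · simp at hq
  rw [T123, hset]
  split_ifs <;> simp

lemma T132_top {k : ℕ} (e : Perm (Fin (k+2))) :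
    T132 k e = if e.symm (top1 k) < e.symm (top2 k) then 1 else 0 := by
  classical
  have hset : (univ.filter fun q : Fin (k+2) × Fin (k+2) =>
      q.1 < q.2 ∧ k ≤ (e q.2 : ℕ) ∧ e q.2 < e q.1)
      = if e.symm (top1 k) < e.symm (top2 k)
        then {(e.symm (top1 k), e.symm (top2 k))} else ∅ := by
    ext q
    simp only [mem_filter, mem_univ, true_and]
    constructor
    · rintro ⟨hlt, hm, hdesc⟩
      have h2 : e q.2 = top2 k := by
        rcases top_val_cases (e q.2) hm with h | h
        · exact h
        · exfalso
          have hv : (e q.2 : ℕ) < (e q.1 : ℕ) := hdesc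
          rw [h] at hv
          simp only [top1] at hv
          have := (e q.1).isLt
          omega
      have h1 : e q.1 = top1 k := by
        have hv : (e q.2 : ℕ) < (e q.1 : ℕ) := hdesc
        rw [h2] at hv
        simp only [top2] at hv
        have := (e q.1).isLt
        exact Fin.ext (by simp [top1]; omega)
      have hq1 : q.1 = e.symm (top1 k) := by rw [Equiv.eq_symm_apply]; exact h1
      have hq2 : q.2 = e.symm (top2 k) := by rw [Equiv.eq_symm_apply]; exact h2
      rw [if_pos (by rw [← hq1, ← hq2]; exact hlt)]
      simp [← hq1, ← hq2]
    · intro hq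
      split_ifs at hq with h
      · simp only [Finset.mem_singleton] at hq
        subst hq
        refine ⟨h, ?_, ?_⟩
        · rw [Equiv.apply_symm_apply]; simp [top2]
        · rw [Equiv.apply_symm_apply, Equiv.apply_symm_apply]
          simp [top1, top2, Fin.lt_def]
      · simp at hq
  rw [T132, hset]
  split_ifs <;> simp

lemma symm_top_ne {k : ℕ} (e : Perm (Fin (k+2))) : e.symm (top1 k) ≠ e.symm (top2 k) := by
  intro h
  have := e.symm.injective h
  simp [top1, top2, Fin.ext_iff] at this


lemma not_both_zero {k m : ℕ} (hm : m ≤ k) (e : Perm (Fin (k+2))) :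
    ¬ (T132 m e = 0 ∧ T123 m e = 0) := by
  classical
  rintro ⟨h132, h123⟩
  rcases lt_trichotomy (e.symm (top1 k)) (e.symm (top2 k)) with h | h | h
  · have hmem : (e.symm (top1 k), e.symm (top2 k)) ∈ univ.filter
        (fun q : Fin (k+2) × Fin (k+2) => q.1 < q.2 ∧ m ≤ (e q.2 : ℕ) ∧ e q.2 < e q.1) := by
      simp only [mem_filter, mem_univ, true_and, Equiv.apply_symm_apply]
      exact ⟨h, by simp [top2]; omega, by simp [top1, top2, Fin.lt_def]⟩
    rw [T132, Finset.card_eq_zero] at h132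
    rw [h132] at hmem
    exact absurd hmem (Finset.notMem_empty _)
  · exact symm_top_ne e h
  · have hmem : (e.symm (top2 k), e.symm (top1 k)) ∈ univ.filter
        (fun q : Fin (k+2) × Fin (k+2) => q.1 < q.2 ∧ m ≤ (e q.1 : ℕ) ∧ e q.1 < e q.2) := by
      simp only [mem_filter, mem_univ, true_and, Equiv.apply_symm_apply]
      exact ⟨h, by simp [top2]; omega, by simp [top1, top2, Fin.lt_def]⟩
    rw [T123, Finset.card_eq_zero] at h123
    rw [h123] at hmem
    exact absurd hmem (Finset.notMem_empty _)

lemma T132_two {k m : ℕ} (hm : m ≤ k) (e : Perm (Fin (k+3)))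
    (h123 : T123 m e = 0) : 2 ≤ T132 m e := by
  classical
  set z : Fin (k+3) := ⟨k, by omega⟩ with hz
  have hno : ∀ q1 q2 : Fin (k+3), q1 < q2 → m ≤ (e q1 : ℕ) → ¬ e q1 < e q2 := by
    intro q1 q2 hlt hmle hasc
    rw [T123, Finset.card_eq_zero, Finset.filter_eq_empty_iff] at h123
    exact h123 (Finset.mem_univ (q1, q2)) ⟨hlt, hmle, hasc⟩
  set a := e.symm (top1 (k+1)) with ha
  set b := e.symm (top2 (k+1)) with hb
  set c := e.symm z with hc
  have hea : e a = top1 (k+1) := Equiv.apply_symm_apply _ _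
  have heb : e b = top2 (k+1) := Equiv.apply_symm_apply _ _
  have hec : e c = z := Equiv.apply_symm_apply _ _
  have hab : a ≠ b := symm_top_ne e
  have hac : a ≠ c := by
    intro h; have := congrArg e h; rw [hea, hec] at this
    rw [Fin.ext_iff] at this; simp only [top1, hz] at this; omega
  have hbc : b ≠ c := by
    intro h; have := congrArg e h; rw [heb, hec] at this
    rw [Fin.ext_iff] at this; simp only [top2, hz] at this; omega
  have hvb : (e b : ℕ) = k + 1 := by rw [heb]; rfl
  have hva : (e a : ℕ) = k + 2 := by rw [hea]; rfl
  have hvc : (e c : ℕ) = k := by rw [hec]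
  have h1 : a < b := by
    rcases lt_or_gt_of_ne hab with h | h
    · exact h
    · exact absurd (show e b < e a by rw [Fin.lt_def]; omega) (hno b a h (by omega))
  have h2 : a < c := by
    rcases lt_or_gt_of_ne hac with h | h
    · exact h
    · exact absurd (show e c < e a by rw [Fin.lt_def]; omega) (hno c a h (by omega))
  have mem1 : (a, b) ∈ univ.filter
      (fun q : Fin (k+3) × Fin (k+3) => q.1 < q.2 ∧ m ≤ (e q.2 : ℕ) ∧ e q.2 < e q.1) := by
    simp only [mem_filter, mem_univ, true_and]
    exact ⟨h1, by omega, by rw [Fin.lt_def]; omega⟩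
  have mem2 : (a, c) ∈ univ.filter
      (fun q : Fin (k+3) × Fin (k+3) => q.1 < q.2 ∧ m ≤ (e q.2 : ℕ) ∧ e q.2 < e q.1) := by
    simp only [mem_filter, mem_univ, true_and]
    exact ⟨h2, by omega, by rw [Fin.lt_def]; omega⟩
  rw [T132]
  exact Finset.one_lt_card.2 ⟨(a, b), mem1, (a, c), mem2,
    fun h => hbc (congrArg Prod.snd h)⟩


def Bad (π : Perm (Fin n)) : Prop :=
  ∃ x : Fin n × Fin n × Fin n,
    x.1 < x.2.1 ∧ x.2.1 < x.2.2 ∧ π x.1 < π x.2.1 ∧ π x.1 < π x.2.2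

lemma avoid_iff (π : Perm (Fin n)) :
    (count132 π = 0 ∧ count123 π = 0) ↔ ¬ Bad π := by
  classical
  constructor
  · rintro ⟨h132, h123⟩ ⟨x, h1, h2, h3, h4⟩
    rcases lt_trichotomy (π x.2.1) (π x.2.2) with h | h | h
    · rw [count123, Finset.card_eq_zero, Finset.filter_eq_empty_iff] at h123
      exact h123 (Finset.mem_univ x) ⟨h1, h2, h3, h⟩
    · exact absurd (π.injective h) (Fin.ne_of_lt h2)
    · rw [count132, Finset.card_eq_zero, Finset.filter_eq_empty_iff] at h132
      exact h132 (Finset.mem_univ x) ⟨h1, h2, h4, h⟩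
  · intro h
    constructor
    · rw [count132, Finset.card_eq_zero, Finset.filter_eq_empty_iff]
      rintro x - ⟨h1, h2, h3, h4⟩
      exact h ⟨x, h1, h2, lt_trans h3 h4, h3⟩
    · rw [count123, Finset.card_eq_zero, Finset.filter_eq_empty_iff]
      rintro x - ⟨h1, h2, h3, h4⟩
      exact h ⟨x, h1, h2, h3, lt_trans h3 h4⟩

lemma swap_lt_top2 {k : ℕ} (v : Fin (k+2)) (h : top2 k < v) : v = top1 k := by
  rw [Fin.lt_def] at h
  have := v.isLt
  exact Fin.ext (by simp only [top1]; simp only [top2] at h; omega)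

lemma bad_swap {k : ℕ} (e : Perm (Fin (k+2))) (h : ¬ Bad e) :
    ¬ Bad (e.trans (Equiv.swap (top1 k) (top2 k))) := by
  classical
  set s := Equiv.swap (top1 k) (top2 k) with hs
  rintro ⟨x, h1, h2, h3, h4⟩
  apply h
  simp only [Equiv.trans_apply] at h3 h4
  by_cases hu1 : e x.1 = top1 k
  · rw [hu1, hs, Equiv.swap_apply_left] at h3 h4
    have hv : s (e x.2.1) = top1 k := swap_lt_top2 _ h3
    have hw : s (e x.2.2) = top1 k := swap_lt_top2 _ h4
    have : e x.2.1 = e x.2.2 := by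
      have := hv.trans hw.symm
      exact (Equiv.injective s) this
    exact absurd (e.injective this) (Fin.ne_of_lt h2)
  · by_cases hu2 : e x.1 = top2 k
    · rw [hu2, hs, Equiv.swap_apply_right] at h3
      exfalso
      rw [Fin.lt_def] at h3
      have := (s (e x.2.1)).isLt
      simp only [top1] at h3
      omega
    · have hsu : s (e x.1) = e x.1 := Equiv.swap_apply_of_ne_of_ne hu1 hu2
      rw [hsu] at h3 h4
      have hkey : ∀ v : Fin (k+2), e x.1 < s v → e x.1 < v := by
        intro v hv
        have hules : (e x.1 : ℕ) < k := by
          have h1' := (e x.1).isLt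
          have h2' : (e x.1 : ℕ) ≠ k + 1 := fun hc => hu1 (Fin.ext (by simp [top1, hc]))
          have h3' : (e x.1 : ℕ) ≠ k := fun hc => hu2 (Fin.ext (by simp [top2, hc]))
          omega
        by_cases hv1 : v = top1 k
        · rw [hv1, Fin.lt_def]; simp only [top1]; omega
        · by_cases hv2 : v = top2 k
          · rw [hv2, Fin.lt_def]; simp only [top2]; omega
          · rwa [Equiv.swap_apply_of_ne_of_ne hv1 hv2] at hv
      exact ⟨x, h1, h2, hkey _ h3, hkey _ h4⟩

lemma trans_swap_invol {k : ℕ} (e : Perm (Fin (k+2))) :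
    (e.trans (Equiv.swap (top1 k) (top2 k))).trans (Equiv.swap (top1 k) (top2 k)) = e := by
  apply Equiv.ext
  intro i
  simp [Equiv.swap_apply_self]

lemma symm_trans_swap {k : ℕ} (e : Perm (Fin (k+2))) :
    (e.trans (Equiv.swap (top1 k) (top2 k))).symm (top1 k) = e.symm (top2 k)
    ∧ (e.trans (Equiv.swap (top1 k) (top2 k))).symm (top2 k) = e.symm (top1 k) := by
  constructor <;>
  · rw [Equiv.symm_trans_apply]
    congr 1
    simp [Equiv.swap_apply_left, Equiv.swap_apply_right]

lemma card_half (k : ℕ) :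
    2 * (univ.filter (fun e : Perm (Fin (k+2)) =>
        (count132 e = 0 ∧ count123 e = 0) ∧ e.symm (top1 k) < e.symm (top2 k))).card
      = (univ.filter (fun e : Perm (Fin (k+2)) =>
        count132 e = 0 ∧ count123 e = 0)).card := by
  classical
  have key := Finset.card_filter_add_card_filter_not
    (s := univ.filter (fun e : Perm (Fin (k+2)) => count132 e = 0 ∧ count123 e = 0))
    (p := fun e => e.symm (top1 k) < e.symm (top2 k))
  rw [Finset.filter_filter, Finset.filter_filter] at key
  have hflip : (univ.filter (fun e : Perm (Fin (k+2)) =>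
        (count132 e = 0 ∧ count123 e = 0) ∧ ¬ e.symm (top1 k) < e.symm (top2 k))).card
      = (univ.filter (fun e : Perm (Fin (k+2)) =>
        (count132 e = 0 ∧ count123 e = 0) ∧ e.symm (top1 k) < e.symm (top2 k))).card := by
    refine Finset.card_bij' (fun e _ => e.trans (Equiv.swap (top1 k) (top2 k)))
      (fun e _ => e.trans (Equiv.swap (top1 k) (top2 k))) ?_ ?_ ?_ ?_
    · intro e he
      simp only [mem_filter, mem_univ, true_and] at he ⊢
      obtain ⟨hav, hlt⟩ := he
      refine ⟨(avoid_iff _).2 (bad_swap e ((avoid_iff e).1 hav)), ?_⟩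
      rw [(symm_trans_swap e).1, (symm_trans_swap e).2]
      rcases lt_or_gt_of_ne (symm_top_ne e) with h | h
      · exact absurd h hlt
      · exact h
    · intro e he
      simp only [mem_filter, mem_univ, true_and] at he ⊢
      obtain ⟨hav, hlt⟩ := he
      refine ⟨(avoid_iff _).2 (bad_swap e ((avoid_iff e).1 hav)), ?_⟩
      rw [(symm_trans_swap e).1, (symm_trans_swap e).2]
      exact lt_asymm hlt
    · intro e _; exact trans_swap_invol e
    · intro e _; exact trans_swap_invol e
  omega


def A (n : ℕ) : ℕ :=
  (univ.filter (fun π : Perm (Fin n) => count132 π = 1 ∧ count123 π = 0)).card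

def B (n : ℕ) : ℕ :=
  (univ.filter (fun π : Perm (Fin n) => count132 π = 0 ∧ count123 π = 0)).card

def B' (k : ℕ) : ℕ :=
  (univ.filter (fun e : Perm (Fin (k+2)) =>
    (count132 e = 0 ∧ count123 e = 0) ∧ e.symm (top1 k) < e.symm (top2 k))).card

lemma no_triple {n : ℕ} (h : n ≤ 2) (π : Perm (Fin n)) :
    count132 π = 0 ∧ count123 π = 0 := by
  constructor
  · rw [count132, Finset.card_eq_zero, Finset.filter_eq_empty_iff]
    rintro x - ⟨h1, h2, -⟩
    have a := x.1.isLt; have b := (x.2.1).isLt; have c := (x.2.2).isLt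
    rw [Fin.lt_def] at h1 h2; omega
  · rw [count123, Finset.card_eq_zero, Finset.filter_eq_empty_iff]
    rintro x - ⟨h1, h2, -⟩
    have a := x.1.isLt; have b := (x.2.1).isLt; have c := (x.2.2).isLt
    rw [Fin.lt_def] at h1 h2; omega

lemma B_two : B 2 = 2 := by
  rw [B]
  have : (univ.filter (fun π : Perm (Fin 2) => count132 π = 0 ∧ count123 π = 0)) = univ := by
    rw [Finset.filter_eq_self]
    intro π _
    exact no_triple (le_refl 2) π
  rw [this, Finset.card_univ, Fintype.card_perm, Fintype.card_fin]
  decide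

lemma A_two : A 2 = 0 := by
  rw [A, Finset.card_eq_zero, Finset.filter_eq_empty_iff]
  rintro π - ⟨h1, -⟩
  rw [(no_triple (le_refl 2) π).1] at h1
  exact absurd h1 (by omega)

lemma B_rec (k : ℕ) : B (k+3) = 2 * B (k+2) := by
  classical
  rw [B, card_filter_perm (fun π : Perm (Fin (k+3)) =>
    count132 π = 0 ∧ count123 π = 0)]
  set pA : Fin (k+3) := ⟨k+2, by omega⟩ with hpA
  set pB : Fin (k+3) := ⟨k+1, by omega⟩ with hpB
  have hvA : (pA : ℕ) = k+2 := rfl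
  have hvB : (pB : ℕ) = k+1 := rfl
  have hne : pA ≠ pB := by
    intro h; have := congrArg Fin.val h; rw [hvA, hvB] at this; omega
  have hzero : ∀ p : Fin (k+3), p ∉ ({pA, pB} : Finset (Fin (k+3))) →
      (univ.filter fun e : Perm (Fin (k+2)) =>
        count132 (cons p e) = 0 ∧ count123 (cons p e) = 0).card = 0 := by
    intro p hp
    simp only [Finset.mem_insert, Finset.mem_singleton] at hp
    push_neg at hp
    have h1 : (p : ℕ) ≠ k+2 := fun hh => hp.1 (Fin.ext (by rw [hh, hvA]))
    have h2 : (p : ℕ) ≠ k+1 := fun hh => hp.2 (Fin.ext (by rw [hh, hvB]))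
    have hpval : (p : ℕ) ≤ k := by have := p.isLt; omega
    rw [Finset.card_eq_zero, Finset.filter_eq_empty_iff]
    rintro e - ⟨hc1, hc2⟩
    rw [count132_cons] at hc1
    rw [count123_cons] at hc2
    exact not_both_zero hpval e ⟨by omega, by omega⟩
  have hsub := Finset.sum_subset (Finset.subset_univ ({pA, pB} : Finset (Fin (k+3))))
    (fun p _ hp => hzero p hp)
  rw [← hsub, Finset.sum_pair hne]
  have hA : (univ.filter fun e : Perm (Fin (k+2)) =>
      count132 (cons pA e) = 0 ∧ count123 (cons pA e) = 0).card = B (k+2) := by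
    rw [B]
    congr 1
    refine Finset.filter_congr (fun e _ => ?_)
    rw [count132_cons, count123_cons,
      T132_eq_zero (m := (pA : ℕ)) (by rw [hvA]; omega) e,
      T123_eq_zero (m := (pA : ℕ)) (by rw [hvA]; omega) e]
    simp
  have hB : (univ.filter fun e : Perm (Fin (k+2)) =>
      count132 (cons pB e) = 0 ∧ count123 (cons pB e) = 0).card = B (k+2) := by
    rw [B]
    congr 1
    refine Finset.filter_congr (fun e _ => ?_)
    rw [count132_cons, count123_cons,
      T132_eq_zero (m := (pB : ℕ)) (by rw [hvB]) e,
      T123_eq_zero (m := (pB : ℕ)) (by rw [hvB]) e]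
    simp
  rw [hA, hB]
  omega

lemma B_val (k : ℕ) : B (k+2) = 2 ^ (k+1) := by
  induction k with
  | zero => simpa using B_two
  | succ k ih => rw [show k+1+2 = k+3 from rfl, B_rec k, ih]; ring

lemma B'_val (k : ℕ) : B' k = 2 ^ k := by
  have h1 : 2 * B' k = 2 ^ (k+1) := by
    rw [B']
    rw [card_half k]
    exact B_val k
  have h3 : (2:ℕ) ^ (k+1) = 2 * 2 ^ k := by ring
  omega

lemma A_rec (k : ℕ) : A (k+3) = 2 * A (k+2) + B' k := by
  classical
  rw [A, card_filter_perm (fun π : Perm (Fin (k+3)) =>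
    count132 π = 1 ∧ count123 π = 0)]
  set pA : Fin (k+3) := ⟨k+2, by omega⟩ with hpA
  set pB : Fin (k+3) := ⟨k+1, by omega⟩ with hpB
  set pC : Fin (k+3) := ⟨k, by omega⟩ with hpC
  have hvA : (pA : ℕ) = k+2 := rfl
  have hvB : (pB : ℕ) = k+1 := rfl
  have hvC : (pC : ℕ) = k := rfl
  have hneAB : pA ≠ pB := by
    intro h; have := congrArg Fin.val h; rw [hvA, hvB] at this; omega
  have hneAC : pA ≠ pC := by
    intro h; have := congrArg Fin.val h; rw [hvA, hvC] at this; omega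
  have hneBC : pB ≠ pC := by
    intro h; have := congrArg Fin.val h; rw [hvB, hvC] at this; omega
  have hzero : ∀ p : Fin (k+3), p ∉ ({pA, pB, pC} : Finset (Fin (k+3))) →
      (univ.filter fun e : Perm (Fin (k+2)) =>
        count132 (cons p e) = 1 ∧ count123 (cons p e) = 0).card = 0 := by
    intro p hp
    simp only [Finset.mem_insert, Finset.mem_singleton] at hp
    push_neg at hp
    have h1 : (p : ℕ) ≠ k+2 := fun hh => hp.1 (Fin.ext (by rw [hh, hvA]))
    have h2 : (p : ℕ) ≠ k+1 := fun hh => hp.2.1 (Fin.ext (by rw [hh, hvB]))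
    have h3 : (p : ℕ) ≠ k := fun hh => hp.2.2 (Fin.ext (by rw [hh, hvC]))
    have hpval : (p : ℕ) < k := by have := p.isLt; omega
    obtain ⟨k', rfl⟩ : ∃ k', k = k' + 1 := ⟨k - 1, by omega⟩
    rw [Finset.card_eq_zero, Finset.filter_eq_empty_iff]
    rintro e - ⟨hc1, hc2⟩
    rw [count132_cons] at hc1
    rw [count123_cons] at hc2
    have h123 : T123 (p : ℕ) e = 0 := by omega
    have := T132_two (k := k') (m := (p : ℕ)) (by omega) e h123
    omega
  have hsub := Finset.sum_subset
    (Finset.subset_univ ({pA, pB, pC} : Finset (Fin (k+3))))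
    (fun p _ hp => hzero p hp)
  have hnotm : pA ∉ ({pB, pC} : Finset (Fin (k+3))) := by
    simp only [Finset.mem_insert, Finset.mem_singleton]
    push_neg
    exact ⟨hneAB, hneAC⟩
  rw [← hsub, Finset.sum_insert hnotm, Finset.sum_pair hneBC]
  have hA : (univ.filter fun e : Perm (Fin (k+2)) =>
      count132 (cons pA e) = 1 ∧ count123 (cons pA e) = 0).card = A (k+2) := by
    rw [A]
    congr 1
    refine Finset.filter_congr (fun e _ => ?_)
    rw [count132_cons, count123_cons,
      T132_eq_zero (m := (pA : ℕ)) (by rw [hvA]; omega) e,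
      T123_eq_zero (m := (pA : ℕ)) (by rw [hvA]; omega) e]
    simp
  have hB : (univ.filter fun e : Perm (Fin (k+2)) =>
      count132 (cons pB e) = 1 ∧ count123 (cons pB e) = 0).card = A (k+2) := by
    rw [A]
    congr 1
    refine Finset.filter_congr (fun e _ => ?_)
    rw [count132_cons, count123_cons,
      T132_eq_zero (m := (pB : ℕ)) (by rw [hvB]) e,
      T123_eq_zero (m := (pB : ℕ)) (by rw [hvB]) e]
    simp
  have hC : (univ.filter fun e : Perm (Fin (k+2)) =>
      count132 (cons pC e) = 1 ∧ count123 (cons pC e) = 0).card = B' k := by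
    rw [B']
    congr 1
    refine Finset.filter_congr (fun e _ => ?_)
    rw [count132_cons, count123_cons]
    have hT132 := T132_top e
    have hT123 := T123_top e
    rw [hvC] at *
    constructor
    · rintro ⟨hc1, hc2⟩
      have ht123 : T123 k e = 0 := by omega
      have hlt : e.symm (top1 k) < e.symm (top2 k) := by
        rcases lt_or_gt_of_ne (symm_top_ne e) with h | h
        · exact h
        · exfalso; rw [if_pos h] at hT123; omega
      have ht132 : T132 k e = 1 := by rw [hT132, if_pos hlt]
      refine ⟨⟨by omega, by omega⟩, hlt⟩
    · rintro ⟨⟨hc1, hc2⟩, hlt⟩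
      have ht132 : T132 k e = 1 := by rw [hT132, if_pos hlt]
      have ht123 : T123 k e = 0 := by rw [hT123, if_neg (lt_asymm hlt)]
      omega
  rw [hA, hB, hC]
  omega

lemma A_val (m : ℕ) : A (m+3) = (m+1) * 2 ^ m := by
  induction m with
  | zero =>
    rw [show (0:ℕ)+3 = 0+3 from rfl, A_rec 0, A_two, B'_val]
    simp
  | succ m ih =>
    rw [show m+1+3 = (m+1)+3 from rfl, A_rec (m+1), ih, B'_val]
    ring

end Aux

theorem card_one132_no123 (n : ℕ) (hn : 3 ≤ n) :
    (Finset.univ.filter (fun π : Equiv.Perm (Fin n) =>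
      count132 π = 1 ∧ count123 π = 0)).card = (n - 2) * 2 ^ (n - 3) := by
  obtain ⟨m, rfl⟩ : ∃ m, n = m + 3 := ⟨n - 3, by omega⟩
  have := Aux.A_val m
  rw [Aux.A] at this
  rw [this]
  congr 1 <;> omega
end
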